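/- arXiv:1711.00154 — 4 statements merged into one kernel-verified Lean document; each statement's English description precedes it below -/
import Mathlib

section
/- Let F ∈ C(I) and let E ⊆ [0,1] be a closed set with {0,1} ⊆ E. Then: (i) F is VB_* on E if and only if F_{E,*} is VB on [0,1]; and (ii) F is AC_* on E if and only if F_{E,*} is AC on [0,1]. -/
open Set MeasureTheory Topology

noncomputable section

/-- `C(I)`: continuous real-valued functions on the unit interval. -/
abbrev CI := C(unitInterval, ℝ)

/-- Oscillation of `F` on the open interval `(a,b)`: `sup_{x,y ∈ (a,b)} |F x - F y|`. -/
noncomputable def osc (F : CI) (a b : unitInterval) : ℝ :=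
  sSup {r : ℝ | ∃ x ∈ Set.Ioo a b, ∃ y ∈ Set.Ioo a b, r = |F x - F y|}

/-- `a₀ ≤ b₀ ≤ a₁ ≤ b₁ ≤ … ≤ a_k ≤ b_k` is a finite non-decreasing sequence of points of `E`. -/
def SeqOn (E : Set unitInterval) (k : ℕ) (a b : ℕ → unitInterval) : Prop :=
  (∀ i ≤ k, a i ∈ E) ∧ (∀ i ≤ k, b i ∈ E) ∧ (∀ i ≤ k, a i ≤ b i) ∧ ∀ i < k, b i ≤ a (i + 1)

/-- `F` is VB on `E`. -/
def IsVBOn (F : CI) (E : Set unitInterval) : Prop :=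
  ∃ N : ℝ, ∀ (k : ℕ) (a b : ℕ → unitInterval), SeqOn E k a b →
    ∑ i ∈ Finset.range (k + 1), |F (b i) - F (a i)| < N

/-- `F` is VB_* on `E`. -/
def IsVBStarOn (F : CI) (E : Set unitInterval) : Prop :=
  ∃ N : ℝ, ∀ (k : ℕ) (a b : ℕ → unitInterval), SeqOn E k a b →
    ∑ i ∈ Finset.range (k + 1), osc F (a i) (b i) < N

/-- `F` is AC on `E`. -/
def IsACOn (F : CI) (E : Set unitInterval) : Prop :=
  ∀ ε : ℝ, 0 < ε → ∃ δ : ℝ, 0 < δ ∧ ∀ (k : ℕ) (a b : ℕ → unitInterval), SeqOn E k a b →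
    (∑ i ∈ Finset.range (k + 1), ((b i : ℝ) - (a i : ℝ))) < δ →
    ∑ i ∈ Finset.range (k + 1), |F (b i) - F (a i)| < ε

/-- `F` is AC_* on `E`. -/
def IsACStarOn (F : CI) (E : Set unitInterval) : Prop :=
  ∀ ε : ℝ, 0 < ε → ∃ δ : ℝ, 0 < δ ∧ ∀ (k : ℕ) (a b : ℕ → unitInterval), SeqOn E k a b →
    (∑ i ∈ Finset.range (k + 1), ((b i : ℝ) - (a i : ℝ))) < δ →
    ∑ i ∈ Finset.range (k + 1), osc F (a i) (b i) < ε

/-- `F ∈ VBG`. -/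
def IsVBG (F : CI) : Prop :=
  ∃ E : ℕ → Set unitInterval, (∀ n, IsClosed (E n)) ∧ (⋃ n, E n) = Set.univ ∧
    ∀ n, IsVBOn F (E n)

/-- `F ∈ VBG_*`. -/
def IsVBGStar (F : CI) : Prop :=
  ∃ E : ℕ → Set unitInterval, (∀ n, IsClosed (E n)) ∧ (⋃ n, E n) = Set.univ ∧
    ∀ n, IsVBStarOn F (E n)

/-- `F ∈ ACG`. -/
def IsACG (F : CI) : Prop :=
  ∃ E : ℕ → Set unitInterval, (∀ n, IsClosed (E n)) ∧ (⋃ n, E n) = Set.univ ∧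
    ∀ n, IsACOn F (E n)

/-- `F ∈ ACG_*`. -/
def IsACGStar (F : CI) : Prop :=
  ∃ E : ℕ → Set unitInterval, (∀ n, IsClosed (E n)) ∧ (⋃ n, E n) = Set.univ ∧
    ∀ n, IsACStarOn F (E n)


section Infra
variable {F : CI}

lemma osc_mem_le (F : CI) (a b : unitInterval) {r : ℝ}
    (hr : r ∈ {r : ℝ | ∃ x ∈ Set.Ioo a b, ∃ y ∈ Set.Ioo a b, r = |F x - F y|}) :
    r ≤ 2 * ‖F‖ := by
  obtain ⟨x, -, y, -, rfl⟩ := hr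
  calc |F x - F y| ≤ ‖F x‖ + ‖F y‖ := by
        simpa [Real.norm_eq_abs] using norm_sub_le (F x) (F y)
    _ ≤ 2 * ‖F‖ := by
        have := F.norm_coe_le_norm x
        have := F.norm_coe_le_norm y
        linarith

lemma osc_bddAbove (F : CI) (a b : unitInterval) :
    BddAbove {r : ℝ | ∃ x ∈ Set.Ioo a b, ∃ y ∈ Set.Ioo a b, r = |F x - F y|} :=
  ⟨2 * ‖F‖, fun _ hr => osc_mem_le F a b hr⟩

lemma osc_nonneg (F : CI) (a b : unitInterval) : 0 ≤ osc F a b := by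
  rcases Set.eq_empty_or_nonempty (Set.Ioo a b) with h | ⟨x, hx⟩
  · simp [osc, h, Real.sSup_empty]
  · have h0 : (0:ℝ) ∈ {r : ℝ | ∃ x ∈ Set.Ioo a b, ∃ y ∈ Set.Ioo a b, r = |F x - F y|} :=
      ⟨x, hx, x, hx, by simp⟩
    exact le_csSup (osc_bddAbove F a b) h0

lemma osc_le_two_norm (F : CI) (a b : unitInterval) : osc F a b ≤ 2 * ‖F‖ :=
  Real.sSup_le (fun _ hr => osc_mem_le F a b hr) (by positivity)

lemma osc_le (F : CI) (a b : unitInterval) {M : ℝ} (hM : 0 ≤ M)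
    (h : ∀ x ∈ Set.Ioo a b, ∀ y ∈ Set.Ioo a b, |F x - F y| ≤ M) : osc F a b ≤ M :=
  Real.sSup_le (fun r hr => by obtain ⟨x, hx, y, hy, rfl⟩ := hr; exact h x hx y hy) hM

lemma osc_self (F : CI) {a b : unitInterval} (h : b ≤ a) : osc F a b = 0 := by
  have : Set.Ioo a b = ∅ := Set.Ioo_eq_empty (by exact fun hlt => absurd h (not_le.2 hlt))
  simp [osc, this, Real.sSup_empty]

/-- there is a point of the open interval where `F` is close to its value at `x ∈ Icc a b`. -/
lemma exists_near (F : CI) (a b x : unitInterval) (hab : a < b) (hx : x ∈ Set.Icc a b)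
    {ε : ℝ} (hε : 0 < ε) : ∃ y ∈ Set.Ioo a b, |F y - F x| < ε := by
  have hcont : ContinuousAt F x := F.continuous.continuousAt
  obtain ⟨δ, hδ, hball⟩ := Metric.continuousAt_iff.1 hcont ε hε
  have hba : (0:ℝ) < (b:ℝ) - a := sub_pos.2 (by exact_mod_cast hab)
  set m : ℝ := min (δ/2) (((b:ℝ) - a)/3) with hm
  have hm0 : 0 < m := lt_min (by linarith) (by linarith)
  have hm3 : m ≤ ((b:ℝ) - a)/3 := min_le_right _ _
  set t : ℝ := min (max (x:ℝ) ((a:ℝ) + m)) ((b:ℝ) - m) with ht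
  have hxa : (a:ℝ) ≤ x := hx.1
  have hxb : (x:ℝ) ≤ b := hx.2
  have hta : (a:ℝ) < t := lt_min (lt_of_lt_of_le (by linarith) (le_max_right _ _)) (by linarith)
  have htb : t < (b:ℝ) := lt_of_le_of_lt (min_le_right _ _) (by linarith)
  have htx : |t - (x:ℝ)| ≤ m := by
    have h1 : max (x:ℝ) ((a:ℝ) + m) ≤ (x:ℝ) + m := max_le (by linarith) (by linarith)
    have h2 : (x:ℝ) ≤ max (x:ℝ) ((a:ℝ) + m) := le_max_left _ _
    rw [abs_le]
    constructor
    · have : (x:ℝ) - m ≤ (b:ℝ) - m := by linarith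
      have := le_min (le_trans (by linarith : (x:ℝ) - m ≤ (x:ℝ)) h2) this
      linarith [this]
    · linarith [min_le_left (max (x:ℝ) ((a:ℝ) + m)) ((b:ℝ) - m)]
  have ht01 : t ∈ unitInterval := ⟨le_trans a.2.1 (le_of_lt hta), le_trans (le_of_lt htb) b.2.2⟩
  refine ⟨⟨t, ht01⟩, ⟨?_, ?_⟩, ?_⟩
  · exact Subtype.mk_lt_mk.2 hta
  · exact Subtype.mk_lt_mk.2 htb
  · have : dist (⟨t, ht01⟩ : unitInterval) x < δ := by
      rw [Subtype.dist_eq, Real.dist_eq]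
      calc |t - (x:ℝ)| ≤ m := htx
        _ ≤ δ/2 := min_le_left _ _
        _ < δ := by linarith
    have := hball this
    rwa [Real.dist_eq] at this

lemma abs_sub_le_osc (F : CI) {a b x y : unitInterval} (hab : a < b)
    (hx : x ∈ Set.Icc a b) (hy : y ∈ Set.Icc a b) : |F x - F y| ≤ osc F a b := by
  refine le_of_forall_pos_le_add fun ε hε => ?_
  obtain ⟨x', hx', hxc⟩ := exists_near F a b x hab hx (half_pos hε)
  obtain ⟨y', hy', hyc⟩ := exists_near F a b y hab hy (half_pos hε)
  have hmem : |F x' - F y'| ≤ osc F a b :=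
    le_csSup (osc_bddAbove F a b) ⟨x', hx', y', hy', rfl⟩
  calc |F x - F y| ≤ |F x - F x'| + |F x' - F y'| + |F y' - F y| := by
        have h1 := abs_sub_le (F x) (F x') (F y)
        have h2 := abs_sub_le (F x') (F y') (F y)
        linarith
    _ ≤ ε/2 + osc F a b + ε/2 := by
        rw [abs_sub_comm] at hxc
        exact add_le_add (add_le_add hxc.le hmem) hyc.le
    _ = osc F a b + ε := by ring

end Infra
section Tel

/-- telescoping bound for ordered disjoint intervals -/
lemma tel_sum {x y : ℕ → ℝ} : ∀ n, (∀ j < n, x j ≤ y j) → (∀ j, j + 1 < n → y j ≤ x (j+1)) →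
    n ≠ 0 → ∑ j ∈ Finset.range n, (y j - x j) ≤ y (n-1) - x 0 := by
  intro n
  induction n with
  | zero => intro _ _ h; exact absurd rfl h
  | succ n ih =>
    intro hxy hord _
    rcases Nat.eq_zero_or_pos n with rfl | hn
    · simp
    · have h1 : ∑ j ∈ Finset.range (n+1), (y j - x j)
          = (∑ j ∈ Finset.range n, (y j - x j)) + (y n - x n) := Finset.sum_range_succ _ _
      have h2 := ih (fun j hj => hxy j (by omega)) (fun j hj => hord j (by omega)) (by omega)
      have h3 : y (n-1) ≤ x n := by
        have := hord (n-1) (by omega)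
        rwa [Nat.sub_add_cancel hn] at this
      simp only [Nat.add_sub_cancel]
      linarith

/-- sum of lengths of an ordered disjoint subfamily of intervals inside `[u,v]` -/
lemma sum_len_le {n : ℕ} {x y : ℕ → ℝ} (hxy : ∀ j < n, x j ≤ y j)
    (hord : ∀ j, j + 1 < n → y j ≤ x (j+1)) {u v : ℝ} (huv : u ≤ v)
    {s : Finset ℕ} (hs : s ⊆ Finset.range n) (hmem : ∀ j ∈ s, u ≤ x j ∧ y j ≤ v) :
    ∑ j ∈ s, (y j - x j) ≤ v - u := by
  classical
  set x' : ℕ → ℝ := fun j => max u (min v (x j)) with hx'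
  set y' : ℕ → ℝ := fun j => max u (min v (y j)) with hy'
  have hclamp : ∀ t : ℝ, u ≤ max u (min v t) ∧ max u (min v t) ≤ v :=
    fun t => ⟨le_max_left _ _, max_le huv (min_le_left _ _)⟩
  have hmono : ∀ s t : ℝ, s ≤ t → max u (min v s) ≤ max u (min v t) :=
    fun s t hst => max_le_max le_rfl (min_le_min le_rfl hst)
  have heq : ∀ j ∈ s, y j - x j = y' j - x' j := by
    intro j hj
    obtain ⟨h1, h2⟩ := hmem j hj
    have hj' := hxy j (Finset.mem_range.1 (hs hj))
    have ex : x' j = x j := by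
      simp only [hx']; rw [min_eq_right (by linarith), max_eq_right h1]
    have ey : y' j = y j := by
      simp only [hy']; rw [min_eq_right h2, max_eq_right (by linarith)]
    rw [ex, ey]
  rw [Finset.sum_congr rfl heq]
  rcases Nat.eq_zero_or_pos n with rfl | hn
  · have : s = ∅ := Finset.subset_empty.1 (by simpa using hs)
    simp [this]; linarith
  calc ∑ j ∈ s, (y' j - x' j) ≤ ∑ j ∈ Finset.range n, (y' j - x' j) := by
        refine Finset.sum_le_sum_of_subset_of_nonneg hs fun j hj _ => ?_
        exact sub_nonneg.2 (hmono _ _ (hxy j (Finset.mem_range.1 hj)))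
    _ ≤ y' (n-1) - x' 0 := by
        refine tel_sum n (fun j hj => hmono _ _ (hxy j hj))
          (fun j hj => hmono _ _ (hord j hj)) (by omega)
    _ ≤ v - u := sub_le_sub (hclamp _).2 (hclamp _).1

/-- points in a SeqOn chain are ordered -/
lemma SeqOn.b_le_a {E : Set unitInterval} {k : ℕ} {a b : ℕ → unitInterval}
    (h : SeqOn E k a b) {i j : ℕ} (hij : i < j) (hj : j ≤ k) : b i ≤ a j := by
  induction j with
  | zero => omega
  | succ j ih =>
    rcases Nat.lt_or_ge i j with h' | h'
    · exact le_trans (ih h' (by omega)) (le_trans (h.2.2.1 j (by omega)) (h.2.2.2 j (by omega)))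
    · have : i = j := by omega
      subst this
      exact h.2.2.2 i (by omega)

/-- extract a subfamily of a SeqOn as a SeqOn with identical sums -/
lemma SeqOn.subfamily {E : Set unitInterval} {k : ℕ} {a b : ℕ → unitInterval}
    (h : SeqOn E k a b) (h0 : (0:unitInterval) ∈ E) (s : Finset ℕ)
    (hs : s ⊆ Finset.range (k+1)) :
    ∃ (k' : ℕ) (a' b' : ℕ → unitInterval), SeqOn E k' a' b' ∧
      (∀ g : unitInterval → unitInterval → ℝ, g 0 0 = 0 →
        ∑ i ∈ Finset.range (k'+1), g (a' i) (b' i) = ∑ i ∈ s, g (a i) (b i)) := by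
  classical
  rcases s.eq_empty_or_nonempty with rfl | hne
  · refine ⟨0, fun _ => 0, fun _ => 0, ⟨fun _ _ => h0, fun _ _ => h0, fun _ _ => le_rfl,
      fun i hi => by omega⟩, fun g hg => by simp [hg]⟩
  · set r := s.card with hr
    have hr1 : 1 ≤ r := Finset.card_pos.2 hne
    set e := s.orderIsoOfFin rfl with he
    have hesmem : ∀ i : Fin r, (e i : ℕ) ∈ s := fun i => (e i).2
    have heslt : ∀ i : Fin r, (e i : ℕ) < k + 1 := fun i => Finset.mem_range.1 (hs (hesmem i))
    refine ⟨r - 1, fun i => a (e ⟨min i (r-1), by omega⟩), fun i => b (e ⟨min i (r-1), by omega⟩),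
      ⟨?_, ?_, ?_, ?_⟩, ?_⟩
    · intro i _; exact h.1 _ (by have := heslt ⟨min i (r-1), by omega⟩; omega)
    · intro i _; exact h.2.1 _ (by have := heslt ⟨min i (r-1), by omega⟩; omega)
    · intro i _; exact h.2.2.1 _ (by have := heslt ⟨min i (r-1), by omega⟩; omega)
    · intro i hi
      have h1 : min i (r-1) = i := by omega
      have h2 : min (i+1) (r-1) = i + 1 := by omega
      have hlt : e ⟨min i (r-1), by omega⟩ < e ⟨min (i+1) (r-1), by omega⟩ := by
        apply e.strictMono
        simp only [Fin.mk_lt_mk, h1, h2]; omega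
      exact h.b_le_a (Subtype.coe_lt_coe.2 hlt)
        (by have := heslt ⟨min (i+1) (r-1), by omega⟩; omega)
    · intro g hg
      have hrange : Finset.range (r - 1 + 1) = Finset.range r := by congr 1; omega
      rw [hrange]
      have : ∀ i ∈ Finset.range r,
          g (a (e ⟨min i (r-1), by omega⟩)) (b (e ⟨min i (r-1), by omega⟩))
          = (fun i : ℕ => if hi : i < r then g (a (e ⟨i, hi⟩)) (b (e ⟨i, hi⟩)) else 0) i := by
        intro i hi
        have hi' := Finset.mem_range.1 hi
        have h1 : min i (r-1) = i := by omega
        simp only [dif_pos hi']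
        have : (⟨min i (r-1), by omega⟩ : Fin r) = ⟨i, hi'⟩ := Fin.ext (by simpa using h1)
        rw [this]
      rw [Finset.sum_congr rfl this, ← Fin.sum_univ_eq_sum_range]
      have hc := Equiv.sum_comp e.toEquiv (fun z : {x // x ∈ s} => g (a z) (b z))
      rw [← Finset.sum_coe_sort s (fun z => g (a z) (b z)), ← hc]
      refine Finset.sum_congr rfl fun i _ => ?_
      simp only [dif_pos i.2]
      rfl
end Tel
section Proj

/-- clamp a real to `[0,1]` as a point of the unit interval -/
def clampI (t : ℝ) : unitInterval :=
  ⟨max 0 (min 1 t), le_max_left _ _, max_le zero_le_one (min_le_left _ _)⟩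

lemma clampI_coe {t : ℝ} (h0 : 0 ≤ t) (h1 : t ≤ 1) : (clampI t : ℝ) = t := by
  simp only [clampI]; rw [min_eq_right h1, max_eq_right h0]

/-- greatest point of `E` to the left of `x` -/
noncomputable def cL (E : Set unitInterval) (x : unitInterval) : unitInterval :=
  clampI (sSup (Subtype.val '' (E ∩ Set.Iic x)))

/-- least point of `E` to the right of `x` -/
noncomputable def cR (E : Set unitInterval) (x : unitInterval) : unitInterval :=
  clampI (sInf (Subtype.val '' (E ∩ Set.Ici x)))

/-- least point of `E` strictly to the right of `x` -/
noncomputable def DE (E : Set unitInterval) (x : unitInterval) : unitInterval :=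
  clampI (sInf (Subtype.val '' (E ∩ Set.Ioi x)))

variable {E : Set unitInterval}

lemma cL_spec (hE : IsClosed E) (h0 : (0:unitInterval) ∈ E) (x : unitInterval) :
    cL E x ∈ E ∧ cL E x ≤ x ∧ ∀ e ∈ E, e ≤ x → e ≤ cL E x := by
  have hcpt : IsCompact (Subtype.val '' (E ∩ Set.Iic x)) :=
    ((hE.inter isClosed_Iic).isCompact).image continuous_subtype_val
  have hne : (Subtype.val '' (E ∩ Set.Iic x)).Nonempty := ⟨0, ⟨0, ⟨h0, x.2.1⟩, rfl⟩⟩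
  have hmem := hcpt.sSup_mem hne
  obtain ⟨e0, ⟨he0E, he0x⟩, he0⟩ := hmem
  have hval : (cL E x : ℝ) = sSup (Subtype.val '' (E ∩ Set.Iic x)) := by
    rw [cL, clampI_coe (he0 ▸ e0.2.1) (he0 ▸ e0.2.2)]
  have hcLeq : cL E x = e0 := Subtype.ext (by rw [hval, he0])
  refine ⟨hcLeq ▸ he0E, hcLeq ▸ he0x, fun e heE hex => ?_⟩
  have : (e:ℝ) ≤ sSup (Subtype.val '' (E ∩ Set.Iic x)) :=
    le_csSup hcpt.bddAbove ⟨e, ⟨heE, hex⟩, rfl⟩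
  exact Subtype.coe_le_coe.1 (by rw [hval]; exact this)

lemma cR_spec (hE : IsClosed E) (h1 : (1:unitInterval) ∈ E) (x : unitInterval) :
    cR E x ∈ E ∧ x ≤ cR E x ∧ ∀ e ∈ E, x ≤ e → cR E x ≤ e := by
  have hcpt : IsCompact (Subtype.val '' (E ∩ Set.Ici x)) :=
    ((hE.inter isClosed_Ici).isCompact).image continuous_subtype_val
  have hne : (Subtype.val '' (E ∩ Set.Ici x)).Nonempty := ⟨1, ⟨1, ⟨h1, x.2.2⟩, rfl⟩⟩
  have hmem := hcpt.sInf_mem hne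
  obtain ⟨e0, ⟨he0E, he0x⟩, he0⟩ := hmem
  have hval : (cR E x : ℝ) = sInf (Subtype.val '' (E ∩ Set.Ici x)) := by
    rw [cR, clampI_coe (he0 ▸ e0.2.1) (he0 ▸ e0.2.2)]
  have hcReq : cR E x = e0 := Subtype.ext (by rw [hval, he0])
  refine ⟨hcReq ▸ he0E, hcReq ▸ he0x, fun e heE hex => ?_⟩
  have : sInf (Subtype.val '' (E ∩ Set.Ici x)) ≤ (e:ℝ) :=
    csInf_le hcpt.bddBelow ⟨e, ⟨heE, hex⟩, rfl⟩
  exact Subtype.coe_le_coe.1 (by rw [hval]; exact this)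

lemma cL_mono (hE : IsClosed E) (h0 : (0:unitInterval) ∈ E) {x y : unitInterval} (hxy : x ≤ y) : cL E x ≤ cL E y :=
  (cL_spec hE h0 y).2.2 _ (cL_spec hE h0 x).1 (le_trans (cL_spec hE h0 x).2.1 hxy)

lemma cR_mono (hE : IsClosed E) (h1 : (1:unitInterval) ∈ E) {x y : unitInterval} (hxy : x ≤ y) : cR E x ≤ cR E y :=
  (cR_spec hE h1 x).2.2 _ (cR_spec hE h1 y).1 (le_trans hxy (cR_spec hE h1 y).2.1)

lemma cL_eq_self (hE : IsClosed E) (h0 : (0:unitInterval) ∈ E) {x : unitInterval} (hx : x ∈ E) : cL E x = x :=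
  le_antisymm (cL_spec hE h0 x).2.1 ((cL_spec hE h0 x).2.2 x hx le_rfl)

lemma cR_eq_self (hE : IsClosed E) (h1 : (1:unitInterval) ∈ E) {x : unitInterval} (hx : x ∈ E) : cR E x = x :=
  le_antisymm ((cR_spec hE h1 x).2.2 x hx le_rfl) (cR_spec hE h1 x).2.1

lemma cL_lt (hE : IsClosed E) (h0 : (0:unitInterval) ∈ E) {x : unitInterval} (hx : x ∉ E) : cL E x < x :=
  lt_of_le_of_ne (cL_spec hE h0 x).2.1 (fun h => hx (h ▸ (cL_spec hE h0 x).1))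

lemma cR_gt (hE : IsClosed E) (h1 : (1:unitInterval) ∈ E) {x : unitInterval} (hx : x ∉ E) : x < cR E x :=
  lt_of_le_of_ne (cR_spec hE h1 x).2.1 (fun h => hx (h ▸ (cR_spec hE h1 x).1))

lemma comp_gap (hE : IsClosed E) (h0 : (0:unitInterval) ∈ E) (h1 : (1:unitInterval) ∈ E) {w : unitInterval} (hw : w ∉ E) :
    Set.Ioo (cL E w) (cR E w) ∩ E = ∅ := by
  ext z
  simp only [Set.mem_inter_iff, Set.mem_Ioo, Set.mem_empty_iff_false, iff_false, not_and]
  rintro ⟨hz1, hz2⟩ hzE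
  rcases le_or_gt z w with h | h
  · exact absurd ((cL_spec hE h0 w).2.2 z hzE h) (not_le.2 hz1)
  · exact absurd ((cR_spec hE h1 w).2.2 z hzE h.le) (not_le.2 hz2)

lemma DE_eq (hE : IsClosed E) (h0 : (0:unitInterval) ∈ E) (h1 : (1:unitInterval) ∈ E) {w : unitInterval} (hw : w ∉ E) : DE E (cL E w) = cR E w := by
  have hset : E ∩ Set.Ioi (cL E w) = E ∩ Set.Ici (cR E w) := by
    ext z
    simp only [Set.mem_inter_iff, Set.mem_Ioi, Set.mem_Ici]
    constructor
    · rintro ⟨hzE, hz⟩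
      refine ⟨hzE, ?_⟩
      rcases le_or_gt z w with h | h
      · exact absurd ((cL_spec hE h0 w).2.2 z hzE h) (not_le.2 hz)
      · exact (cR_spec hE h1 w).2.2 z hzE h.le
    · rintro ⟨hzE, hz⟩
      have hcw : cL E w < cR E w := (cL_lt hE h0 hw).trans (cR_gt hE h1 hw)
      exact ⟨hzE, lt_of_lt_of_le hcw hz⟩
  have hd : IsLeast (Subtype.val '' (E ∩ Set.Ioi (cL E w))) (cR E w : ℝ) := by
    rw [hset]
    constructor
    · exact ⟨cR E w, ⟨(cR_spec hE h1 w).1, Set.mem_Ici.2 le_rfl⟩, rfl⟩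
    · rintro r ⟨z, ⟨hzE, hz⟩, rfl⟩
      exact Subtype.coe_le_coe.2 hz
  rw [DE, hd.csInf_eq]
  exact Subtype.ext (clampI_coe (cR E w).2.1 (cR E w).2.2)

end Proj
/-- the shape hypothesis of the main theorem -/
def ShapeH (F G : CI) (E : Set unitInterval) : Prop :=
  ∀ c d : unitInterval, c ∈ E → d ∈ E → c < d → Set.Ioo c d ∩ E = ∅ →
      (∀ x : unitInterval, (x : ℝ) = (2 * (c : ℝ) + (d : ℝ)) / 3 →
        G x = sSup (F '' Set.Icc c d)) ∧
      (∀ x : unitInterval, (x : ℝ) = ((c : ℝ) + 2 * (d : ℝ)) / 3 →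
        G x = sInf (F '' Set.Icc c d)) ∧
      (∃ m q : ℝ, ∀ x ∈ Set.Icc c d, (x : ℝ) ≤ (2 * (c : ℝ) + (d : ℝ)) / 3 →
        G x = m * (x : ℝ) + q) ∧
      (∃ m q : ℝ, ∀ x ∈ Set.Icc c d, (2 * (c : ℝ) + (d : ℝ)) / 3 ≤ (x : ℝ) →
        (x : ℝ) ≤ ((c : ℝ) + 2 * (d : ℝ)) / 3 → G x = m * (x : ℝ) + q) ∧
      (∃ m q : ℝ, ∀ x ∈ Set.Icc c d, ((c : ℝ) + 2 * (d : ℝ)) / 3 ≤ (x : ℝ) →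
        G x = m * (x : ℝ) + q)

section Mid

noncomputable def midL (c d : unitInterval) : unitInterval := clampI ((2*(c:ℝ)+d)/3)
noncomputable def midR (c d : unitInterval) : unitInterval := clampI (((c:ℝ)+2*d)/3)

lemma midL_coe (c d : unitInterval) : (midL c d : ℝ) = (2*(c:ℝ)+d)/3 :=
  clampI_coe (by have := c.2.1; have := d.2.1; linarith)
    (by have := c.2.2; have := d.2.2; linarith)

lemma midR_coe (c d : unitInterval) : (midR c d : ℝ) = ((c:ℝ)+2*d)/3 :=
  clampI_coe (by have := c.2.1; have := d.2.1; linarith)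
    (by have := c.2.2; have := d.2.2; linarith)

lemma midL_mem {c d : unitInterval} (h : c ≤ d) : c ≤ midL c d ∧ midL c d ≤ d := by
  have hcd : (c:ℝ) ≤ d := h
  constructor <;> rw [← Subtype.coe_le_coe] <;> rw [midL_coe] <;> linarith

lemma midR_mem {c d : unitInterval} (h : c ≤ d) : c ≤ midR c d ∧ midR c d ≤ d := by
  have hcd : (c:ℝ) ≤ d := h
  constructor <;> rw [← Subtype.coe_le_coe] <;> rw [midR_coe] <;> linarith

lemma midLR {c d : unitInterval} (h : c ≤ d) : (midL c d : ℝ) ≤ midR c d := by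
  rw [midL_coe, midR_coe]
  have hcd : (c:ℝ) ≤ d := h
  linarith

lemma icc_compact (a b : unitInterval) : IsCompact (Set.Icc a b) := by
  have : (Set.Icc a b : Set unitInterval) = Subtype.val ⁻¹' (Set.Icc (a:ℝ) (b:ℝ)) := by
    ext z; simp [Subtype.coe_le_coe]
  rw [this]
  exact (isClosed_Icc.preimage continuous_subtype_val).isCompact

lemma F_img_compact (F : CI) (a b : unitInterval) : IsCompact (F '' Set.Icc a b) :=
  (icc_compact a b).image F.continuous

end Mid

section Between

variable {F G : CI} {E : Set unitInterval}

lemma F_between (hE : IsClosed E) (h0 : (0:unitInterval) ∈ E) (h1 : (1:unitInterval) ∈ E)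
    (hagree : ∀ x ∈ E, G x = F x) (hsh : ShapeH F G E)
    {u v : unitInterval} (hu : u ∈ E) (hv : v ∈ E)
    {p q : unitInterval} (hp : p ∈ Set.Icc u v) (hq : q ∈ Set.Icc u v)
    (hmax : ∀ z ∈ Set.Icc u v, G z ≤ G p) (hmin : ∀ z ∈ Set.Icc u v, G q ≤ G z) :
    ∀ x ∈ Set.Ioo u v, G q ≤ F x ∧ F x ≤ G p := by
  intro x hx
  by_cases hxE : x ∈ E
  · rw [← hagree x hxE]
    exact ⟨hmin x ⟨hx.1.le, hx.2.le⟩, hmax x ⟨hx.1.le, hx.2.le⟩⟩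
  · set c := cL E x with hc
    set d := cR E x with hd
    have hcE : c ∈ E := (cL_spec hE h0 x).1
    have hdE : d ∈ E := (cR_spec hE h1 x).1
    have hcx : c < x := cL_lt hE h0 hxE
    have hxd : x < d := cR_gt hE h1 hxE
    have hcd : c < d := hcx.trans hxd
    have hgap : Set.Ioo c d ∩ E = ∅ := comp_gap hE h0 h1 hxE
    obtain ⟨hsup, hinf, -, -, -⟩ := hsh c d hcE hdE hcd hgap
    have huc : u ≤ c := (cL_spec hE h0 x).2.2 u hu hx.1.le
    have hdv : d ≤ v := (cR_spec hE h1 x).2.2 v hv hx.2.le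
    have hxcd : x ∈ Set.Icc c d := ⟨hcx.le, hxd.le⟩
    have hGt1 : G (midL c d) = sSup (F '' Set.Icc c d) := hsup _ (midL_coe c d)
    have hGt2 : G (midR c d) = sInf (F '' Set.Icc c d) := hinf _ (midR_coe c d)
    have ht1 : midL c d ∈ Set.Icc u v :=
      ⟨le_trans huc (midL_mem hcd.le).1, le_trans (midL_mem hcd.le).2 hdv⟩
    have ht2 : midR c d ∈ Set.Icc u v :=
      ⟨le_trans huc (midR_mem hcd.le).1, le_trans (midR_mem hcd.le).2 hdv⟩
    constructor
    · calc G q ≤ G (midR c d) := hmin _ ht2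
        _ = sInf (F '' Set.Icc c d) := hGt2
        _ ≤ F x := csInf_le (F_img_compact F c d).bddBelow ⟨x, hxcd, rfl⟩
    · calc F x ≤ sSup (F '' Set.Icc c d) :=
          le_csSup (F_img_compact F c d).bddAbove ⟨x, hxcd, rfl⟩
        _ = G (midL c d) := hGt1.symm
        _ ≤ G p := hmax _ ht1

/-- backward direction core: each `osc` term is dominated by a `G`-variation term -/
lemma backward_core (hE : IsClosed E) (h0 : (0:unitInterval) ∈ E) (h1 : (1:unitInterval) ∈ E)
    (hagree : ∀ x ∈ E, G x = F x) (hsh : ShapeH F G E)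
    {k : ℕ} {a b : ℕ → unitInterval} (hseq : SeqOn E k a b) :
    ∃ p q : ℕ → unitInterval, SeqOn Set.univ k p q ∧
      (∀ i ≤ k, osc F (a i) (b i) ≤ |G (q i) - G (p i)|) ∧
      (∀ i ≤ k, (a i : ℝ) ≤ p i ∧ (q i : ℝ) ≤ b i) := by
  classical
  have hex : ∀ i, i ≤ k → ∃ pq : unitInterval × unitInterval,
      pq.1 ∈ Set.Icc (a i) (b i) ∧ pq.2 ∈ Set.Icc (a i) (b i) ∧ pq.1 ≤ pq.2 ∧
      osc F (a i) (b i) ≤ |G pq.2 - G pq.1| := by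
    intro i hi
    have hab : a i ≤ b i := hseq.2.2.1 i hi
    have hne : (Set.Icc (a i) (b i)).Nonempty := ⟨a i, le_rfl, hab⟩
    obtain ⟨pM, hpM, hpMmax⟩ := (icc_compact (a i) (b i)).exists_isMaxOn hne
      (G.continuous.continuousOn)
    obtain ⟨pm, hpm, hpmmin⟩ := (icc_compact (a i) (b i)).exists_isMinOn hne
      (G.continuous.continuousOn)
    have hbet := F_between hE h0 h1 hagree hsh (hseq.1 i hi) (hseq.2.1 i hi)
      hpM hpm (fun z hz => hpMmax hz) (fun z hz => hpmmin hz)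
    have hmm : G pm ≤ G pM := hpmmin hpM
    have hosc : osc F (a i) (b i) ≤ G pM - G pm := by
      refine osc_le F (a i) (b i) (by linarith) fun x hx y hy => ?_
      obtain ⟨h1x, h2x⟩ := hbet x hx
      obtain ⟨h1y, h2y⟩ := hbet y hy
      rw [abs_le]; constructor <;> linarith
    refine ⟨(pm ⊓ pM, pm ⊔ pM), ?_, ?_, inf_le_sup, ?_⟩
    · rcases le_total pm pM with h | h
      · rw [inf_eq_left.2 h]; exact hpm
      · rw [inf_eq_right.2 h]; exact hpM
    · rcases le_total pm pM with h | h
      · rw [sup_eq_right.2 h]; exact hpM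
      · rw [sup_eq_left.2 h]; exact hpm
    · rcases le_total pm pM with h | h
      · rw [inf_eq_left.2 h, sup_eq_right.2 h, abs_of_nonneg (by linarith)]; linarith
      · rw [inf_eq_right.2 h, sup_eq_left.2 h, abs_of_nonpos (by linarith)]; linarith
  set pq : ℕ → unitInterval × unitInterval :=
    fun i => if hi : i ≤ k then (hex i hi).choose else (1, 1) with hpq
  refine ⟨fun i => (pq i).1, fun i => (pq i).2, ⟨fun _ _ => trivial, fun _ _ => trivial,
    ?_, ?_⟩, ?_, ?_⟩
  · intro i hi
    simp only [hpq, dif_pos hi]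
    exact (hex i hi).choose_spec.2.2.1
  · intro i hi
    have hik : i ≤ k := by omega
    have hik1 : i + 1 ≤ k := by omega
    simp only [hpq, dif_pos hik, dif_pos hik1]
    calc (hex i hik).choose.2 ≤ b i := (hex i hik).choose_spec.2.1.2
      _ ≤ a (i+1) := hseq.2.2.2 i hi
      _ ≤ (hex (i+1) hik1).choose.1 := (hex (i+1) hik1).choose_spec.1.1
  · intro i hi
    simp only [hpq, dif_pos hi]
    exact (hex i hi).choose_spec.2.2.2
  · intro i hi
    simp only [hpq, dif_pos hi]
    exact ⟨Subtype.coe_le_coe.2 (hex i hi).choose_spec.1.1,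
      Subtype.coe_le_coe.2 (hex i hi).choose_spec.2.1.2⟩

end Between
section Pairs

variable {F G : CI} {E : Set unitInterval}

set_option maxHeartbeats 1600000 in
lemma pairs_bound (hE : IsClosed E) (h0 : (0:unitInterval) ∈ E) (h1 : (1:unitInterval) ∈ E)
    (hagree : ∀ x ∈ E, G x = F x) (hsh : ShapeH F G E)
    (n : ℕ) (X Y : ℕ → unitInterval)
    (hXY : ∀ j < n, X j ≤ Y j) (hord : ∀ j, j + 1 < n → Y j ≤ X (j+1))
    (hgap : ∀ j < n, Set.Ioo (X j) (Y j) ∩ E = ∅) :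
    ∃ (K : Finset unitInterval) (L : unitInterval → ℝ),
      (∀ x ∈ K, x ∈ E ∧ DE E x ∈ E ∧ x < DE E x ∧ Set.Ioo x (DE E x) ∩ E = ∅) ∧
      (∀ x ∈ K, ∀ y ∈ K, x < y → DE E x ≤ y) ∧
      (∀ x, 0 ≤ L x) ∧
      (∀ x ∈ K, L x ≤ (DE E x : ℝ) - x) ∧
      (∑ x ∈ K, L x ≤ ∑ j ∈ Finset.range n, ((Y j : ℝ) - X j)) ∧
      ∑ j ∈ Finset.range n, |G (Y j) - G (X j)| ≤
        ∑ x ∈ K, 9 * osc F x (DE E x) * (L x / ((DE E x : ℝ) - x)) := by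
  classical
  set w : ℕ → unitInterval := fun j => clampI (((X j : ℝ) + Y j)/2) with hw
  have hw_coe : ∀ j, (w j : ℝ) = ((X j : ℝ) + Y j)/2 := fun j =>
    clampI_coe (by have := (X j).2.1; have := (Y j).2.1; linarith)
      (by have := (X j).2.2; have := (Y j).2.2; linarith)
  set J := (Finset.range n).filter (fun j => X j < Y j) with hJ
  have hJmem : ∀ j ∈ J, j < n ∧ X j < Y j := fun j hj => by
    obtain ⟨h1', h2'⟩ := Finset.mem_filter.1 hj
    exact ⟨Finset.mem_range.1 h1', h2'⟩
  have hwIoo : ∀ j ∈ J, w j ∈ Set.Ioo (X j) (Y j) := by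
    intro j hj
    obtain ⟨-, hlt⟩ := hJmem j hj
    have hlt' : (X j : ℝ) < Y j := hlt
    constructor <;> rw [← Subtype.coe_lt_coe] <;> rw [hw_coe] <;> linarith
  have hwE : ∀ j ∈ J, w j ∉ E := by
    intro j hj hmem
    have := hgap j (hJmem j hj).1
    exact absurd (Set.mem_inter (hwIoo j hj) hmem) (by rw [this]; exact not_false)
  set κ : ℕ → unitInterval := fun j => cL E (w j) with hκdef
  have hkey_le : ∀ j ∈ J, κ j ≤ X j := by
    intro j hj
    by_contra hlt
    push_neg at hlt
    have hκE : κ j ∈ E := (cL_spec hE h0 (w j)).1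
    have hκw : κ j ≤ w j := (cL_spec hE h0 (w j)).2.1
    have : κ j ∈ Set.Ioo (X j) (Y j) ∩ E :=
      ⟨⟨hlt, lt_of_le_of_lt hκw (hwIoo j hj).2⟩, hκE⟩
    rw [hgap j (hJmem j hj).1] at this
    exact this
  have hD : ∀ j ∈ J, DE E (κ j) = cR E (w j) := fun j hj => DE_eq hE h0 h1 (hwE j hj)
  have hY_le : ∀ j ∈ J, Y j ≤ cR E (w j) := by
    intro j hj
    by_contra hlt
    push_neg at hlt
    have hκE : cR E (w j) ∈ E := (cR_spec hE h1 (w j)).1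
    have hκw : w j ≤ cR E (w j) := (cR_spec hE h1 (w j)).2.1
    have : cR E (w j) ∈ Set.Ioo (X j) (Y j) ∩ E :=
      ⟨⟨lt_of_lt_of_le (hwIoo j hj).1 hκw, hlt⟩, hκE⟩
    rw [hgap j (hJmem j hj).1] at this
    exact this
  have hchain : ∀ j j', j < j' → j' < n → Y j ≤ X j' := by
    intro j j' hjj'
    induction j' with
    | zero => omega
    | succ j' ih =>
      intro hj'n
      rcases Nat.lt_or_ge j j' with h' | h'
      · exact le_trans (ih h' (by omega)) (le_trans (hXY j' (by omega)) (hord j' (by omega)))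
      · have : j = j' := by omega
        subst this
        exact hord j (by omega)
  have hwmono : ∀ j ∈ J, ∀ j' ∈ J, j < j' → w j ≤ w j' := by
    intro j hj j' hj' hjj'
    rw [← Subtype.coe_le_coe, hw_coe, hw_coe]
    have h1' : (X j : ℝ) ≤ Y j := (hJmem j hj).2.le
    have h2' : (X j' : ℝ) ≤ Y j' := (hJmem j' hj').2.le
    have h3' : (Y j : ℝ) ≤ X j' := hchain j j' hjj' (hJmem j' hj').1
    linarith
  have hκmono : ∀ j ∈ J, ∀ j' ∈ J, j < j' → κ j ≤ κ j' := fun j hj j' hj' hjj' =>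
    cL_mono hE h0 (hwmono j hj j' hj' hjj')
  set K := J.image κ with hK
  have hKprop : ∀ x ∈ K, x ∈ E ∧ DE E x ∈ E ∧ x < DE E x ∧ Set.Ioo x (DE E x) ∩ E = ∅ := by
    intro x hx
    obtain ⟨j, hj, rfl⟩ := Finset.mem_image.1 hx
    refine ⟨(cL_spec hE h0 (w j)).1, ?_, ?_, ?_⟩
    · rw [hD j hj]; exact (cR_spec hE h1 (w j)).1
    · rw [hD j hj]; exact (cL_lt hE h0 (hwE j hj)).trans (cR_gt hE h1 (hwE j hj))
    · rw [hD j hj]; exact comp_gap hE h0 h1 (hwE j hj)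
  have hKord : ∀ x ∈ K, ∀ y ∈ K, x < y → DE E x ≤ y := by
    intro x hx y hy hxy
    obtain ⟨j, hj, rfl⟩ := Finset.mem_image.1 hx
    obtain ⟨j', hj', rfl⟩ := Finset.mem_image.1 hy
    rcases lt_trichotomy j j' with h | h | h
    · rw [hD j hj]
      by_contra hlt
      push_neg at hlt
      have hgapj := comp_gap hE h0 h1 (hwE j hj)
      have : κ j' ∈ Set.Ioo (cL E (w j)) (cR E (w j)) ∩ E :=
        ⟨⟨hxy, hlt⟩, (cL_spec hE h0 (w j')).1⟩
      rw [hgapj] at this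
      exact this
    · subst h; exact absurd hxy (lt_irrefl _)
    · exact absurd (hκmono j' hj' j hj h) (not_le.2 hxy)
  set L : unitInterval → ℝ := fun x => ∑ j ∈ J.filter (fun j => κ j = x), ((Y j : ℝ) - X j)
    with hL
  have hL0 : ∀ x, 0 ≤ L x := by
    intro x
    refine Finset.sum_nonneg fun j hj => ?_
    have := hJmem j (Finset.mem_filter.1 hj).1
    have : (X j : ℝ) ≤ Y j := this.2.le
    linarith
  have hXYr : ∀ j < n, (X j : ℝ) ≤ Y j := fun j hj => hXY j hj
  have hordr : ∀ j, j + 1 < n → (Y j : ℝ) ≤ X (j+1) := fun j hj => hord j hj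
  have hLle : ∀ x ∈ K, L x ≤ (DE E x : ℝ) - x := by
    intro x hx
    refine sum_len_le hXYr hordr (le_of_lt ?_) (fun j hj => (Finset.mem_filter.1 hj).1
      |> fun h => Finset.mem_filter.1 h |>.1) (fun j hj => ?_)
    · exact_mod_cast (hKprop x hx).2.2.1
    · obtain ⟨hjJ, hjx⟩ := Finset.mem_filter.1 hj
      constructor
      · have : κ j ≤ X j := hkey_le j hjJ
        rw [hjx] at this
        exact_mod_cast this
      · have h1' : Y j ≤ cR E (w j) := hY_le j hjJ
        have h2' : DE E x = cR E (w j) := by rw [← hjx]; exact hD j hjJ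
        rw [h2']
        exact_mod_cast h1'
  have hmapsto : ∀ j ∈ J, κ j ∈ K := fun j hj => Finset.mem_image_of_mem κ hj
  have hLsum : ∑ x ∈ K, L x ≤ ∑ j ∈ Finset.range n, ((Y j : ℝ) - X j) := by
    rw [hL]
    rw [Finset.sum_fiberwise_of_maps_to hmapsto (fun j => (Y j : ℝ) - X j)]
    refine Finset.sum_le_sum_of_subset_of_nonneg (Finset.filter_subset _ _) fun j hj _ => ?_
    have := hXYr j (Finset.mem_range.1 hj)
    linarith
  refine ⟨K, L, hKprop, hKord, hL0, hLle, hLsum, ?_⟩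
  -- main estimate
  have hsplit : ∑ j ∈ Finset.range n, |G (Y j) - G (X j)|
      = ∑ j ∈ J, |G (Y j) - G (X j)| := by
    rw [hJ]
    rw [← Finset.sum_filter_add_sum_filter_not (Finset.range n) (fun j => X j < Y j)]
    have : ∑ j ∈ (Finset.range n).filter (fun j => ¬ X j < Y j), |G (Y j) - G (X j)| = 0 := by
      refine Finset.sum_eq_zero fun j hj => ?_
      obtain ⟨hjr, hnlt⟩ := Finset.mem_filter.1 hj
      have : X j = Y j := le_antisymm (hXY j (Finset.mem_range.1 hjr)) (not_lt.1 hnlt)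
      rw [this]; simp
    rw [this, add_zero]
  rw [hsplit, ← Finset.sum_fiberwise_of_maps_to hmapsto (fun j => |G (Y j) - G (X j)|)]
  refine Finset.sum_le_sum fun x hx => ?_
  -- fiber estimate
  obtain ⟨hxE, hDE, hxD, hgapx⟩ := hKprop x hx
  set c := x with hc
  set d := DE E x with hd
  have hcd : c < d := hxD
  have hcdr : (c:ℝ) < d := hxD
  obtain ⟨hsupH, hinfH, ⟨m1, q1, hm1⟩, ⟨m2, q2, hm2⟩, ⟨m3, q3, hm3⟩⟩ :=
    hsh c d hxE hDE hcd hgapx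
  set t1 := midL c d with ht1
  set t2 := midR c d with ht2
  have ht1c : (t1:ℝ) = (2*(c:ℝ)+d)/3 := midL_coe c d
  have ht2c : (t2:ℝ) = ((c:ℝ)+2*d)/3 := midR_coe c d
  have ht1m := midL_mem hcd.le
  have ht2m := midR_mem hcd.le
  have ht12 : t1 ≤ t2 := Subtype.coe_le_coe.1 (midLR hcd.le)
  set sF := sSup (F '' Set.Icc c d) with hsF
  set iF := sInf (F '' Set.Icc c d) with hiF
  have hFmem : ∀ z ∈ Set.Icc c d, iF ≤ F z ∧ F z ≤ sF := fun z hz =>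
    ⟨csInf_le (F_img_compact F c d).bddBelow ⟨z, hz, rfl⟩,
     le_csSup (F_img_compact F c d).bddAbove ⟨z, hz, rfl⟩⟩
  set oscb := osc F c d with hoscb
  have ho : 0 ≤ oscb := osc_nonneg F c d
  have hsi : sF - iF ≤ oscb := by
    have hne : (F '' Set.Icc c d).Nonempty := ⟨F c, c, ⟨le_rfl, hcd.le⟩, rfl⟩
    obtain ⟨zM, hzM, hzMe⟩ := (F_img_compact F c d).sSup_mem hne
    obtain ⟨zm, hzm, hzme⟩ := (F_img_compact F c d).sInf_mem hne
    have : |F zM - F zm| ≤ oscb := abs_sub_le_osc F hcd hzM hzm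
    rw [hzMe, hzme] at this
    exact le_trans (le_abs_self _) this
  have hGc : G c = F c := hagree c hxE
  have hGd : G d = F d := hagree d hDE
  have hGt1 : G t1 = sF := hsupH t1 ht1c
  have hGt2 : G t2 = iF := hinfH t2 ht2c
  have hlen3 : ((d:ℝ) - c)/3 > 0 := by linarith
  -- slope bounds
  have hm1b : |m1| ≤ 3 * oscb / ((d:ℝ) - c) := by
    have e1 : G t1 = m1 * (t1:ℝ) + q1 := hm1 t1 ⟨ht1m.1, ht1m.2⟩ (le_of_eq ht1c)
    have e2 : G c = m1 * (c:ℝ) + q1 := hm1 c ⟨le_rfl, hcd.le⟩ (by rw [← ht1c]; exact ht1m.1)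
    have e3 : |m1| * (((d:ℝ) - c)/3) = |G t1 - G c| := by
      rw [e1, e2, ← abs_of_pos hlen3, ← abs_mul]
      congr 1
      rw [ht1c]; ring
    have e4 : |G t1 - G c| ≤ oscb := by
      rw [hGt1, hGc]
      obtain ⟨h1', h2'⟩ := hFmem c ⟨le_rfl, hcd.le⟩
      rw [abs_of_nonneg (by linarith)]
      linarith
    rw [le_div_iff₀ (by linarith : (0:ℝ) < (d:ℝ) - c)]
    nlinarith [e3, e4]
  have hm2b : |m2| ≤ 3 * oscb / ((d:ℝ) - c) := by
    have hcdle : (c:ℝ) ≤ d := hcdr.le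
    have e1 : G t1 = m2 * (t1:ℝ) + q2 :=
      hm2 t1 ⟨ht1m.1, ht1m.2⟩ (le_of_eq ht1c.symm) (by rw [ht1c, ht2c] at *; linarith)
    have e2 : G t2 = m2 * (t2:ℝ) + q2 :=
      hm2 t2 ⟨ht2m.1, ht2m.2⟩ (by rw [ht1c, ht2c] at *; linarith) (le_of_eq ht2c)
    have e3 : |m2| * (((d:ℝ) - c)/3) = |G t2 - G t1| := by
      rw [e1, e2, ← abs_of_pos hlen3, ← abs_mul]
      congr 1
      rw [ht1c, ht2c]; ring
    have e4 : |G t2 - G t1| ≤ oscb := by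
      obtain ⟨hic, hcs⟩ := hFmem c ⟨le_rfl, hcd.le⟩
      rw [hGt1, hGt2]
      rw [abs_of_nonpos (by linarith : iF - sF ≤ 0)]
      linarith
    rw [le_div_iff₀ (by linarith : (0:ℝ) < (d:ℝ) - c)]
    nlinarith [e3, e4]
  have hm3b : |m3| ≤ 3 * oscb / ((d:ℝ) - c) := by
    have hcdle : (c:ℝ) ≤ d := hcdr.le
    have e1 : G t2 = m3 * (t2:ℝ) + q3 := hm3 t2 ⟨ht2m.1, ht2m.2⟩ (le_of_eq ht2c.symm)
    have e2 : G d = m3 * (d:ℝ) + q3 := hm3 d ⟨hcd.le, le_rfl⟩ (by linarith)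
    have e3 : |m3| * (((d:ℝ) - c)/3) = |G d - G t2| := by
      rw [e1, e2, ← abs_of_pos hlen3, ← abs_mul]
      congr 1
      rw [ht2c]; ring
    have e4 : |G d - G t2| ≤ oscb := by
      rw [hGt2, hGd]
      obtain ⟨h1', h2'⟩ := hFmem d ⟨hcd.le, le_rfl⟩
      rw [abs_of_nonneg (by linarith)]
      linarith
    rw [le_div_iff₀ (by linarith : (0:ℝ) < (d:ℝ) - c)]
    nlinarith [e3, e4]
  -- per element of the fiber
  set fib := J.filter (fun j => κ j = x) with hfib
  set p1 : ℕ → unitInterval := fun j => (X j) ⊔ (t1 ⊓ Y j) with hp1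
  set p2 : ℕ → unitInterval := fun j => (X j) ⊔ (t2 ⊓ Y j) with hp2
  have hfibfact : ∀ j ∈ fib, c ≤ X j ∧ Y j ≤ d ∧ X j ≤ Y j := by
    intro j hj
    obtain ⟨hjJ, hjx⟩ := Finset.mem_filter.1 hj
    refine ⟨?_, ?_, (hJmem j hjJ).2.le⟩
    · have : κ j ≤ X j := hkey_le j hjJ
      rwa [hjx] at this
    · have h1' : Y j ≤ cR E (w j) := hY_le j hjJ
      have h2' : d = cR E (w j) := by rw [hd, ← hjx]; exact hD j hjJ
      rw [h2']; exact h1'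
  have hXp1 : ∀ j, X j ≤ p1 j := fun j => le_sup_left
  have hp1p2 : ∀ j, p1 j ≤ p2 j := fun j => sup_le_sup_left (inf_le_inf_right _ ht12) _
  have hp2Y : ∀ j ∈ fib, p2 j ≤ Y j := fun j hj =>
    sup_le (hfibfact j hj).2.2 inf_le_right
  have hp1Y : ∀ j ∈ fib, p1 j ≤ Y j := fun j hj => le_trans (hp1p2 j) (hp2Y j hj)
  have claimA : ∀ j ∈ fib, |G (p1 j) - G (X j)| = |m1| * ((p1 j : ℝ) - X j) := by
    intro j hj
    obtain ⟨hcX, hYd, hXYj⟩ := hfibfact j hj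
    by_cases h : (p1 j : ℝ) ≤ (2*(c:ℝ)+d)/3
    · have e1 : G (p1 j) = m1 * (p1 j : ℝ) + q1 :=
        hm1 (p1 j) ⟨le_trans hcX (hXp1 j), le_trans (hp1Y j hj) hYd⟩ h
      have e2 : G (X j) = m1 * (X j : ℝ) + q1 :=
        hm1 (X j) ⟨hcX, le_trans hXYj hYd⟩
          (le_trans (Subtype.coe_le_coe.2 (hXp1 j)) h)
      rw [e1, e2]
      have hle : (X j : ℝ) ≤ p1 j := Subtype.coe_le_coe.2 (hXp1 j)
      rw [← abs_of_nonneg (by linarith : (0:ℝ) ≤ (p1 j : ℝ) - X j), ← abs_mul]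
      congr 1; ring
    · have : p1 j = X j := by
        rcases max_choice (X j) (t1 ⊓ Y j) with he | he
        · exact he
        · exfalso
          have hpe : p1 j = t1 ⊓ Y j := he
          have : (p1 j : ℝ) ≤ t1 :=
            Subtype.coe_le_coe.2 (le_trans (le_of_eq hpe) inf_le_left)
          rw [ht1c] at this
          exact h this
      rw [this]; simp
  have claimB : ∀ j ∈ fib, |G (p2 j) - G (p1 j)| = |m2| * ((p2 j : ℝ) - p1 j) := by
    intro j hj
    obtain ⟨hcX, hYd, hXYj⟩ := hfibfact j hj
    by_cases heq : p1 j = p2 j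
    · rw [heq]; simp
    · have hlt : p1 j < p2 j := lt_of_le_of_ne (hp1p2 j) heq
      have ht1Y : t1 ≤ Y j := by
        by_contra hYt
        push_neg at hYt
        have h1' : t1 ⊓ Y j = Y j := inf_eq_right.2 hYt.le
        have h2' : p1 j = Y j := by
          have : p1 j = X j ⊔ (t1 ⊓ Y j) := rfl
          rw [this, h1']
          exact sup_eq_right.2 hXYj
        exact absurd (lt_of_lt_of_le hlt (hp2Y j hj)) (by rw [h2']; exact lt_irrefl _)
      have hp1t1 : t1 ≤ p1 j := by
        have : p1 j = X j ⊔ (t1 ⊓ Y j) := rfl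
        rw [this]
        exact le_sup_of_le_right (le_inf le_rfl ht1Y)
      have hp2t2 : p2 j ≤ t2 := by
        rcases max_choice (X j) (t2 ⊓ Y j) with he | he
        · exfalso
          have hpe : p2 j = X j := he
          exact absurd hlt (not_lt.2 (le_trans (le_of_eq hpe) (hXp1 j)))
        · have hpe : p2 j = t2 ⊓ Y j := he
          exact le_trans (le_of_eq hpe) inf_le_left
      have hmem1 : p1 j ∈ Set.Icc c d := ⟨le_trans hcX (hXp1 j), le_trans (hp1Y j hj) hYd⟩
      have hmem2 : p2 j ∈ Set.Icc c d := ⟨le_trans hcX (le_trans (hXp1 j) (hp1p2 j)),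
        le_trans (hp2Y j hj) hYd⟩
      have hc1 : (2*(c:ℝ)+d)/3 ≤ (p1 j : ℝ) := by
        rw [← ht1c]; exact Subtype.coe_le_coe.2 hp1t1
      have hc2 : (p2 j : ℝ) ≤ ((c:ℝ)+2*d)/3 := by
        rw [← ht2c]; exact Subtype.coe_le_coe.2 hp2t2
      have e1 : G (p1 j) = m2 * (p1 j : ℝ) + q2 :=
        hm2 (p1 j) hmem1 hc1 (le_trans (Subtype.coe_le_coe.2 (hp1p2 j)) hc2)
      have e2 : G (p2 j) = m2 * (p2 j : ℝ) + q2 :=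
        hm2 (p2 j) hmem2 (le_trans hc1 (Subtype.coe_le_coe.2 (hp1p2 j))) hc2
      rw [e1, e2]
      have hle : (p1 j : ℝ) ≤ p2 j := Subtype.coe_le_coe.2 (hp1p2 j)
      rw [← abs_of_nonneg (by linarith : (0:ℝ) ≤ (p2 j : ℝ) - p1 j), ← abs_mul]
      congr 1; ring
  have claimC : ∀ j ∈ fib, |G (Y j) - G (p2 j)| = |m3| * ((Y j : ℝ) - p2 j) := by
    intro j hj
    obtain ⟨hcX, hYd, hXYj⟩ := hfibfact j hj
    by_cases heq : p2 j = Y j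
    · rw [heq]; simp
    · have hlt : p2 j < Y j := lt_of_le_of_ne (hp2Y j hj) heq
      have ht2Y : t2 ≤ Y j := by
        by_contra hYt
        push_neg at hYt
        have h1' : t2 ⊓ Y j = Y j := inf_eq_right.2 hYt.le
        have h2' : p2 j = Y j := by
          have : p2 j = X j ⊔ (t2 ⊓ Y j) := rfl
          rw [this, h1']
          exact sup_eq_right.2 hXYj
        exact absurd hlt (by rw [h2']; exact lt_irrefl _)
      have hp2t2 : t2 ≤ p2 j := by
        have : p2 j = X j ⊔ (t2 ⊓ Y j) := rfl
        rw [this]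
        exact le_sup_of_le_right (le_inf le_rfl ht2Y)
      have hmem2 : p2 j ∈ Set.Icc c d := ⟨le_trans hcX (le_trans (hXp1 j) (hp1p2 j)),
        le_trans (hp2Y j hj) hYd⟩
      have hc2 : ((c:ℝ)+2*d)/3 ≤ (p2 j : ℝ) := by
        rw [← ht2c]; exact Subtype.coe_le_coe.2 hp2t2
      have e1 : G (p2 j) = m3 * (p2 j : ℝ) + q3 := hm3 (p2 j) hmem2 hc2
      have e2 : G (Y j) = m3 * (Y j : ℝ) + q3 :=
        hm3 (Y j) ⟨le_trans hcX hXYj, hYd⟩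
          (le_trans hc2 (Subtype.coe_le_coe.2 (hp2Y j hj)))
      rw [e1, e2]
      have hle : (p2 j : ℝ) ≤ Y j := Subtype.coe_le_coe.2 (hp2Y j hj)
      rw [← abs_of_nonneg (by linarith : (0:ℝ) ≤ (Y j : ℝ) - p2 j), ← abs_mul]
      congr 1; ring
  -- assemble the fiber sum
  have hstep : ∑ j ∈ fib, |G (Y j) - G (X j)| ≤
      ∑ j ∈ fib, (|m1| + |m2| + |m3|) * ((Y j : ℝ) - X j) := by
    refine Finset.sum_le_sum fun j hj => ?_
    obtain ⟨hcX, hYd, hXYj⟩ := hfibfact j hj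
    have htri : |G (Y j) - G (X j)| ≤
        |G (p1 j) - G (X j)| + |G (p2 j) - G (p1 j)| + |G (Y j) - G (p2 j)| := by
      have h1' := abs_sub_le (G (Y j)) (G (p2 j)) (G (X j))
      have h2' := abs_sub_le (G (p2 j)) (G (p1 j)) (G (X j))
      have h3' := abs_sub_le (G (p1 j)) (G (X j)) (G (X j))
      have h4' := abs_sub_le (G (Y j)) (G (p1 j)) (G (X j))
      calc |G (Y j) - G (X j)| ≤ |G (Y j) - G (p2 j)| + |G (p2 j) - G (X j)| :=
            abs_sub_le _ _ _
        _ ≤ |G (Y j) - G (p2 j)| + (|G (p2 j) - G (p1 j)| + |G (p1 j) - G (X j)|) := by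
            linarith [abs_sub_le (G (p2 j)) (G (p1 j)) (G (X j))]
        _ = _ := by ring
    rw [claimA j hj, claimB j hj, claimC j hj] at htri
    have l1 : (p1 j : ℝ) - X j ≤ (Y j : ℝ) - X j := by
      have := Subtype.coe_le_coe.2 (hp1Y j hj); linarith [this]
    have l1' : (0:ℝ) ≤ (p1 j : ℝ) - X j := by
      have := Subtype.coe_le_coe.2 (hXp1 j); linarith [this]
    have l2 : (p2 j : ℝ) - p1 j ≤ (Y j : ℝ) - X j := by
      have h1' := Subtype.coe_le_coe.2 (hp2Y j hj)
      have h2' := Subtype.coe_le_coe.2 (hXp1 j)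
      linarith [h1', h2']
    have l2' : (0:ℝ) ≤ (p2 j : ℝ) - p1 j := by
      have := Subtype.coe_le_coe.2 (hp1p2 j); linarith [this]
    have l3 : (Y j : ℝ) - p2 j ≤ (Y j : ℝ) - X j := by
      have hxp2 : X j ≤ p2 j := le_trans (hXp1 j) (hp1p2 j)
      have h1' := Subtype.coe_le_coe.2 hxp2
      linarith [h1']
    have l3' : (0:ℝ) ≤ (Y j : ℝ) - p2 j := by
      have := Subtype.coe_le_coe.2 (hp2Y j hj); linarith [this]
    have a1 : (0:ℝ) ≤ |m1| := abs_nonneg _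
    have a2 : (0:ℝ) ≤ |m2| := abs_nonneg _
    have a3 : (0:ℝ) ≤ |m3| := abs_nonneg _
    calc |G (Y j) - G (X j)| ≤ |m1| * ((p1 j:ℝ) - X j) + |m2| * ((p2 j:ℝ) - p1 j)
          + |m3| * ((Y j:ℝ) - p2 j) := htri
      _ ≤ |m1| * ((Y j:ℝ) - X j) + |m2| * ((Y j:ℝ) - X j) + |m3| * ((Y j:ℝ) - X j) := by
          gcongr
      _ = (|m1| + |m2| + |m3|) * ((Y j : ℝ) - X j) := by ring
  have hsum2 : ∑ j ∈ fib, (|m1| + |m2| + |m3|) * ((Y j : ℝ) - X j)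
      = (|m1| + |m2| + |m3|) * L x := by
    have : L x = ∑ j ∈ fib, ((Y j : ℝ) - X j) := rfl
    rw [this, ← Finset.mul_sum]
  have hfinal : (|m1| + |m2| + |m3|) * L x ≤ 9 * oscb * (L x / ((d:ℝ) - c)) := by
    have hLx := hL0 x
    have hm : |m1| + |m2| + |m3| ≤ 9 * oscb / ((d:ℝ) - c) := by
      have h9 : 9 * oscb / ((d:ℝ) - c)
          = 3 * oscb / ((d:ℝ) - c) + 3 * oscb / ((d:ℝ) - c) + 3 * oscb / ((d:ℝ) - c) := by
        ring
      rw [h9]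
      linarith
    calc (|m1| + |m2| + |m3|) * L x ≤ (9 * oscb / ((d:ℝ) - c)) * L x := by
          exact mul_le_mul_of_nonneg_right hm hLx
      _ = 9 * oscb * (L x / ((d:ℝ) - c)) := by ring
  exact le_trans hstep (le_trans (le_of_eq hsum2) hfinal)

end Pairs
section Decomp

/-- a good family of components with weights -/
def KGood (E : Set unitInterval) (S : ℝ) (K : Finset unitInterval) (L : unitInterval → ℝ) : Prop :=
  (∀ x ∈ K, x ∈ E ∧ DE E x ∈ E ∧ x < DE E x ∧ Set.Ioo x (DE E x) ∩ E = ∅) ∧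
  (∀ x ∈ K, ∀ y ∈ K, x < y → DE E x ≤ y) ∧
  (∀ x, 0 ≤ L x) ∧ (∀ x ∈ K, L x ≤ (DE E x : ℝ) - x) ∧ (∑ x ∈ K, L x ≤ S)

variable {F G : CI} {E : Set unitInterval}

set_option maxHeartbeats 1600000 in
lemma decomp (hE : IsClosed E) (h0 : (0:unitInterval) ∈ E) (h1 : (1:unitInterval) ∈ E)
    (hagree : ∀ x ∈ E, G x = F x) (hsh : ShapeH F G E)
    {k : ℕ} {a b : ℕ → unitInterval} (hseq : SeqOn Set.univ k a b) :
    ∃ (β γ : ℕ → unitInterval) (K1 K2 : Finset unitInterval) (L1 L2 : unitInterval → ℝ),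
      SeqOn E k β γ ∧
      (∀ i ≤ k, (γ i : ℝ) - β i ≤ (b i : ℝ) - a i) ∧
      KGood E (∑ i ∈ Finset.range (k+1), ((b i : ℝ) - a i)) K1 L1 ∧
      KGood E (∑ i ∈ Finset.range (k+1), ((b i : ℝ) - a i)) K2 L2 ∧
      ∑ i ∈ Finset.range (k+1), |G (b i) - G (a i)| ≤
        (∑ i ∈ Finset.range (k+1), osc F (β i) (γ i))
        + (∑ x ∈ K1, 9 * osc F x (DE E x) * (L1 x / ((DE E x : ℝ) - x)))
        + (∑ x ∈ K2, 9 * osc F x (DE E x) * (L2 x / ((DE E x : ℝ) - x))) := by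
  classical
  obtain ⟨-, -, hab, hba⟩ := hseq
  set β : ℕ → unitInterval := fun i => cR E (a i) with hβ
  set γ : ℕ → unitInterval := fun i => β i ⊔ cL E (b i) with hγ
  set Y1 : ℕ → unitInterval := fun i => β i ⊓ b i with hY1
  set X2 : ℕ → unitInterval := fun i => cL E (b i) ⊔ Y1 i with hX2
  have haβ : ∀ i, a i ≤ β i := fun i => (cR_spec hE h1 (a i)).2.1
  have hcLb : ∀ i, cL E (b i) ≤ b i := fun i => (cL_spec hE h0 (b i)).2.1
  have hXY1 : ∀ i < k+1, a i ≤ Y1 i := fun i hi => le_inf (haβ i) (hab i (by omega))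
  have hY1b : ∀ i, Y1 i ≤ b i := fun i => inf_le_right
  have hX2b : ∀ i < k+1, X2 i ≤ b i := fun i hi => sup_le (hcLb i) (hY1b i)
  have haX2 : ∀ i < k+1, a i ≤ X2 i := fun i hi => le_trans (hXY1 i hi) le_sup_right
  -- apply pairs_bound to family 1 : (a i, Y1 i)
  obtain ⟨K1, L1, hK1p, hK1o, hL1p, hL1le, hL1sum, hbound1⟩ :=
    pairs_bound hE h0 h1 hagree hsh (k+1) a Y1 hXY1
      (fun j hj => le_trans (hY1b j) (hba j (by omega)))
      (fun j hj => by
        ext z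
        simp only [Set.mem_inter_iff, Set.mem_Ioo, Set.mem_empty_iff_false, iff_false, not_and]
        rintro ⟨hz1, hz2⟩ hzE
        have : β j ≤ z := (cR_spec hE h1 (a j)).2.2 z hzE hz1.le
        exact absurd (lt_of_lt_of_le hz2 inf_le_left) (not_lt.2 this))
  -- family 2 : (X2 i, b i)
  obtain ⟨K2, L2, hK2p, hK2o, hL2p, hL2le, hL2sum, hbound2⟩ :=
    pairs_bound hE h0 h1 hagree hsh (k+1) X2 b hX2b
      (fun j hj => le_trans (hba j (by omega)) (haX2 (j+1) (by omega)))
      (fun j hj => by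
        ext z
        simp only [Set.mem_inter_iff, Set.mem_Ioo, Set.mem_empty_iff_false, iff_false, not_and]
        rintro ⟨hz1, hz2⟩ hzE
        have : z ≤ cL E (b j) := (cL_spec hE h0 (b j)).2.2 z hzE hz2.le
        exact absurd (lt_of_le_of_lt (le_trans this le_sup_left) hz1) (lt_irrefl z))
  have hlenptwise : ∀ i ∈ Finset.range (k+1),
      ((Y1 i : ℝ) - a i) ≤ ((b i : ℝ) - a i) := by
    intro i _
    have := Subtype.coe_le_coe.2 (hY1b i)
    linarith [this]
  have hlenptwise2 : ∀ i ∈ Finset.range (k+1),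
      ((b i : ℝ) - X2 i) ≤ ((b i : ℝ) - a i) := by
    intro i hi
    have := Subtype.coe_le_coe.2 (haX2 i (Finset.mem_range.1 hi))
    linarith [this]
  have hsum1 : ∑ i ∈ Finset.range (k+1), ((Y1 i : ℝ) - a i)
      ≤ ∑ i ∈ Finset.range (k+1), ((b i : ℝ) - a i) := Finset.sum_le_sum hlenptwise
  have hsum2 : ∑ i ∈ Finset.range (k+1), ((b i : ℝ) - X2 i)
      ≤ ∑ i ∈ Finset.range (k+1), ((b i : ℝ) - a i) := Finset.sum_le_sum hlenptwise2
  -- the middle sequence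
  have hβE : ∀ i, β i ∈ E := fun i => (cR_spec hE h1 (a i)).1
  have hγE : ∀ i, γ i ∈ E := by
    intro i
    rcases max_choice (β i) (cL E (b i)) with he | he
    · have : γ i = β i := he
      rw [this]; exact hβE i
    · have : γ i = cL E (b i) := he
      rw [this]; exact (cL_spec hE h0 (b i)).1
  have hβγ : ∀ i, β i ≤ γ i := fun i => le_sup_left
  have hmidseq : SeqOn E k β γ := by
    refine ⟨fun i _ => hβE i, fun i _ => hγE i, fun i _ => hβγ i, fun i hi => ?_⟩
    refine sup_le ?_ ?_
    · exact cR_mono hE h1 (le_trans (hab i (by omega)) (hba i hi))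
    · exact le_trans (hcLb i) (le_trans (hba i hi) (haβ (i+1)))
  have hmidlen : ∀ i ≤ k, (γ i : ℝ) - β i ≤ (b i : ℝ) - a i := by
    intro i hi
    by_cases hcase : β i ≤ b i
    · have hγeq : γ i = cL E (b i) :=
        sup_eq_right.2 ((cL_spec hE h0 (b i)).2.2 (β i) (hβE i) hcase)
      rw [hγeq]
      have h1' := Subtype.coe_le_coe.2 (hcLb i)
      have h2' := Subtype.coe_le_coe.2 (haβ i)
      linarith [h1', h2']
    · push_neg at hcase
      have hγeq : γ i = β i := sup_eq_left.2 (le_trans (hcLb i) hcase.le)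
      rw [hγeq]
      have := Subtype.coe_le_coe.2 (hab i hi)
      simp only [sub_self]
      linarith [this]
  refine ⟨β, γ, K1, K2, L1, L2, hmidseq, hmidlen,
    ⟨hK1p, hK1o, hL1p, hL1le, le_trans hL1sum hsum1⟩,
    ⟨hK2p, hK2o, hL2p, hL2le, le_trans hL2sum hsum2⟩, ?_⟩
  -- per-term triangle inequality
  have htri : ∀ i ∈ Finset.range (k+1), |G (b i) - G (a i)| ≤
      |G (Y1 i) - G (a i)| + osc F (β i) (γ i) + |G (b i) - G (X2 i)| := by
    intro i hi
    have hik : i ≤ k := by have := Finset.mem_range.1 hi; omega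
    by_cases hcase : β i ≤ b i
    · have hβcb : β i ≤ cL E (b i) := (cL_spec hE h0 (b i)).2.2 (β i) (hβE i) hcase
      have hY1eq : Y1 i = β i := inf_eq_left.2 hcase
      have hX2eq : X2 i = cL E (b i) := by
        have : X2 i = cL E (b i) ⊔ Y1 i := rfl
        rw [this, hY1eq]
        exact sup_eq_left.2 hβcb
      have hγeq : γ i = cL E (b i) := sup_eq_right.2 hβcb
      have hmid : |G (X2 i) - G (Y1 i)| ≤ osc F (β i) (γ i) := by
        rw [hX2eq, hY1eq, hagree _ (cL_spec hE h0 (b i)).1, hagree _ (hβE i), hγeq]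
        rcases eq_or_lt_of_le hβcb with he | hlt
        · rw [← he]; simp
          exact osc_nonneg F _ _
        · exact abs_sub_le_osc F hlt ⟨hβcb, le_rfl⟩ ⟨le_rfl, hβcb⟩
      calc |G (b i) - G (a i)| ≤ |G (b i) - G (X2 i)| + |G (X2 i) - G (a i)| :=
            abs_sub_le _ _ _
        _ ≤ |G (b i) - G (X2 i)| + (|G (X2 i) - G (Y1 i)| + |G (Y1 i) - G (a i)|) := by
            linarith [abs_sub_le (G (X2 i)) (G (Y1 i)) (G (a i))]
        _ ≤ |G (Y1 i) - G (a i)| + osc F (β i) (γ i) + |G (b i) - G (X2 i)| := by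
            linarith [hmid]
    · push_neg at hcase
      have hY1eq : Y1 i = b i := inf_eq_right.2 hcase.le
      have hX2eq : X2 i = b i := by
        have : X2 i = cL E (b i) ⊔ Y1 i := rfl
        rw [this, hY1eq]
        exact sup_eq_right.2 (hcLb i)
      rw [hY1eq, hX2eq]
      simp only [sub_self, abs_zero]
      have := osc_nonneg F (β i) (γ i)
      linarith
  calc ∑ i ∈ Finset.range (k+1), |G (b i) - G (a i)|
      ≤ ∑ i ∈ Finset.range (k+1), (|G (Y1 i) - G (a i)| + osc F (β i) (γ i)
          + |G (b i) - G (X2 i)|) := Finset.sum_le_sum htri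
    _ = (∑ i ∈ Finset.range (k+1), |G (Y1 i) - G (a i)|)
        + (∑ i ∈ Finset.range (k+1), osc F (β i) (γ i))
        + (∑ i ∈ Finset.range (k+1), |G (b i) - G (X2 i)|) := by
        rw [← Finset.sum_add_distrib, ← Finset.sum_add_distrib]
    _ ≤ _ := by
        have hb1 := hbound1
        have hb2 := hbound2
        linarith [hb1, hb2]

end Decomp
section Enum

variable {F : CI} {E : Set unitInterval}

lemma enumK (h0 : (0:unitInterval) ∈ E) (F : CI) (K : Finset unitInterval)
    (D : unitInterval → unitInterval)
    (hK : ∀ x ∈ K, x ∈ E ∧ D x ∈ E ∧ x ≤ D x)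
    (hord : ∀ x ∈ K, ∀ y ∈ K, x < y → D x ≤ y) :
    ∃ (k : ℕ) (aa bb : ℕ → unitInterval), SeqOn E k aa bb ∧
      (∑ i ∈ Finset.range (k+1), osc F (aa i) (bb i) = ∑ x ∈ K, osc F x (D x)) ∧
      (∑ i ∈ Finset.range (k+1), ((bb i : ℝ) - aa i) = ∑ x ∈ K, ((D x : ℝ) - x)) := by
  classical
  rcases K.eq_empty_or_nonempty with rfl | hne
  · exact ⟨0, fun _ => 0, fun _ => 0, ⟨fun _ _ => h0, fun _ _ => h0, fun _ _ => le_rfl,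
      fun i hi => by omega⟩, by simp [osc_self F le_rfl], by simp⟩
  · set r := K.card with hr
    have hr1 : 1 ≤ r := Finset.card_pos.2 hne
    set e := K.orderIsoOfFin rfl with he
    set aa : ℕ → unitInterval := fun i => (e ⟨min i (r-1), by omega⟩ : unitInterval) with haa
    have haaK : ∀ i, aa i ∈ K := fun i => (e ⟨min i (r-1), by omega⟩).2
    set bb : ℕ → unitInterval := fun i => D (aa i) with hbb
    have hseq : SeqOn E (r-1) aa bb := by
      refine ⟨fun i _ => (hK _ (haaK i)).1, fun i _ => (hK _ (haaK i)).2.1,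
        fun i _ => (hK _ (haaK i)).2.2, fun i hi => ?_⟩
      have h1' : min i (r-1) = i := by omega
      have h2' : min (i+1) (r-1) = i + 1 := by omega
      have hlt : aa i < aa (i+1) := by
        have : (⟨min i (r-1), by omega⟩ : Fin r) < ⟨min (i+1) (r-1), by omega⟩ := by
          simp only [Fin.mk_lt_mk, h1', h2']; omega
        exact Subtype.coe_lt_coe.2 (e.strictMono this)
      exact hord _ (haaK i) _ (haaK (i+1)) hlt
    have hsumgen : ∀ g : unitInterval → ℝ,
        ∑ i ∈ Finset.range (r-1+1), g (aa i) = ∑ x ∈ K, g x := by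
      intro g
      have hrange : Finset.range (r - 1 + 1) = Finset.range r := by congr 1; omega
      rw [hrange]
      have hstep : ∀ i ∈ Finset.range r, g (aa i)
          = (fun i : ℕ => if hi : i < r then g (e ⟨i, hi⟩) else 0) i := by
        intro i hi
        have hi' := Finset.mem_range.1 hi
        have h1' : min i (r-1) = i := by omega
        simp only [dif_pos hi']
        have : (⟨min i (r-1), by omega⟩ : Fin r) = ⟨i, hi'⟩ := Fin.ext (by simpa using h1')
        rw [haa]
        simp only []
        rw [this]
      rw [Finset.sum_congr rfl hstep, ← Fin.sum_univ_eq_sum_range]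
      have hc := Equiv.sum_comp e.toEquiv (fun z : {x // x ∈ K} => g z)
      rw [← Finset.sum_coe_sort K g, ← hc]
      refine Finset.sum_congr rfl fun i _ => ?_
      simp only [dif_pos i.2]
      rfl
    exact ⟨r - 1, aa, bb, hseq, hsumgen (fun x => osc F x (D x)),
      hsumgen (fun x => (D x : ℝ) - x)⟩

lemma seq_len_le_one {k : ℕ} {a b : ℕ → unitInterval} {E : Set unitInterval}
    (hseq : SeqOn E k a b) :
    ∑ i ∈ Finset.range (k+1), ((b i : ℝ) - a i) ≤ 1 := by
  have := sum_len_le (n := k+1) (x := fun i => (a i : ℝ)) (y := fun i => (b i : ℝ))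
    (fun j hj => hseq.2.2.1 j (by omega)) (fun j hj => hseq.2.2.2 j (by omega))
    (zero_le_one) (le_refl (Finset.range (k+1)))
    (fun j _ => ⟨(a j).2.1, (b j).2.2⟩)
  simpa using this

lemma bucket (hE : IsClosed E) (h0 : (0:unitInterval) ∈ E)
    (hac : IsACStarOn F E) : IsVBStarOn F E := by
  classical
  obtain ⟨δ0, hδ0, hAC⟩ := hac 1 one_pos
  set h : ℝ := δ0 / 3 with hh
  have hh0 : 0 < h := by positivity
  set B0 : ℕ := ⌊1/h⌋₊ with hB0
  set M : ℝ := 2 * ‖F‖ with hM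
  have hM0 : 0 ≤ M := by positivity
  refine ⟨M * (3/δ0) + (B0 + 1) + 1, ?_⟩
  intro k a b hseq
  have hosc_nonneg : ∀ i ∈ Finset.range (k+1), 0 ≤ osc F (a i) (b i) :=
    fun i _ => osc_nonneg F _ _
  have hlen1 : ∑ i ∈ Finset.range (k+1), ((b i : ℝ) - a i) ≤ 1 := seq_len_le_one hseq
  set long := (Finset.range (k+1)).filter (fun i => h ≤ (b i : ℝ) - a i) with hlong
  set short := (Finset.range (k+1)).filter (fun i => ¬ h ≤ (b i : ℝ) - a i) with hshort
  have hsplit : ∑ i ∈ Finset.range (k+1), osc F (a i) (b i)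
      = (∑ i ∈ long, osc F (a i) (b i)) + (∑ i ∈ short, osc F (a i) (b i)) :=
    (Finset.sum_filter_add_sum_filter_not _ _ _).symm
  -- long part
  have hcard : (long.card : ℝ) * h ≤ 1 := by
    have h1' : ∑ i ∈ long, ((b i : ℝ) - a i) ≤ 1 := by
      refine le_trans (Finset.sum_le_sum_of_subset_of_nonneg (Finset.filter_subset _ _)
        fun i hi _ => ?_) hlen1
      have : (a i : ℝ) ≤ b i := hseq.2.2.1 i (by have := Finset.mem_range.1 hi; omega)
      linarith
    have h2' : (long.card : ℝ) * h ≤ ∑ i ∈ long, ((b i : ℝ) - a i) := by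
      have := Finset.card_nsmul_le_sum long (fun i => (b i : ℝ) - a i) h
        (fun i hi => (Finset.mem_filter.1 hi).2)
      rwa [nsmul_eq_mul] at this
    linarith
  have hlongsum : ∑ i ∈ long, osc F (a i) (b i) ≤ M * (3/δ0) := by
    have h1' : ∑ i ∈ long, osc F (a i) (b i) ≤ (long.card : ℝ) * M := by
      have := Finset.sum_le_card_nsmul long (fun i => osc F (a i) (b i)) M
        (fun i _ => osc_le_two_norm F _ _)
      rwa [nsmul_eq_mul] at this
    have h2' : (long.card : ℝ) ≤ 3/δ0 := by
      rw [le_div_iff₀ hδ0]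
      nlinarith [hcard]
    calc ∑ i ∈ long, osc F (a i) (b i) ≤ (long.card : ℝ) * M := h1'
      _ ≤ (3/δ0) * M := mul_le_mul_of_nonneg_right h2' hM0
      _ = M * (3/δ0) := by ring
  -- short part
  have hshortsum : ∑ i ∈ short, osc F (a i) (b i) ≤ (B0 + 1 : ℝ) := by
    set buck : ℕ → ℕ := fun i => ⌊(a i : ℝ) / h⌋₊ with hbuck
    have hmaps : ∀ i ∈ short, buck i ∈ Finset.range (B0 + 1) := by
      intro i _
      have h1' : (a i : ℝ) / h ≤ 1 / h := by
        gcongr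
        exact (a i).2.2
      have : buck i ≤ B0 := Nat.floor_mono h1'
      exact Finset.mem_range.2 (by omega)
    rw [← Finset.sum_fiberwise_of_maps_to hmaps (fun i => osc F (a i) (b i))]
    have hfiber : ∀ m ∈ Finset.range (B0 + 1),
        ∑ i ∈ short.filter (fun i => buck i = m), osc F (a i) (b i) ≤ 1 := by
      intro m _
      set fib := short.filter (fun i => buck i = m) with hfib
      have hfibsub : fib ⊆ Finset.range (k+1) :=
        le_trans (Finset.filter_subset _ _) (Finset.filter_subset _ _)
      have hfiblen : ∑ i ∈ fib, ((b i : ℝ) - a i) < δ0 := by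
        have hle : ∑ i ∈ fib, ((b i : ℝ) - a i) ≤ (m * h + 2*h) - m * h := by
          refine sum_len_le (n := k+1) (x := fun i => (a i : ℝ)) (y := fun i => (b i : ℝ))
            (fun j hj => hseq.2.2.1 j (by omega)) (fun j hj => hseq.2.2.2 j (by omega))
            (by linarith) hfibsub (fun j hj => ?_)
          obtain ⟨hjs, hjm⟩ := Finset.mem_filter.1 hj
          obtain ⟨hjr, hjshort⟩ := Finset.mem_filter.1 hjs
          have hfl : (m : ℝ) ≤ (a j : ℝ) / h ∧ (a j : ℝ) / h < m + 1 := by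
            have := (Nat.floor_eq_iff (div_nonneg (a j).2.1 hh0.le)).1 hjm
            exact_mod_cast this
          have ham : (m:ℝ) * h ≤ (a j : ℝ) := (le_div_iff₀ hh0).1 hfl.1
          have ham2 : (a j : ℝ) < ((m:ℝ) + 1) * h := (div_lt_iff₀ hh0).1 hfl.2
          have hbj : (b j : ℝ) - a j < h := by
            have := not_le.1 hjshort
            linarith
          constructor
          · exact ham
          · linarith
        have : (2:ℝ)*h < δ0 := by rw [hh]; linarith
        linarith
      obtain ⟨k', a', b', hseq', hsums⟩ := hseq.subfamily h0 fib hfibsub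
      have hosceq := hsums (fun u v => osc F u v) (osc_self F le_rfl)
      have hleneq := hsums (fun u v => (v : ℝ) - u) (by simp)
      have := hAC k' a' b' hseq' (by rw [hleneq]; exact hfiblen)
      rw [← hosceq]
      exact this.le
    calc ∑ m ∈ Finset.range (B0+1), ∑ i ∈ short.filter (fun i => buck i = m),
          osc F (a i) (b i) ≤ ∑ m ∈ Finset.range (B0+1), (1:ℝ) :=
        Finset.sum_le_sum hfiber
      _ = (B0 + 1 : ℝ) := by simp
  rw [hsplit]
  have : (0:ℝ) < 1 := one_pos
  linarith [hlongsum, hshortsum]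

end Enum
section Main

variable {F G : CI} {E : Set unitInterval}

lemma famVB (h0 : (0:unitInterval) ∈ E) {N : ℝ}
    (hVB : ∀ (k : ℕ) (aa bb : ℕ → unitInterval), SeqOn E k aa bb →
      ∑ i ∈ Finset.range (k+1), osc F (aa i) (bb i) < N)
    {S : ℝ} {K : Finset unitInterval} {L : unitInterval → ℝ} (hg : KGood E S K L) :
    ∑ x ∈ K, 9 * osc F x (DE E x) * (L x / ((DE E x : ℝ) - x)) ≤ 9 * N := by
  obtain ⟨hKp, hKo, hL0, hLle, -⟩ := hg
  have hterm : ∀ x ∈ K, 9 * osc F x (DE E x) * (L x / ((DE E x : ℝ) - x))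
      ≤ 9 * osc F x (DE E x) := by
    intro x hx
    have hlen : (0:ℝ) < (DE E x : ℝ) - x := by
      have := (hKp x hx).2.2.1
      exact sub_pos.2 (by exact_mod_cast this)
    have hratio : L x / ((DE E x : ℝ) - x) ≤ 1 := (div_le_one hlen).2 (hLle x hx)
    have h9 : (0:ℝ) ≤ 9 * osc F x (DE E x) := by
      have := osc_nonneg F x (DE E x); linarith
    calc 9 * osc F x (DE E x) * (L x / ((DE E x : ℝ) - x))
        ≤ 9 * osc F x (DE E x) * 1 := mul_le_mul_of_nonneg_left hratio h9
      _ = 9 * osc F x (DE E x) := mul_one _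
  have hsum : ∑ x ∈ K, osc F x (DE E x) ≤ N := by
    obtain ⟨k', aa, bb, hseq', hosceq, -⟩ := enumK h0 F K (DE E)
      (fun x hx => ⟨(hKp x hx).1, (hKp x hx).2.1, (hKp x hx).2.2.1.le⟩) hKo
    rw [← hosceq]
    exact (hVB k' aa bb hseq').le
  calc ∑ x ∈ K, 9 * osc F x (DE E x) * (L x / ((DE E x : ℝ) - x))
      ≤ ∑ x ∈ K, 9 * osc F x (DE E x) := Finset.sum_le_sum hterm
    _ = 9 * ∑ x ∈ K, osc F x (DE E x) := by rw [Finset.mul_sum]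
    _ ≤ 9 * N := by linarith [hsum]

lemma famAC (h0 : (0:unitInterval) ∈ E) {N : ℝ}
    (hVB : ∀ (k : ℕ) (aa bb : ℕ → unitInterval), SeqOn E k aa bb →
      ∑ i ∈ Finset.range (k+1), osc F (aa i) (bb i) < N)
    {ε2 δ2 : ℝ} (hε2 : 0 < ε2) (hδ2 : 0 < δ2)
    (hA2 : ∀ (k : ℕ) (aa bb : ℕ → unitInterval), SeqOn E k aa bb →
      (∑ i ∈ Finset.range (k+1), ((bb i : ℝ) - aa i)) < δ2 →
      ∑ i ∈ Finset.range (k+1), osc F (aa i) (bb i) < ε2)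
    {θ : ℝ} (hθ0 : 0 < θ)
    {S : ℝ} {K : Finset unitInterval} {L : unitInterval → ℝ}
    (hg : KGood E S K L) (hS : S < θ * δ2) :
    ∑ x ∈ K, 9 * osc F x (DE E x) * (L x / ((DE E x : ℝ) - x))
      ≤ 9 * ε2 + 9 * θ * N := by
  classical
  obtain ⟨hKp, hKo, hL0, hLle, hLS⟩ := hg
  have hlen : ∀ x ∈ K, (0:ℝ) < (DE E x : ℝ) - x := by
    intro x hx
    have := (hKp x hx).2.2.1
    exact sub_pos.2 (by exact_mod_cast this)
  set P : unitInterval → Prop := fun x => θ * ((DE E x : ℝ) - x) ≤ L x with hP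
  have hsplit := Finset.sum_filter_add_sum_filter_not K P
    (fun x => 9 * osc F x (DE E x) * (L x / ((DE E x : ℝ) - x)))
  set K1 := K.filter P with hK1
  set K2 := K.filter (fun x => ¬ P x) with hK2
  have hK1sub : K1 ⊆ K := Finset.filter_subset _ _
  have hK2sub : K2 ⊆ K := Finset.filter_subset _ _
  have hpart1 : ∑ x ∈ K1, 9 * osc F x (DE E x) * (L x / ((DE E x : ℝ) - x))
      ≤ 9 * ε2 := by
    have hterm : ∀ x ∈ K1, 9 * osc F x (DE E x) * (L x / ((DE E x : ℝ) - x))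
        ≤ 9 * osc F x (DE E x) := by
      intro x hx
      have hx' := hK1sub hx
      have hratio : L x / ((DE E x : ℝ) - x) ≤ 1 := (div_le_one (hlen x hx')).2 (hLle x hx')
      have h9 : (0:ℝ) ≤ 9 * osc F x (DE E x) := by
        have := osc_nonneg F x (DE E x); linarith
      calc 9 * osc F x (DE E x) * (L x / ((DE E x : ℝ) - x))
          ≤ 9 * osc F x (DE E x) * 1 := mul_le_mul_of_nonneg_left hratio h9
        _ = _ := mul_one _
    have hosum : ∑ x ∈ K1, osc F x (DE E x) ≤ ε2 := by
      obtain ⟨k', aa, bb, hseq', hosceq, hleneq⟩ := enumK h0 F K1 (DE E)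
        (fun x hx => ⟨(hKp x (hK1sub hx)).1, (hKp x (hK1sub hx)).2.1,
          (hKp x (hK1sub hx)).2.2.1.le⟩)
        (fun x hx y hy hxy => hKo x (hK1sub hx) y (hK1sub hy) hxy)
      have hlenK1 : ∑ x ∈ K1, ((DE E x : ℝ) - x) < δ2 := by
        have h1' : ∑ x ∈ K1, ((DE E x : ℝ) - x) ≤ ∑ x ∈ K1, L x / θ := by
          refine Finset.sum_le_sum fun x hx => ?_
          have := (Finset.mem_filter.1 hx).2
          rw [le_div_iff₀ hθ0]
          linarith [this]
        have h2' : ∑ x ∈ K1, L x / θ = (∑ x ∈ K1, L x) / θ := by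
          rw [Finset.sum_div]
        have h3' : ∑ x ∈ K1, L x ≤ ∑ x ∈ K, L x :=
          Finset.sum_le_sum_of_subset_of_nonneg hK1sub (fun x _ _ => hL0 x)
        have h4' : (∑ x ∈ K, L x) / θ < δ2 := by
          rw [div_lt_iff₀ hθ0]
          calc ∑ x ∈ K, L x ≤ S := hLS
            _ < θ * δ2 := hS
            _ = δ2 * θ := by ring
        calc ∑ x ∈ K1, ((DE E x : ℝ) - x) ≤ (∑ x ∈ K1, L x) / θ := by rw [← h2']; exact h1'
          _ ≤ (∑ x ∈ K, L x) / θ := by gcongr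
          _ < δ2 := h4'
      rw [← hosceq]
      refine (hA2 k' aa bb hseq' ?_).le
      rw [hleneq]
      exact hlenK1
    calc ∑ x ∈ K1, 9 * osc F x (DE E x) * (L x / ((DE E x : ℝ) - x))
        ≤ ∑ x ∈ K1, 9 * osc F x (DE E x) := Finset.sum_le_sum hterm
      _ = 9 * ∑ x ∈ K1, osc F x (DE E x) := by rw [Finset.mul_sum]
      _ ≤ 9 * ε2 := by linarith [hosum]
  have hpart2 : ∑ x ∈ K2, 9 * osc F x (DE E x) * (L x / ((DE E x : ℝ) - x))
      ≤ 9 * θ * N := by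
    have hterm : ∀ x ∈ K2, 9 * osc F x (DE E x) * (L x / ((DE E x : ℝ) - x))
        ≤ θ * (9 * osc F x (DE E x)) := by
      intro x hx
      have hx' := hK2sub hx
      have hnp : ¬ P x := (Finset.mem_filter.1 hx).2
      have hratio : L x / ((DE E x : ℝ) - x) ≤ θ := by
        rw [div_le_iff₀ (hlen x hx')]
        have hnp' : ¬ (θ * ((DE E x : ℝ) - x) ≤ L x) := hnp
        push_neg at hnp'
        linarith [hnp']
      have h9 : (0:ℝ) ≤ 9 * osc F x (DE E x) := by
        have := osc_nonneg F x (DE E x); linarith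
      calc 9 * osc F x (DE E x) * (L x / ((DE E x : ℝ) - x))
          ≤ 9 * osc F x (DE E x) * θ := mul_le_mul_of_nonneg_left hratio h9
        _ = θ * (9 * osc F x (DE E x)) := by ring
    have hosum : ∑ x ∈ K2, osc F x (DE E x) ≤ N := by
      obtain ⟨k', aa, bb, hseq', hosceq, -⟩ := enumK h0 F K2 (DE E)
        (fun x hx => ⟨(hKp x (hK2sub hx)).1, (hKp x (hK2sub hx)).2.1,
          (hKp x (hK2sub hx)).2.2.1.le⟩)
        (fun x hx y hy hxy => hKo x (hK2sub hx) y (hK2sub hy) hxy)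
      rw [← hosceq]
      exact (hVB k' aa bb hseq').le
    have hosum0 : ∀ x ∈ K2, (0:ℝ) ≤ 9 * osc F x (DE E x) := fun x _ => by
      have := osc_nonneg F x (DE E x); linarith
    calc ∑ x ∈ K2, 9 * osc F x (DE E x) * (L x / ((DE E x : ℝ) - x))
        ≤ ∑ x ∈ K2, θ * (9 * osc F x (DE E x)) := Finset.sum_le_sum hterm
      _ = θ * (9 * ∑ x ∈ K2, osc F x (DE E x)) := by
          rw [← Finset.mul_sum, ← Finset.mul_sum]
      _ ≤ θ * (9 * N) := by
          have h9N : 9 * ∑ x ∈ K2, osc F x (DE E x) ≤ 9 * N := by linarith [hosum]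
          exact mul_le_mul_of_nonneg_left h9N hθ0.le
      _ = 9 * θ * N := by ring
  calc ∑ x ∈ K, 9 * osc F x (DE E x) * (L x / ((DE E x : ℝ) - x))
      = (∑ x ∈ K1, 9 * osc F x (DE E x) * (L x / ((DE E x : ℝ) - x)))
        + ∑ x ∈ K2, 9 * osc F x (DE E x) * (L x / ((DE E x : ℝ) - x)) := hsplit.symm
    _ ≤ 9 * ε2 + 9 * θ * N := add_le_add hpart1 hpart2

lemma vbstar_pos {N : ℝ} (h0 : (0:unitInterval) ∈ E)
    (hN : ∀ (k : ℕ) (aa bb : ℕ → unitInterval), SeqOn E k aa bb →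
      ∑ i ∈ Finset.range (k+1), osc F (aa i) (bb i) < N) : 0 < N := by
  have := hN 0 (fun _ => 0) (fun _ => 0)
    ⟨fun _ _ => h0, fun _ _ => h0, fun _ _ => le_rfl, fun i hi => by omega⟩
  simpa [osc_self F le_rfl] using this

lemma forward_VB (hE : IsClosed E) (h0 : (0:unitInterval) ∈ E) (h1 : (1:unitInterval) ∈ E)
    (hagree : ∀ x ∈ E, G x = F x) (hsh : ShapeH F G E)
    (hF : IsVBStarOn F E) : IsVBOn G Set.univ := by
  obtain ⟨N, hN⟩ := hF
  refine ⟨19 * N, ?_⟩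
  intro k a b hseq
  obtain ⟨β, γ, K1, K2, L1, L2, hmid, hmidlen, hg1, hg2, hineq⟩ :=
    decomp hE h0 h1 hagree hsh hseq
  have hmidsum : ∑ i ∈ Finset.range (k+1), osc F (β i) (γ i) < N := hN k β γ hmid
  have hf1 := famVB h0 hN hg1
  have hf2 := famVB h0 hN hg2
  calc ∑ i ∈ Finset.range (k+1), |G (b i) - G (a i)| ≤ _ := hineq
    _ < 19 * N := by linarith [hmidsum, hf1, hf2]

lemma forward_AC (hE : IsClosed E) (h0 : (0:unitInterval) ∈ E) (h1 : (1:unitInterval) ∈ E)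
    (hagree : ∀ x ∈ E, G x = F x) (hsh : ShapeH F G E)
    (hac : IsACStarOn F E) : IsACOn G Set.univ := by
  obtain ⟨N, hN⟩ := bucket hE h0 hac
  have hN0 : 0 < N := vbstar_pos h0 hN
  intro ε hε
  obtain ⟨δ1, hδ1, hA1⟩ := hac (ε/5) (by positivity)
  obtain ⟨δ2, hδ2, hA2⟩ := hac (ε/45) (by positivity)
  set θ : ℝ := min 1 (ε/5/(9*N)) with hθ
  have hθ0 : 0 < θ := lt_min one_pos (by positivity)
  have hθN : 9 * θ * N ≤ ε/5 := by
    have h1' : θ ≤ ε/5/(9*N) := min_le_right _ _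
    have h2' : 9 * θ * N = θ * (9 * N) := by ring
    rw [h2']
    calc θ * (9*N) ≤ (ε/5/(9*N)) * (9*N) :=
        mul_le_mul_of_nonneg_right h1' (by positivity)
      _ = ε/5 := div_mul_cancel₀ _ (by positivity)
  refine ⟨min δ1 (θ*δ2), lt_min hδ1 (by positivity), ?_⟩
  intro k a b hseq hlen
  obtain ⟨β, γ, K1, K2, L1, L2, hmid, hmidlen, hg1, hg2, hineq⟩ :=
    decomp hE h0 h1 hagree hsh hseq
  have hmidsum : ∑ i ∈ Finset.range (k+1), osc F (β i) (γ i) < ε/5 := by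
    refine hA1 k β γ hmid ?_
    have h1' : ∑ i ∈ Finset.range (k+1), ((γ i : ℝ) - β i)
        ≤ ∑ i ∈ Finset.range (k+1), ((b i : ℝ) - a i) := by
      refine Finset.sum_le_sum fun i hi => ?_
      exact hmidlen i (by have := Finset.mem_range.1 hi; omega)
    calc ∑ i ∈ Finset.range (k+1), ((γ i : ℝ) - β i) ≤ _ := h1'
      _ < min δ1 (θ*δ2) := hlen
      _ ≤ δ1 := min_le_left _ _
  have hS : ∑ i ∈ Finset.range (k+1), ((b i : ℝ) - a i) < θ * δ2 :=
    lt_of_lt_of_le hlen (min_le_right _ _)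
  have hf1 := famAC h0 hN (by positivity : (0:ℝ) < ε/45) hδ2 hA2 hθ0 hg1 hS
  have hf2 := famAC h0 hN (by positivity : (0:ℝ) < ε/45) hδ2 hA2 hθ0 hg2 hS
  have hnum : 9 * (ε/45) = ε/5 := by ring
  rw [hnum] at hf1 hf2
  calc ∑ i ∈ Finset.range (k+1), |G (b i) - G (a i)| ≤ _ := hineq
    _ < ε := by linarith [hmidsum, hf1, hf2, hθN]

lemma backward_VB (hE : IsClosed E) (h0 : (0:unitInterval) ∈ E) (h1 : (1:unitInterval) ∈ E)
    (hagree : ∀ x ∈ E, G x = F x) (hsh : ShapeH F G E)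
    (hG : IsVBOn G Set.univ) : IsVBStarOn F E := by
  obtain ⟨N, hN⟩ := hG
  refine ⟨N, ?_⟩
  intro k a b hseq
  obtain ⟨p, q, hseqU, hosc, -⟩ := backward_core hE h0 h1 hagree hsh hseq
  calc ∑ i ∈ Finset.range (k+1), osc F (a i) (b i)
      ≤ ∑ i ∈ Finset.range (k+1), |G (q i) - G (p i)| := by
        refine Finset.sum_le_sum fun i hi => ?_
        exact hosc i (by have := Finset.mem_range.1 hi; omega)
    _ < N := hN k p q hseqU

lemma backward_AC (hE : IsClosed E) (h0 : (0:unitInterval) ∈ E) (h1 : (1:unitInterval) ∈ E)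
    (hagree : ∀ x ∈ E, G x = F x) (hsh : ShapeH F G E)
    (hG : IsACOn G Set.univ) : IsACStarOn F E := by
  intro ε hε
  obtain ⟨δ, hδ, hGd⟩ := hG ε hε
  refine ⟨δ, hδ, ?_⟩
  intro k a b hseq hlen
  obtain ⟨p, q, hseqU, hosc, hbnd⟩ := backward_core hE h0 h1 hagree hsh hseq
  have hlen' : ∑ i ∈ Finset.range (k+1), ((q i : ℝ) - p i) < δ := by
    refine lt_of_le_of_lt (Finset.sum_le_sum fun i hi => ?_) hlen
    have hik : i ≤ k := by have := Finset.mem_range.1 hi; omega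
    obtain ⟨h1', h2'⟩ := hbnd i hik
    linarith
  calc ∑ i ∈ Finset.range (k+1), osc F (a i) (b i)
      ≤ ∑ i ∈ Finset.range (k+1), |G (q i) - G (p i)| := by
        refine Finset.sum_le_sum fun i hi => ?_
        exact hosc i (by have := Finset.mem_range.1 hi; omega)
    _ < ε := hGd k p q hseqU hlen'

end Main

/-- If `G = F_{E,*}` agrees with `F` on the closed set `E ∋ 0,1` and on every connected
component `(c,d)` of the complement of `E` takes the value `sup F([c,d])` at `(2c+d)/3`, the
value `inf F([c,d])` at `(c+2d)/3`, and is affine on the three corresponding subintervals,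
then `F` is VB_* (resp. AC_*) on `E` iff `G` is VB (resp. AC) on `[0,1]`. -/
theorem vbstar_acstar_iff_linearized (F G : CI) (E : Set unitInterval) (hE : IsClosed E)
    (h0 : (0 : unitInterval) ∈ E) (h1 : (1 : unitInterval) ∈ E)
    (hagree : ∀ x ∈ E, G x = F x)
    (hshape : ∀ c d : unitInterval, c ∈ E → d ∈ E → c < d → Set.Ioo c d ∩ E = ∅ →
      (∀ x : unitInterval, (x : ℝ) = (2 * (c : ℝ) + (d : ℝ)) / 3 →
        G x = sSup (F '' Set.Icc c d)) ∧
      (∀ x : unitInterval, (x : ℝ) = ((c : ℝ) + 2 * (d : ℝ)) / 3 →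
        G x = sInf (F '' Set.Icc c d)) ∧
      (∃ m q : ℝ, ∀ x ∈ Set.Icc c d, (x : ℝ) ≤ (2 * (c : ℝ) + (d : ℝ)) / 3 →
        G x = m * (x : ℝ) + q) ∧
      (∃ m q : ℝ, ∀ x ∈ Set.Icc c d, (2 * (c : ℝ) + (d : ℝ)) / 3 ≤ (x : ℝ) →
        (x : ℝ) ≤ ((c : ℝ) + 2 * (d : ℝ)) / 3 → G x = m * (x : ℝ) + q) ∧
      (∃ m q : ℝ, ∀ x ∈ Set.Icc c d, ((c : ℝ) + 2 * (d : ℝ)) / 3 ≤ (x : ℝ) →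
        G x = m * (x : ℝ) + q)) :
    (IsVBStarOn F E ↔ IsVBOn G Set.univ) ∧ (IsACStarOn F E ↔ IsACOn G Set.univ) := by
  have hsh : ShapeH F G E := hshape
  exact ⟨⟨fun hF => forward_VB hE h0 h1 hagree hsh hF,
          fun hG => backward_VB hE h0 h1 hagree hsh hG⟩,
         ⟨fun hF => forward_AC hE h0 h1 hagree hsh hF,
          fun hG => backward_AC hE h0 h1 hagree hsh hG⟩⟩
end
end

section
/- The set BV = {F ∈ C(I) : F is VB on [0,1]} of continuous functions of bounded variation is Σ⁰₂-complete: BV is an Fσ subset of C(I) (a countable union of closed sets), and for every Fσ set B ⊆ ℕ^ℕ there is a continuous map g : ℕ^ℕ → C(I) with g⁻¹(BV) = B. -/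
open Set MeasureTheory Topology

noncomputable section

/-- `A` is Fσ: a countable union of closed sets. -/
def IsFSigma {X : Type*} [TopologicalSpace X] (A : Set X) : Prop :=
  ∃ C : ℕ → Set X, (∀ n, IsClosed (C n)) ∧ A = ⋃ n, C n

/-!
`{F | IsVBOn F univ}` is the union over `N` of the closed sets of functions all of whose variation
sums are at most `N`.

For hardness write `B = ⋃ₙ Dₙ` with `Dₙ` closed and increasing, and let `rₖ(x)` be the least `n`
such that the length-`k` prefix of `x` extends to a point of `Dₙ` (capped at `k`). Then `rₖ(x)` is
non-decreasing in `k`, depends only on `x` below `k`, and is bounded exactly when `x ∈ B`, because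
the `Dₙ` are closed. So `x ∈ B` iff the continuous `0`-`1` sequence `cₖ(x) = [rₖ₊₁(x) ≠ rₖ(x)]`
is eventually zero. Put `g x = ∑ₖ cₖ(x) ψₖ`, where `ψₖ` is a sawtooth on the `k`-th dyadic block
`[1 - 2⁻ᵏ, 1 - 2⁻ᵏ⁻¹]` of sup norm `2⁻ᵏ⁻¹` and variation `2ᵏ`: a finite sum of the `ψₖ` is
Lipschitz, while infinitely many of them give unbounded variation.
-/

open Filter

lemma sum_sub_le_sub_of_chain (k : ℕ) {a b : ℕ → ℝ} (hba : ∀ i < k, b i ≤ a (i + 1)) :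
    ∑ i ∈ Finset.range (k + 1), (b i - a i) ≤ b k - a 0 := by
  induction k with
  | zero => simp
  | succ k ih =>
    rw [Finset.sum_range_succ]
    linarith [ih fun i hi => hba i (by omega), hba k (by omega)]

lemma isVBOn_of_lipschitzWith {F : CI} {K : NNReal} (hF : LipschitzWith K F)
    (E : Set unitInterval) : IsVBOn F E := by
  refine ⟨K + 1, fun k a b ⟨_, _, hab, hba⟩ => ?_⟩
  calc ∑ i ∈ Finset.range (k + 1), |F (b i) - F (a i)|
      ≤ ∑ i ∈ Finset.range (k + 1), K * ((b i : ℝ) - a i) := by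
        refine Finset.sum_le_sum fun i hi => ?_
        have := hF.dist_le_mul (b i) (a i)
        have hle : (a i : ℝ) ≤ b i := hab i (Finset.mem_range_succ_iff.1 hi)
        rwa [Real.dist_eq, Subtype.dist_eq, Real.dist_eq, abs_of_nonneg (sub_nonneg.2 hle)] at this
    _ = K * ∑ i ∈ Finset.range (k + 1), ((b i : ℝ) - a i) := (Finset.mul_sum ..).symm
    _ ≤ K * 1 := by
        gcongr
        linarith [sum_sub_le_sub_of_chain k (a := fun i => (a i : ℝ)) (b := fun i => (b i : ℝ)) hba,
          (b k).2.2, (a 0).2.1]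
    _ < K + 1 := by linarith

lemma isVBOn_zero (E : Set unitInterval) : IsVBOn 0 E :=
  ⟨1, fun k a b _ => by simp⟩

lemma IsVBOn.add {F G : CI} {E : Set unitInterval} (hF : IsVBOn F E) (hG : IsVBOn G E) :
    IsVBOn (F + G) E := by
  obtain ⟨M, hM⟩ := hF
  obtain ⟨N, hN⟩ := hG
  refine ⟨M + N, fun k a b hab => ?_⟩
  calc ∑ i ∈ Finset.range (k + 1), |(F + G) (b i) - (F + G) (a i)|
      ≤ ∑ i ∈ Finset.range (k + 1), (|F (b i) - F (a i)| + |G (b i) - G (a i)|) :=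
        Finset.sum_le_sum fun i _ => by
          simpa only [ContinuousMap.add_apply, add_sub_add_comm] using abs_add_le _ _
    _ < M + N := by rw [Finset.sum_add_distrib]; exact add_lt_add (hM k a b hab) (hN k a b hab)

lemma IsVBOn.const_smul {F : CI} {E : Set unitInterval} (hF : IsVBOn F E) (c : ℝ) :
    IsVBOn (c • F) E := by
  obtain ⟨N, hN⟩ := hF
  refine ⟨|c| * N + 1, fun k a b hab => ?_⟩
  have : ∑ i ∈ Finset.range (k + 1), |(c • F) (b i) - (c • F) (a i)|
      = |c| * ∑ i ∈ Finset.range (k + 1), |F (b i) - F (a i)| := by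
    simp only [ContinuousMap.smul_apply, smul_eq_mul, ← mul_sub, abs_mul, Finset.mul_sum]
  rw [this]
  exact (mul_le_mul_of_nonneg_left (hN k a b hab).le (abs_nonneg c)).trans_lt (lt_add_one _)

lemma isVBOn_finset_sum {ι : Type*} (s : Finset ι) {F : ι → CI} {E : Set unitInterval}
    (hF : ∀ i ∈ s, IsVBOn (F i) E) : IsVBOn (∑ i ∈ s, F i) E :=
  Finset.sum_induction F (IsVBOn · E) (fun _ _ => IsVBOn.add) (isVBOn_zero E) hF

lemma isFSigma_setOf_isVBOn (E : Set unitInterval) : IsFSigma {F : CI | IsVBOn F E} := by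
  refine ⟨fun n => {F : CI | ∀ k a b, SeqOn E k a b →
      ∑ i ∈ Finset.range (k + 1), |F (b i) - F (a i)| ≤ n}, fun n => ?_, ?_⟩
  · simp only [ofPred_forall]
    refine isClosed_iInter fun k => isClosed_iInter fun a => isClosed_iInter fun b =>
      isClosed_iInter fun _ => isClosed_le ?_ continuous_const
    exact continuous_finsetSum _ fun i _ =>
      ((continuous_eval_const (b i)).sub (continuous_eval_const (a i))).abs
  · ext F
    simp only [mem_ofPred_eq, mem_iUnion]
    constructor
    · rintro ⟨N, hN⟩
      exact ⟨⌈N⌉₊, fun k a b h => (hN k a b h).le.trans (Nat.le_ceil N)⟩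
    · rintro ⟨n, hn⟩
      exact ⟨n + 1, fun k a b h => (hn k a b h).trans_lt (lt_add_one _)⟩

section Reduction

open PiNat

variable {α : Type*} (D : ℕ → Set (ℕ → α))

def cylinderRank (k : ℕ) (x : ℕ → α) : ℕ :=
  sInf (insert k {n | (D n ∩ cylinder x k).Nonempty})

variable {D}

lemma cylinderRank_le_self (k : ℕ) (x : ℕ → α) : cylinderRank D k x ≤ k :=
  Nat.sInf_le (mem_insert _ _)

lemma cylinderRank_le_of_mem {n : ℕ} {x : ℕ → α} (hx : x ∈ D n) (k : ℕ) :
    cylinderRank D k x ≤ n :=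
  Nat.sInf_le (mem_insert_of_mem _ ⟨x, hx, self_mem_cylinder x k⟩)

lemma monotone_cylinderRank (x : ℕ → α) : Monotone (cylinderRank D · x) := by
  intro k l hkl
  refine le_csInf ⟨l, mem_insert _ _⟩ ?_
  rintro n (rfl | ⟨y, hyD, hy⟩)
  · exact (cylinderRank_le_self k x).trans hkl
  · exact Nat.sInf_le (mem_insert_of_mem _ ⟨y, hyD, cylinder_anti x hkl hy⟩)

lemma cylinderRank_eq_of_mem_cylinder {k : ℕ} {x y : ℕ → α} (hy : y ∈ cylinder x k) :
    cylinderRank D k y = cylinderRank D k x := by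
  rw [cylinderRank, cylinderRank, mem_cylinder_iff_eq.1 hy]

lemma nonempty_inter_cylinder_of_cylinderRank_lt {k : ℕ} {x : ℕ → α}
    (h : cylinderRank D k x < k) : (D (cylinderRank D k x) ∩ cylinder x k).Nonempty :=
  (Nat.sInf_mem (insert_nonempty _ _)).resolve_left h.ne

lemma mem_of_cylinderRank_le [TopologicalSpace α] [DiscreteTopology α] (hD : Monotone D)
    {n : ℕ} (hDn : IsClosed (D n)) {x : ℕ → α} (h : ∀ k, cylinderRank D k x ≤ n) : x ∈ D n := by
  by_contra hx
  obtain ⟨m, hm⟩ := exists_disjoint_cylinder hDn hx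
  have hlt : cylinderRank D (max m (n + 1)) x < max m (n + 1) := (h _).trans_lt (by omega)
  obtain ⟨y, hyD, hy⟩ := nonempty_inter_cylinder_of_cylinderRank_lt hlt
  exact hm.ne_of_mem (hD (h _) hyD) (cylinder_anti x (le_max_left _ _) hy) rfl

variable [TopologicalSpace α] [DiscreteTopology α]

lemma isLocallyConstant_cylinderRank (k : ℕ) : IsLocallyConstant (cylinderRank D k) :=
  (IsLocallyConstant.iff_exists_open _).2 fun x =>
    ⟨cylinder x k, isOpen_cylinder _ x k, self_mem_cylinder x k,
      fun _ => cylinderRank_eq_of_mem_cylinder⟩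

lemma mem_iUnion_iff_eventually_cylinderRank_succ_eq (hD : Monotone D)
    (hDc : ∀ n, IsClosed (D n)) (x : ℕ → α) :
    x ∈ ⋃ n, D n ↔ ∀ᶠ k in atTop, cylinderRank D (k + 1) x = cylinderRank D k x := by
  constructor
  · rintro ⟨_, ⟨n, rfl⟩, hx⟩
    have hlim := tendsto_atTop_ciSup (monotone_cylinderRank x)
      ⟨n, forall_mem_range.2 (cylinderRank_le_of_mem hx)⟩
    rw [nhds_discrete, tendsto_pure] at hlim
    obtain ⟨K, hK⟩ := eventually_atTop.1 hlim
    exact eventually_atTop.2 ⟨K, fun k hk => (hK _ (by omega)).trans (hK k hk).symm⟩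
  · intro h
    obtain ⟨K, hK⟩ := eventually_atTop.1 h
    have hstable : ∀ k, K ≤ k → cylinderRank D k x = cylinderRank D K x :=
      Nat.le_induction rfl fun k hk ih => (hK k hk).trans ih
    refine mem_iUnion.2 ⟨cylinderRank D K x, mem_of_cylinderRank_le hD (hDc _) fun k => ?_⟩
    rcases le_total k K with hk | hk
    · exact monotone_cylinderRank x hk
    · exact (hstable k hk).le

theorem IsFSigma.exists_reduction_eventually_zero {B : Set (ℕ → α)} (hB : IsFSigma B) :
    ∃ c : ℕ → (ℕ → α) → ℝ, (∀ k, Continuous (c k)) ∧ (∀ k x, c k x = 0 ∨ c k x = 1) ∧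
      ∀ x, x ∈ B ↔ ∀ᶠ k in atTop, c k x = 0 := by
  obtain ⟨C, hC, rfl⟩ := hB
  have hclosed : ∀ n, IsClosed (accumulate C n) := fun n => by
    rw [accumulate_def]
    exact (finite_Iic n).isClosed_biUnion fun m _ => hC m
  refine ⟨fun k x => if cylinderRank (accumulate C) (k + 1) x = cylinderRank (accumulate C) k x
      then 0 else 1, fun k => ?_, fun k x => ?_, fun x => ?_⟩
  · exact ((isLocallyConstant_cylinderRank (k + 1)).comp₂ (isLocallyConstant_cylinderRank k)
      fun a b => if a = b then (0 : ℝ) else 1).continuous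
  · dsimp only
    split_ifs <;> simp
  · rw [← iUnion_accumulate,
      mem_iUnion_iff_eventually_cylinderRank_succ_eq monotone_accumulate hclosed]
    refine eventually_congr (.of_forall fun k => ?_)
    dsimp only
    split_ifs <;> simp_all

end Reduction

def distToInt (s : ℝ) : ℝ := Metric.infDist s (range ((↑) : ℤ → ℝ))

lemma lipschitzWith_distToInt : LipschitzWith 1 distToInt :=
  Metric.lipschitz_infDist_pt _

lemma distToInt_nonneg (s : ℝ) : 0 ≤ distToInt s := Metric.infDist_nonneg

lemma distToInt_le_half (s : ℝ) : distToInt s ≤ 1 / 2 :=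
  (Metric.infDist_le_dist_of_mem (mem_range_self (round s))).trans (abs_sub_round s)

lemma distToInt_intCast (z : ℤ) : distToInt z = 0 :=
  Metric.infDist_zero_of_mem (mem_range_self z)

lemma distToInt_intCast_add_half (z : ℤ) : distToInt (z + 1 / 2) = 1 / 2 := by
  refine le_antisymm (distToInt_le_half _) ((Metric.le_infDist (range_nonempty _)).2 ?_)
  rintro _ ⟨m, rfl⟩
  rw [Real.dist_eq]
  rcases le_or_gt m z with hm | hm
  · have : (m : ℝ) ≤ z := by exact_mod_cast hm
    rw [abs_of_nonneg (by linarith)]; linarith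
  · have : (z : ℝ) + 1 ≤ m := by exact_mod_cast hm
    rw [abs_of_nonpos (by linarith)]; linarith

def blockStart (k : ℕ) : ℝ := 1 - (1 / 2) ^ k

lemma blockStart_succ (k : ℕ) : blockStart (k + 1) = blockStart k + (1 / 2) ^ (k + 1) := by
  simp only [blockStart, pow_succ]; ring

lemma blockStart_mono : Monotone blockStart := fun _ _ h =>
  sub_le_sub_left (pow_le_pow_of_le_one (by norm_num) (by norm_num) h) 1

lemma blockStart_nonneg (k : ℕ) : 0 ≤ blockStart k :=
  sub_nonneg.2 (pow_le_one₀ (by norm_num) (by norm_num))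

lemma blockStart_le_one (k : ℕ) : blockStart k ≤ 1 :=
  sub_le_self 1 (by positivity)

/-- `4 ^ k` teeth of height `2⁻ᵏ⁻¹` on the block `[blockStart k, blockStart (k + 1)]`, zero outside
it: sup norm `2⁻ᵏ⁻¹` but variation `2 ^ k`. -/
def bump (k : ℕ) (t : ℝ) : ℝ :=
  (1 / 2) ^ k * distToInt (4 ^ k * projIcc (0 : ℝ) 1 zero_le_one (2 ^ (k + 1) * (t - blockStart k)))

lemma lipschitzWith_bump (k : ℕ) : ∃ K, LipschitzWith K (bump k) :=
  ⟨_, (lipschitzWith_smul ((1 / 2 : ℝ) ^ k)).comp <| lipschitzWith_distToInt.comp <|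
    (lipschitzWith_smul ((4 : ℝ) ^ k)).comp <| (LipschitzWith.subtype_val _).comp <|
    (LipschitzWith.projIcc zero_le_one).comp <| (lipschitzWith_smul ((2 : ℝ) ^ (k + 1))).comp <|
    (IsometryEquiv.subRight (blockStart k)).isometry.lipschitz⟩

lemma abs_bump_le (k : ℕ) (t : ℝ) : |bump k t| ≤ (1 / 2) ^ k := by
  rw [bump, abs_of_nonneg (mul_nonneg (by positivity) (distToInt_nonneg _))]
  exact mul_le_of_le_one_right (by positivity) ((distToInt_le_half _).trans (by norm_num))

lemma bump_eq_zero_of_le_blockStart {k : ℕ} {t : ℝ} (ht : t ≤ blockStart k) : bump k t = 0 := by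
  rw [bump, projIcc_of_le_left _ (mul_nonpos_of_nonneg_of_nonpos (by positivity) (by linarith))]
  simpa using distToInt_intCast 0

lemma bump_eq_zero_of_blockStart_succ_le {k : ℕ} {t : ℝ} (ht : blockStart (k + 1) ≤ t) :
    bump k t = 0 := by
  have : 1 ≤ 2 ^ (k + 1) * (t - blockStart k) := by
    rw [blockStart_succ] at ht
    calc (1 : ℝ) = 2 ^ (k + 1) * (1 / 2) ^ (k + 1) := by rw [← mul_pow]; norm_num
      _ ≤ _ := by gcongr; linarith
  rw [bump, projIcc_of_right_le _ this]
  simpa using distToInt_intCast (4 ^ k)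

lemma bump_eq_zero_of_ne {j k : ℕ} (hjk : j ≠ k) {t : ℝ}
    (ht : t ∈ Icc (blockStart k) (blockStart (k + 1))) : bump j t = 0 := by
  rcases hjk.lt_or_gt with h | h
  · exact bump_eq_zero_of_blockStart_succ_le ((blockStart_mono h).trans ht.1)
  · exact bump_eq_zero_of_le_blockStart (ht.2.trans (blockStart_mono h))

lemma bump_blockStart_add (k : ℕ) {c : ℝ} (hc : c ∈ Icc (0 : ℝ) 1) :
    bump k (blockStart k + c * (1 / 2) ^ (k + 1)) = (1 / 2) ^ k * distToInt (4 ^ k * c) := by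
  have : 2 ^ (k + 1) * (blockStart k + c * (1 / 2) ^ (k + 1) - blockStart k) = c := by
    rw [add_sub_cancel_left, mul_left_comm, ← mul_pow]; norm_num
  rw [bump, this, projIcc_of_mem _ hc]

/-- For `j ≤ 2 * 4 ^ k` these are equally spaced points of block `k`; `projIcc` only makes the
map total, so that it can index a `SeqOn`. -/
def blockNode (k j : ℕ) : unitInterval :=
  projIcc 0 1 zero_le_one (blockStart k + j / (2 * 4 ^ k) * (1 / 2) ^ (k + 1))

lemma monotone_blockNode (k : ℕ) : Monotone (blockNode k) := fun i j hij =>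
  monotone_projIcc _ <| by gcongr

lemma div_two_mul_four_pow_mem_unitInterval {k j : ℕ} (hj : j ≤ 2 * 4 ^ k) :
    (j / (2 * 4 ^ k) : ℝ) ∈ Icc (0 : ℝ) 1 :=
  ⟨by positivity, div_le_one_of_le₀ (by exact_mod_cast hj) (by positivity)⟩

lemma blockStart_add_mem_block (k : ℕ) {c : ℝ} (hc : c ∈ Icc (0 : ℝ) 1) :
    blockStart k + c * (1 / 2) ^ (k + 1) ∈ Icc (blockStart k) (blockStart (k + 1)) := by
  rw [blockStart_succ]
  constructor
  · have : 0 ≤ c * (1 / 2) ^ (k + 1) := mul_nonneg hc.1 (by positivity)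
    linarith
  · gcongr
    exact mul_le_of_le_one_left (by positivity) hc.2

lemma coe_blockNode {k j : ℕ} (hj : j ≤ 2 * 4 ^ k) :
    (blockNode k j : ℝ) = blockStart k + j / (2 * 4 ^ k) * (1 / 2) ^ (k + 1) := by
  have hblock := blockStart_add_mem_block k (div_two_mul_four_pow_mem_unitInterval hj)
  rw [blockNode, projIcc_of_mem _ ⟨(blockStart_nonneg k).trans hblock.1,
    hblock.2.trans (blockStart_le_one _)⟩]

lemma blockNode_mem_block {k j : ℕ} (hj : j ≤ 2 * 4 ^ k) :
    (blockNode k j : ℝ) ∈ Icc (blockStart k) (blockStart (k + 1)) := by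
  rw [coe_blockNode hj]
  exact blockStart_add_mem_block k (div_two_mul_four_pow_mem_unitInterval hj)

lemma bump_blockNode {k j : ℕ} (hj : j ≤ 2 * 4 ^ k) :
    bump k (blockNode k j) = (1 / 2) ^ k * distToInt (j / 2) := by
  rw [coe_blockNode hj, bump_blockStart_add k (div_two_mul_four_pow_mem_unitInterval hj)]
  congr 2
  field_simp

lemma bump_blockNode_two_mul {k i : ℕ} (hi : i ≤ 4 ^ k) : bump k (blockNode k (2 * i)) = 0 := by
  rw [bump_blockNode (by omega), Nat.cast_mul, Nat.cast_two, mul_div_cancel_left₀ _ two_ne_zero]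
  simpa using distToInt_intCast i

lemma bump_blockNode_two_mul_add_one {k i : ℕ} (hi : i < 4 ^ k) :
    bump k (blockNode k (2 * i + 1)) = (1 / 2) ^ (k + 1) := by
  rw [bump_blockNode (by omega)]
  have : ((2 * i + 1 : ℕ) : ℝ) / 2 = (i : ℤ) + 1 / 2 := by push_cast; ring
  rw [this, distToInt_intCast_add_half, pow_succ]

def bumpCI (k : ℕ) : CI := ⟨fun t => bump k t, by
  obtain ⟨K, hK⟩ := lipschitzWith_bump k
  exact hK.continuous.comp continuous_subtype_val⟩

lemma norm_bumpCI_le (k : ℕ) : ‖bumpCI k‖ ≤ (1 / 2) ^ k :=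
  (ContinuousMap.norm_le _ (by positivity)).2 fun t => abs_bump_le k t

lemma isVBOn_bumpCI (k : ℕ) (E : Set unitInterval) : IsVBOn (bumpCI k) E := by
  obtain ⟨K, hK⟩ := lipschitzWith_bump k
  exact isVBOn_of_lipschitzWith (hK.comp (LipschitzWith.subtype_val _)) E

def bumpSeries (s : ℕ → ℝ) : CI := ∑' k, s k • bumpCI k

lemma norm_smul_bumpCI_le {s : ℕ → ℝ} (hs : ∀ k, |s k| ≤ 1) (k : ℕ) :
    ‖s k • bumpCI k‖ ≤ (1 / 2) ^ k := by
  rw [norm_smul]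
  exact (mul_le_of_le_one_left (norm_nonneg _) (hs k)).trans (norm_bumpCI_le k)

lemma continuous_bumpSeries {X : Type*} [TopologicalSpace X] {c : ℕ → X → ℝ}
    (hc : ∀ k, Continuous (c k)) (hc1 : ∀ k x, |c k x| ≤ 1) :
    Continuous fun x => bumpSeries (c · x) :=
  continuous_tsum (fun k => (hc k).smul continuous_const) summable_geometric_two
    fun k x => norm_smul_bumpCI_le (hc1 · x) k

lemma bumpSeries_apply_of_mem_block {s : ℕ → ℝ} (hs : ∀ k, |s k| ≤ 1) {k : ℕ} {t : unitInterval}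
    (ht : (t : ℝ) ∈ Icc (blockStart k) (blockStart (k + 1))) : bumpSeries s t = s k * bump k t := by
  have hsum : Summable fun k => s k • bumpCI k :=
    .of_norm_bounded summable_geometric_two (norm_smul_bumpCI_le hs)
  rw [bumpSeries, ← ContinuousMap.tsum_apply hsum]
  refine tsum_eq_single k fun j hj => ?_
  simp [bumpCI, bump_eq_zero_of_ne hj ht]

lemma isVBOn_bumpSeries_of_eventually_zero {s : ℕ → ℝ} (h : ∀ᶠ k in atTop, s k = 0)
    (E : Set unitInterval) : IsVBOn (bumpSeries s) E := by
  obtain ⟨K, hK⟩ := eventually_atTop.1 h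
  rw [bumpSeries, tsum_eq_sum (s := Finset.range K) fun k hk => by
    rw [hK k (by simpa using hk), zero_smul]]
  exact isVBOn_finset_sum _ fun k _ => (isVBOn_bumpCI k E).const_smul (s k)

lemma exists_seqOn_sum_eq_of_eq_one {s : ℕ → ℝ} (hs : ∀ k, |s k| ≤ 1) {k : ℕ} (hk : s k = 1) :
    ∃ a b, SeqOn univ (4 ^ k - 1) a b ∧
      ∑ i ∈ Finset.range (4 ^ k - 1 + 1), |bumpSeries s (b i) - bumpSeries s (a i)| =
        2 ^ k / 2 := by
  have h4 : 4 ^ k - 1 + 1 = 4 ^ k := Nat.sub_add_cancel (Nat.one_le_pow _ _ (by norm_num))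
  refine ⟨fun i => blockNode k (2 * i), fun i => blockNode k (2 * i + 1),
    ⟨fun _ _ => trivial, fun _ _ => trivial, fun i _ => monotone_blockNode k (by omega),
      fun i _ => monotone_blockNode k (by omega)⟩, ?_⟩
  have hterm : ∀ i ∈ Finset.range (4 ^ k),
      |bumpSeries s (blockNode k (2 * i + 1)) - bumpSeries s (blockNode k (2 * i))| =
        (1 / 2) ^ (k + 1) := fun i hi => by
    have hi := Finset.mem_range.1 hi
    rw [bumpSeries_apply_of_mem_block hs (blockNode_mem_block (by omega)),
      bumpSeries_apply_of_mem_block hs (blockNode_mem_block (by omega)), hk,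
      bump_blockNode_two_mul_add_one hi, bump_blockNode_two_mul hi.le]
    norm_num
  rw [h4, Finset.sum_congr rfl hterm, Finset.sum_const, Finset.card_range, nsmul_eq_mul]
  push_cast
  rw [show (4 : ℝ) = 2 * 2 by norm_num, mul_pow, pow_succ, mul_mul_mul_comm, ← mul_pow]
  ring

lemma not_isVBOn_bumpSeries {s : ℕ → ℝ} (hs : ∀ k, |s k| ≤ 1) (h : ∃ᶠ k in atTop, s k = 1) :
    ¬ IsVBOn (bumpSeries s) univ := by
  rintro ⟨N, hN⟩
  have hlarge : ∀ᶠ k in atTop, N ≤ (2 : ℝ) ^ k / 2 :=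
    ((tendsto_pow_atTop_atTop_of_one_lt one_lt_two).atTop_div_const two_pos).eventually_ge_atTop N
  obtain ⟨k, hk, hNk⟩ := (h.and_eventually hlarge).exists
  obtain ⟨a, b, hab, hsum⟩ := exists_seqOn_sum_eq_of_eq_one hs hk
  exact (hN _ a b hab).not_ge (hsum ▸ hNk)

lemma abs_le_one_of_eq_zero_or_eq_one {r : ℝ} (h : r = 0 ∨ r = 1) : |r| ≤ 1 := by
  rcases h with rfl | rfl <;> norm_num

lemma isVBOn_bumpSeries_iff {s : ℕ → ℝ} (hs : ∀ k, s k = 0 ∨ s k = 1) :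
    IsVBOn (bumpSeries s) univ ↔ ∀ᶠ k in atTop, s k = 0 := by
  refine ⟨fun hvb => ?_, fun h => isVBOn_bumpSeries_of_eventually_zero h univ⟩
  by_contra h
  refine not_isVBOn_bumpSeries (fun k => abs_le_one_of_eq_zero_or_eq_one (hs k)) ?_ hvb
  exact (not_eventually.1 h).mono fun k hk => (hs k).resolve_left hk

/-- The set of continuous functions of bounded variation is `Σ⁰₂`-complete: it is Fσ in
`C(I)`, and every Fσ subset of Baire space continuously reduces to it. -/
theorem boundedVariation_sigma02_complete :
    IsFSigma {F : CI | IsVBOn F Set.univ} ∧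
    ∀ B : Set (ℕ → ℕ), IsFSigma B →
      ∃ g : (ℕ → ℕ) → CI, Continuous g ∧ g ⁻¹' {F : CI | IsVBOn F Set.univ} = B := by
  refine ⟨isFSigma_setOf_isVBOn univ, fun B hB => ?_⟩
  obtain ⟨c, hc, hc01, hcB⟩ := hB.exists_reduction_eventually_zero
  refine ⟨fun x => bumpSeries (c · x),
    continuous_bumpSeries hc fun k x => abs_le_one_of_eq_zero_or_eq_one (hc01 k x), ?_⟩
  ext x
  exact (isVBOn_bumpSeries_iff (hc01 · x)).trans (hcB x).symm
end
end

section
/- The set AC = {F ∈ C(I) : F is AC on [0,1]} of absolutely continuous functions is Π⁰₃-complete: AC is a countable intersection of Fσ subsets of C(I), and for every set B ⊆ ℕ^ℕ that is a countable intersection of Fσ sets, there is a continuous map g : ℕ^ℕ → C(I) with g⁻¹(AC) = B. -/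
open Set MeasureTheory Topology

noncomputable section

/-- `A` is a countable intersection of Fσ sets. -/
def IsPi03 {X : Type*} [TopologicalSpace X] (A : Set X) : Prop :=
  ∃ C : ℕ → Set X, (∀ n, IsFSigma (C n)) ∧ A = ⋂ n, C n

/-!
Membership in `AC` says: for every `n` there is `m` such that systems of total length
`≤ 1 / (m + 1)` have variation `≤ 1 / (n + 1)`; for fixed `n, m` this is a closed condition on `F`.

For hardness write `B = ⋂ n, ⋃ m, D n m` with `D n m` closed and increasing in `m`. Reading
`x ∈ ℕ^ℕ` coordinate by coordinate, the `n`-th row pattern fires at time `k` when the set of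
levels `m` for which `D n m` meets the cylinder of `x` of length `k` is empty or is about to
shrink; it fires finitely often iff `x ∈ ⋃ m, D n m`, because `D n m` is closed.

Each pattern drives a Cantor-type staircase: at step `k` the unit step is replaced by two
half-mass copies on `[0, 1/c]` and `[1 - 1/c, 1]`, with `c = 3` when the pattern fires and `c = 2`
(which changes nothing) otherwise. Finitely many firings give a Lipschitz function; infinitely
many give `2 ^ k` intervals of total length `(2/3) ^ (number of firings) → 0` on which the
staircase rises by `1`. Placing the `n`-th staircase, scaled by `4⁻ⁿ`, on `[1 - 2⁻ⁿ, 1 - 2⁻ⁿ⁻¹]`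
gives the reduction, continuous because the first `K` steps of every row only read `x` below `K`.
-/

open Filter

def acModulusSet (n m : ℕ) : Set CI :=
  {F | ∀ (k : ℕ) (a b : ℕ → unitInterval), SeqOn univ k a b →
    ∑ i ∈ Finset.range (k + 1), ((b i : ℝ) - a i) ≤ 1 / (m + 1) →
    ∑ i ∈ Finset.range (k + 1), |F (b i) - F (a i)| ≤ 1 / (n + 1)}

lemma isClosed_acModulusSet (n m : ℕ) : IsClosed (acModulusSet n m) := by
  simp only [acModulusSet, ofPred_forall]
  refine isClosed_iInter fun k => isClosed_iInter fun a => isClosed_iInter fun b =>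
    isClosed_iInter fun _ => isClosed_iInter fun _ => isClosed_le ?_ continuous_const
  exact continuous_finsetSum _ fun i _ =>
    ((continuous_eval_const (b i)).sub (continuous_eval_const (a i))).abs

lemma setOf_isACOn_eq : {F : CI | IsACOn F univ} = ⋂ n : ℕ, ⋃ m : ℕ, acModulusSet n m := by
  ext F
  simp only [mem_ofPred_eq, mem_iInter, mem_iUnion]
  constructor
  · intro hF n
    obtain ⟨δ, hδ, hsys⟩ := hF (1 / (n + 1)) Nat.one_div_pos_of_nat
    obtain ⟨m, hm⟩ := exists_nat_one_div_lt hδ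
    exact ⟨m, fun k a b hseq hsum => (hsys k a b hseq (hsum.trans_lt hm)).le⟩
  · intro hF ε hε
    obtain ⟨n, hn⟩ := exists_nat_one_div_lt hε
    obtain ⟨m, hm⟩ := hF n
    exact ⟨1 / (m + 1), Nat.one_div_pos_of_nat,
      fun k a b hseq hsum => (hm k a b hseq hsum.le).trans_lt hn⟩

lemma isPi03_setOf_isACOn : IsPi03 {F : CI | IsACOn F univ} :=
  ⟨_, fun n => ⟨_, isClosed_acModulusSet n, rfl⟩, setOf_isACOn_eq⟩

lemma Monotone.sum_sub_le {α : Type*} [Preorder α] {f : α → ℝ} (hf : Monotone f) {k : ℕ}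
    {a b : ℕ → α} (hab : ∀ i ≤ k, a i ≤ b i) (hba : ∀ i < k, b i ≤ a (i + 1)) :
    ∑ i ∈ Finset.range (k + 1), (f (b i) - f (a i)) ≤ f (b k) - f (a 0) := by
  induction k with
  | zero => simp
  | succ k ih =>
    rw [Finset.sum_range_succ]
    have := ih (fun i hi => hab i (by omega)) (fun i hi => hba i (by omega))
    have := hf (hba k k.lt_succ_self)
    linarith

lemma sum_abs_tsum_sub_tsum {f : ℕ → ℝ → ℝ} (hmono : ∀ n, Monotone (f n))
    (hsum : ∀ t, Summable fun n => f n t) {s : Finset ℕ} {a b : ℕ → ℝ} (hab : ∀ i ∈ s, a i ≤ b i) :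
    ∑ i ∈ s, |∑' n, f n (b i) - ∑' n, f n (a i)| = ∑' n, ∑ i ∈ s, (f n (b i) - f n (a i)) := by
  rw [Summable.tsum_finsetSum fun i _ => (hsum _).sub (hsum _)]
  refine Finset.sum_congr rfl fun i hi => ?_
  rw [← (hsum _).tsum_sub (hsum _)]
  exact abs_of_nonneg (tsum_nonneg fun n => sub_nonneg.2 (hmono n (hab i hi)))

lemma LipschitzWith.sum_sub_le {f : ℝ → ℝ} {L : NNReal} (hf : LipschitzWith L f) {s : Finset ℕ}
    {a b : ℕ → ℝ} (hab : ∀ i ∈ s, a i ≤ b i) :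
    ∑ i ∈ s, (f (b i) - f (a i)) ≤ L * ∑ i ∈ s, (b i - a i) := by
  rw [Finset.mul_sum]
  refine Finset.sum_le_sum fun i hi => (le_abs_self _).trans ?_
  simpa [Real.dist_eq, abs_of_nonneg (sub_nonneg.2 (hab i hi))] using hf.dist_le_mul (b i) (a i)

/-- The head of the series is Lipschitz and its tail has small total variation. -/
theorem isACOn_univ_of_tsum {F : CI} {f : ℕ → ℝ → ℝ} {r : ℕ → ℝ} (hr : Summable r)
    (hmono : ∀ n, Monotone (f n)) (hf : ∀ n t, f n t ∈ Icc 0 (r n))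
    (hlip : ∀ n, ∃ L, LipschitzWith L (f n)) (hF : ∀ t : unitInterval, F t = ∑' n, f n t) :
    IsACOn F univ := by
  have hsum : ∀ t, Summable fun n => f n t := fun t =>
    hr.of_nonneg_of_le (fun n => (hf n t).1) fun n => (hf n t).2
  choose L hL using hlip
  intro ε hε
  obtain ⟨N, hN⟩ := ((tendsto_sum_nat_add r).eventually (gt_mem_nhds (half_pos hε))).exists
  set Λ : ℝ := ∑ n ∈ Finset.range N, (L n : ℝ)
  have hΛ : 0 ≤ Λ := Finset.sum_nonneg fun n _ => (L n).coe_nonneg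
  refine ⟨ε / 2 / (Λ + 1), by positivity, fun k a b hseq hW => ?_⟩
  obtain ⟨-, -, hab, hba⟩ := hseq
  have hab' : ∀ i ∈ Finset.range (k + 1), a i ≤ b i := fun i hi =>
    hab i (Nat.lt_succ_iff.1 (Finset.mem_range.1 hi))
  set W := ∑ i ∈ Finset.range (k + 1), ((b i : ℝ) - a i)
  set S : ℕ → ℝ := fun n => ∑ i ∈ Finset.range (k + 1), (f n (b i) - f n (a i))
  have hS₀ : ∀ n, 0 ≤ S n := fun n =>
    Finset.sum_nonneg fun i hi => sub_nonneg.2 (hmono n (hab' i hi))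
  have hSr : ∀ n, S n ≤ r n := fun n =>
    (Monotone.sum_sub_le ((hmono n).comp (Subtype.mono_coe _)) hab hba).trans
      (by simp only [Function.comp_apply]; linarith [(hf n (b k)).2, (hf n (a 0)).1])
  have hSL : ∀ n, S n ≤ L n * W := fun n => (hL n).sum_sub_le hab'
  have hvar : ∑ i ∈ Finset.range (k + 1), |F (b i) - F (a i)| = ∑' n, S n := by
    simp only [hF]
    exact sum_abs_tsum_sub_tsum hmono hsum hab'
  have hhead : ∑ n ∈ Finset.range N, S n < ε / 2 :=
    calc ∑ n ∈ Finset.range N, S n ≤ Λ * W := by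
          rw [Finset.sum_mul]; exact Finset.sum_le_sum fun n _ => hSL n
      _ ≤ Λ * (ε / 2 / (Λ + 1)) := by gcongr
      _ < ε / 2 := by
          rw [mul_div_assoc', div_lt_iff₀ (by linarith)]; nlinarith
  have hS : Summable S := hr.of_nonneg_of_le hS₀ hSr
  have htail : ∑' n, S (n + N) ≤ ∑' n, r (n + N) :=
    ((summable_nat_add_iff N).2 hS).tsum_le_tsum (fun n => hSr (n + N))
      ((summable_nat_add_iff N).2 hr)
  rw [hvar, ← hS.sum_add_tsum_nat_add N]
  linarith

def SeqIcc (k : ℕ) (a b : ℕ → ℝ) : Prop :=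
  (∀ i ≤ k, 0 ≤ a i ∧ a i ≤ b i ∧ b i ≤ 1) ∧ ∀ i < k, b i ≤ a (i + 1)

lemma not_isACOn_of_seqIcc {F : CI} {f : ℝ → ℝ} (hF : ∀ t : unitInterval, F t = f t) {η : ℝ}
    (hη : 0 < η) (h : ∀ δ > 0, ∃ k a b, SeqIcc k a b ∧ ∑ i ∈ Finset.range (k + 1), (b i - a i) < δ ∧
      η ≤ ∑ i ∈ Finset.range (k + 1), (f (b i) - f (a i))) :
    ¬ IsACOn F univ := by
  intro hAC
  obtain ⟨δ, hδ, hsys⟩ := hAC η hη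
  obtain ⟨k, a, b, ⟨hmem, hba⟩, hW, hinc⟩ := h δ hδ
  let p : ℝ → unitInterval := projIcc 0 1 zero_le_one
  have hp : ∀ i ∈ Finset.range (k + 1), (p (a i) : ℝ) = a i ∧ (p (b i) : ℝ) = b i := by
    intro i hi
    obtain ⟨h₀, h₁, h₂⟩ := hmem i (Nat.lt_succ_iff.1 (Finset.mem_range.1 hi))
    simp [p, projIcc_of_mem _ ⟨h₀, h₁.trans h₂⟩, projIcc_of_mem _ ⟨h₀.trans h₁, h₂⟩]
  have hseq : SeqOn univ k (p ∘ a) (p ∘ b) :=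
    ⟨fun _ _ => trivial, fun _ _ => trivial,
      fun i hi => monotone_projIcc zero_le_one (hmem i hi).2.1,
      fun i hi => monotone_projIcc zero_le_one (hba i hi)⟩
  refine (hsys k _ _ hseq ?_).not_ge ?_
  · rwa [Finset.sum_congr rfl fun i hi => by rw [Function.comp_apply, Function.comp_apply,
      (hp i hi).1, (hp i hi).2]]
  · refine hinc.trans (Finset.sum_le_sum fun i hi => ?_)
    rw [Function.comp_apply, Function.comp_apply, hF, hF, (hp i hi).1, (hp i hi).2]
    exact le_abs_self _

lemma IsFSigma.exists_monotone {X : Type*} [TopologicalSpace X] {A : Set X} (hA : IsFSigma A) :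
    ∃ D : ℕ → Set X, (∀ m, IsClosed (D m)) ∧ Monotone D ∧ A = ⋃ m, D m := by
  obtain ⟨C, hC, rfl⟩ := hA
  exact ⟨accumulate C, fun m => (finite_Iic m).isClosed_biUnion fun j _ => hC j,
    monotone_accumulate, iUnion_accumulate.symm⟩

lemma continuous_of_dist_le_of_mem_cylinder {X : Type*} [PseudoMetricSpace X]
    {Φ : (ℕ → ℕ) → X} {u : ℕ → ℝ} (hu : Tendsto u atTop (𝓝 0))
    (h : ∀ K x, ∀ y ∈ PiNat.cylinder x K, dist (Φ y) (Φ x) ≤ u K) : Continuous Φ := by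
  refine continuous_iff_continuousAt.2 fun x => Metric.tendsto_nhds.2 fun ε hε => ?_
  obtain ⟨K, hK⟩ := (hu.eventually (gt_mem_nhds hε)).exists
  filter_upwards [(PiNat.isOpen_cylinder (fun _ => ℕ) x K).mem_nhds
    (PiNat.self_mem_cylinder x K)] with y hy
  exact (h K x y hy).trans_lt hK

namespace ACReduction

structure IsUnitStep (f : ℝ → ℝ) : Prop where
  mono : Monotone f
  eq_zero : ∀ t ≤ 0, f t = 0
  eq_one : ∀ t, 1 ≤ t → f t = 1

namespace IsUnitStep

variable {f g : ℝ → ℝ}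

lemma mem_Icc (hf : IsUnitStep f) (t : ℝ) : f t ∈ Icc 0 1 := by
  constructor
  · calc 0 = f (min t 0) := (hf.eq_zero _ (min_le_right t 0)).symm
      _ ≤ f t := hf.mono (min_le_left t 0)
  · calc f t ≤ f (max t 1) := hf.mono (le_max_left t 1)
      _ = 1 := hf.eq_one _ (le_max_right t 1)

lemma eq_of_notMem_Ioo (hf : IsUnitStep f) (hg : IsUnitStep g) {t : ℝ} (ht : t ∉ Ioo 0 1) :
    f t = g t := by
  rcases le_or_gt t 0 with h | h
  · rw [hf.eq_zero t h, hg.eq_zero t h]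
  · have h1 : 1 ≤ t := by_contra fun h' => ht ⟨h, not_le.1 h'⟩
    rw [hf.eq_one t h1, hg.eq_one t h1]

end IsUnitStep

def clamp (t : ℝ) : ℝ := max 0 (min 1 t)

lemma isUnitStep_clamp : IsUnitStep clamp where
  mono _ _ h := max_le_max le_rfl (min_le_min le_rfl h)
  eq_zero t ht := max_eq_left (min_le_of_right_le ht)
  eq_one t ht := by simp [clamp, min_eq_left ht]

lemma lipschitzWith_clamp : LipschitzWith 1 clamp :=
  (LipschitzWith.id.const_min 1).const_max 0

/-- `glue c f` squeezes `f` onto `[0, 1/c]` and `[1 - 1/c, 1]`, giving each copy half the mass. -/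
def glue (c : ℝ) (f : ℝ → ℝ) (t : ℝ) : ℝ := (f (c * t) + f (c * t - (c - 1))) / 2

lemma IsUnitStep.glue {f : ℝ → ℝ} (hf : IsUnitStep f) {c : ℝ} (hc : 1 ≤ c) :
    IsUnitStep (glue c f) where
  mono s t hst := by
    have hcs : c * s ≤ c * t := by gcongr
    have := hf.mono hcs
    have := hf.mono (sub_le_sub_right hcs (c - 1))
    simp only [ACReduction.glue]
    linarith
  eq_zero t ht := by
    have h : c * t ≤ 0 := mul_nonpos_of_nonneg_of_nonpos (by linarith) ht
    simp [ACReduction.glue, hf.eq_zero _ h, hf.eq_zero (c * t - (c - 1)) (by linarith)]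
  eq_one t ht := by
    have h : c ≤ c * t := le_mul_of_one_le_right (by linarith) ht
    simp [ACReduction.glue, hf.eq_one (c * t) (by linarith),
      hf.eq_one (c * t - (c - 1)) (by linarith)]

lemma glue_left {f : ℝ → ℝ} (hf : IsUnitStep f) {c y : ℝ} (hc : 0 < c) (hy : y ≤ c - 1) :
    glue c f (y / c) = f y / 2 := by
  rw [glue, mul_div_cancel₀ y hc.ne', hf.eq_zero (y - (c - 1)) (by linarith), add_zero]

lemma glue_right {f : ℝ → ℝ} (hf : IsUnitStep f) {c y : ℝ} (hc : 0 < c) (hy : 2 - c ≤ y) :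
    glue c f ((y + c - 1) / c) = (1 + f y) / 2 := by
  rw [glue, mul_div_cancel₀ _ hc.ne', hf.eq_one _ (by linarith),
    show y + c - 1 - (c - 1) = y by ring]

lemma glue_two_clamp : glue 2 clamp = clamp := by
  ext t
  simp only [glue, clamp, max_def, min_def]
  split_ifs <;> linarith

lemma abs_glue_sub_glue_le {f g : ℝ → ℝ} (hf : IsUnitStep f) (hg : IsUnitStep g) {c M : ℝ}
    (hc : 2 ≤ c) (hM : ∀ s, |f s - g s| ≤ M) (t : ℝ) :
    |glue c f t - glue c g t| ≤ M / 2 := by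
  -- at least one of the two rescaled points leaves `(0, 1)`, where `f` and `g` agree
  have hout : c * t ∉ Ioo 0 1 ∨ c * t - (c - 1) ∉ Ioo 0 1 := by
    by_contra! h
    linarith [h.1.2, h.2.1]
  rcases hout with h | h
  · have e : glue c f t - glue c g t = (f (c * t - (c - 1)) - g (c * t - (c - 1))) / 2 := by
      simp only [glue, hf.eq_of_notMem_Ioo hg h]; ring
    rw [e, abs_div, abs_two]
    linarith [hM (c * t - (c - 1))]
  · have e : glue c f t - glue c g t = (f (c * t) - g (c * t)) / 2 := by
      simp only [glue, hf.eq_of_notMem_Ioo hg h]; ring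
    rw [e, abs_div, abs_two]
    linarith [hM (c * t)]

lemma lipschitzWith_glue {f : ℝ → ℝ} {K : NNReal} (hf : LipschitzWith K f) {c : ℝ} (hc : 0 ≤ c) :
    LipschitzWith (K * c.toNNReal) (glue c f) := by
  refine LipschitzWith.of_dist_le_mul fun s t => ?_
  have hd : dist (c * s) (c * t) = c * dist s t := by
    rw [Real.dist_eq, Real.dist_eq, ← mul_sub, abs_mul, abs_of_nonneg hc]
  have h₁ := hf.dist_le_mul (c * s) (c * t)
  have h₂ := hf.dist_le_mul (c * s - (c - 1)) (c * t - (c - 1))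
  rw [hd] at h₁
  rw [dist_sub_right, hd] at h₂
  have e : glue c f s - glue c f t =
      ((f (c * s) - f (c * t)) + (f (c * s - (c - 1)) - f (c * t - (c - 1)))) / 2 := by
    simp only [glue]; ring
  rw [Real.dist_eq] at h₁ h₂ ⊢
  rw [e, abs_div, abs_two, NNReal.coe_mul, Real.coe_toNNReal _ hc]
  linarith [abs_add_le (f (c * s) - f (c * t)) (f (c * s - (c - 1)) - f (c * t - (c - 1)))]

open Classical in
def ratio (p : Prop) : ℝ := if p then 3 else 2

lemma two_le_ratio (p : Prop) : 2 ≤ ratio p := by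
  unfold ratio; split_ifs <;> norm_num

lemma ratio_le_three (p : Prop) : ratio p ≤ 3 := by
  unfold ratio; split_ifs <;> norm_num

lemma ratio_pos (p : Prop) : 0 < ratio p := two_pos.trans_le (two_le_ratio p)

def shift (ρ : ℕ → Prop) (k : ℕ) : Prop := ρ (k + 1)

def stage : ℕ → (ℕ → Prop) → ℝ → ℝ
  | 0, _ => clamp
  | k + 1, ρ => glue (ratio (ρ 0)) (stage k (shift ρ))

lemma isUnitStep_stage (k : ℕ) (ρ : ℕ → Prop) : IsUnitStep (stage k ρ) := by
  induction k generalizing ρ with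
  | zero => exact isUnitStep_clamp
  | succ k ih => exact (ih (shift ρ)).glue (one_le_two.trans (two_le_ratio _))

lemma lipschitzWith_stage (k : ℕ) (ρ : ℕ → Prop) : LipschitzWith (3 ^ k) (stage k ρ) := by
  induction k generalizing ρ with
  | zero => simpa [stage] using lipschitzWith_clamp
  | succ k ih =>
    refine (lipschitzWith_glue (ih (shift ρ)) (ratio_pos _).le).weaken ?_
    rw [pow_succ]
    gcongr
    exact Real.toNNReal_le_iff_le_coe.2 (by simpa using ratio_le_three _)

lemma abs_stage_succ_sub_le (k : ℕ) (ρ : ℕ → Prop) (t : ℝ) :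
    |stage (k + 1) ρ t - stage k ρ t| ≤ (1 / 2) ^ k := by
  induction k generalizing ρ t with
  | zero =>
    have h₁ := (isUnitStep_stage 1 ρ).mem_Icc t
    have h₀ := (isUnitStep_stage 0 ρ).mem_Icc t
    rw [pow_zero, abs_le]
    constructor <;> linarith [h₁.1, h₁.2, h₀.1, h₀.2]
  | succ k ih =>
    calc |stage (k + 2) ρ t - stage (k + 1) ρ t| ≤ (1 / 2) ^ k / 2 :=
          abs_glue_sub_glue_le (isUnitStep_stage _ _) (isUnitStep_stage _ _) (two_le_ratio _)
            (ih (shift ρ)) t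
      _ = (1 / 2) ^ (k + 1) := by ring

lemma stage_congr {k : ℕ} {ρ ρ' : ℕ → Prop} (h : ∀ j < k, ρ j ↔ ρ' j) :
    stage k ρ = stage k ρ' := by
  induction k generalizing ρ ρ' with
  | zero => rfl
  | succ k ih =>
    show glue _ (stage k (shift ρ)) = glue _ (stage k (shift ρ'))
    rw [propext (h 0 k.succ_pos),
      ih (ρ := shift ρ) (ρ' := shift ρ') fun j hj => h (j + 1) (by omega)]

lemma stage_succ_of_not {k : ℕ} {ρ : ℕ → Prop} (h : ¬ ρ k) : stage (k + 1) ρ = stage k ρ := by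
  induction k generalizing ρ with
  | zero => simp only [stage, ratio, if_neg h, glue_two_clamp]
  | succ k ih =>
    show glue _ (stage (k + 1) (shift ρ)) = glue _ (stage k (shift ρ))
    rw [ih (ρ := shift ρ) h]

def staircase (ρ : ℕ → Prop) (t : ℝ) : ℝ := limUnder atTop fun k => stage k ρ t

lemma tendsto_stage (ρ : ℕ → Prop) (t : ℝ) :
    Tendsto (fun k => stage k ρ t) atTop (𝓝 (staircase ρ t)) :=
  (cauchySeq_of_le_geometric (1 / 2) 1 (by norm_num) fun k => by
    simpa [Real.dist_eq, abs_sub_comm] using abs_stage_succ_sub_le k ρ t).tendsto_limUnder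

lemma abs_stage_sub_staircase_le (k : ℕ) (ρ : ℕ → Prop) (t : ℝ) :
    |stage k ρ t - staircase ρ t| ≤ 2 * (1 / 2) ^ k := by
  have := dist_le_of_le_geometric_of_tendsto (1 / 2) 1 (by norm_num) (fun k => by
    simpa [Real.dist_eq, abs_sub_comm] using abs_stage_succ_sub_le k ρ t) (tendsto_stage ρ t) k
  rw [Real.dist_eq] at this
  convert this using 1
  ring

lemma isUnitStep_staircase (ρ : ℕ → Prop) : IsUnitStep (staircase ρ) where
  mono s t hst := le_of_tendsto_of_tendsto' (tendsto_stage ρ s) (tendsto_stage ρ t)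
    fun k => (isUnitStep_stage k ρ).mono hst
  eq_zero t ht := tendsto_nhds_unique (tendsto_stage ρ t)
    (by simp [(isUnitStep_stage _ ρ).eq_zero t ht])
  eq_one t ht := tendsto_nhds_unique (tendsto_stage ρ t)
    (by simp [(isUnitStep_stage _ ρ).eq_one t ht])

lemma continuous_staircase (ρ : ℕ → Prop) : Continuous (staircase ρ) := by
  refine TendstoUniformly.continuous (F := fun k => stage k ρ) (p := atTop) ?_
    (.of_forall fun k => (lipschitzWith_stage k ρ).continuous)
  refine Metric.tendstoUniformly_iff.2 fun ε hε => ?_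
  filter_upwards [((tendsto_pow_atTop_nhds_zero_of_lt_one (by norm_num : (0 : ℝ) ≤ 1 / 2)
    (by norm_num)).const_mul 2).eventually (gt_mem_nhds (by simpa using hε))] with k hk t
  rw [Real.dist_eq, abs_sub_comm]
  exact (abs_stage_sub_staircase_le k ρ t).trans_lt hk

lemma staircase_eq_glue (ρ : ℕ → Prop) :
    staircase ρ = glue (ratio (ρ 0)) (staircase (shift ρ)) := by
  ext t
  refine tendsto_nhds_unique
    ((tendsto_add_atTop_iff_nat (f := fun k => stage k ρ t) 1).2 (tendsto_stage ρ t)) ?_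
  exact ((tendsto_stage _ _).add (tendsto_stage _ _)).div_const 2

lemma abs_staircase_sub_le {K : ℕ} {ρ ρ' : ℕ → Prop} (h : ∀ j < K, ρ j ↔ ρ' j) (t : ℝ) :
    |staircase ρ t - staircase ρ' t| ≤ 4 * (1 / 2) ^ K := by
  have h₁ := abs_stage_sub_staircase_le K ρ t
  have h₂ := abs_stage_sub_staircase_le K ρ' t
  rw [stage_congr h] at h₁
  calc |staircase ρ t - staircase ρ' t|
      ≤ |staircase ρ t - stage K ρ' t| + |stage K ρ' t - staircase ρ' t| := abs_sub_le _ _ _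
    _ ≤ 4 * (1 / 2) ^ K := by rw [abs_sub_comm (staircase ρ t)]; linarith

lemma exists_lipschitzWith_staircase {ρ : ℕ → Prop} (h : ∀ᶠ k in atTop, ¬ ρ k) :
    ∃ K, LipschitzWith K (staircase ρ) := by
  obtain ⟨k₀, hk₀⟩ := eventually_atTop.1 h
  have hconst : ∀ k ≥ k₀, stage k ρ = stage k₀ ρ :=
    Nat.le_induction rfl fun k hk ih => (stage_succ_of_not (hk₀ k hk)).trans ih
  refine ⟨3 ^ k₀, (funext fun t => ?_ : staircase ρ = stage k₀ ρ) ▸ lipschitzWith_stage k₀ ρ⟩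
  exact tendsto_nhds_unique (tendsto_stage ρ t)
    (tendsto_const_nhds.congr' (eventually_atTop.2
      ⟨k₀, fun k hk => (congrFun (hconst k hk) t).symm⟩))

/-- Left end of the `i`-th of the `2 ^ k` intervals of generation `k` carrying the mass of
`staircase ρ`; the intervals all have length `cellWidth ρ k`. -/
def cellLeft : ℕ → (ℕ → Prop) → ℕ → ℝ
  | 0, _, _ => 0
  | k + 1, ρ, i =>
    if i < 2 ^ k then cellLeft k (shift ρ) i / ratio (ρ 0)
    else (cellLeft k (shift ρ) (i - 2 ^ k) + ratio (ρ 0) - 1) / ratio (ρ 0)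

def cellWidth (ρ : ℕ → Prop) (k : ℕ) : ℝ := ∏ j ∈ Finset.range k, (ratio (ρ j))⁻¹

lemma cellWidth_succ (ρ : ℕ → Prop) (k : ℕ) :
    cellWidth ρ (k + 1) = cellWidth (shift ρ) k / ratio (ρ 0) := by
  rw [cellWidth, Finset.prod_range_succ', div_eq_mul_inv]
  rfl

lemma cellWidth_pos (ρ : ℕ → Prop) (k : ℕ) : 0 < cellWidth ρ k :=
  Finset.prod_pos fun _ _ => inv_pos.2 (ratio_pos _)

open Classical in
lemma two_pow_mul_cellWidth (ρ : ℕ → Prop) (k : ℕ) :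
    2 ^ k * cellWidth ρ k = (2 / 3) ^ Nat.count ρ k := by
  induction k with
  | zero => simp [cellWidth]
  | succ k ih =>
    calc 2 ^ (k + 1) * cellWidth ρ (k + 1) = 2 ^ k * cellWidth ρ k * (2 / ratio (ρ k)) := by
          rw [cellWidth, Finset.prod_range_succ, ← cellWidth]; ring
      _ = (2 / 3) ^ Nat.count ρ (k + 1) := by
          rw [ih, Nat.count_succ, pow_add]
          by_cases h : ρ k <;> simp [h, ratio]

lemma exists_two_pow_mul_cellWidth_lt {ρ : ℕ → Prop} (h : ∃ᶠ k in atTop, ρ k) {δ : ℝ}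
    (hδ : 0 < δ) : ∃ k, 2 ^ k * cellWidth ρ k < δ := by
  classical
  obtain ⟨N, hN⟩ := exists_pow_lt_of_lt_one hδ (by norm_num : (2 / 3 : ℝ) < 1)
  refine ⟨Nat.nth ρ N, ?_⟩
  rwa [two_pow_mul_cellWidth, Nat.count_nth_of_infinite (Nat.frequently_atTop_iff_infinite.1 h)]

lemma cellLeft_mem (ρ : ℕ → Prop) {k i : ℕ} (hi : i < 2 ^ k) :
    0 ≤ cellLeft k ρ i ∧ cellLeft k ρ i + cellWidth ρ k ≤ 1 := by
  induction k generalizing ρ i with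
  | zero => simp [cellLeft, cellWidth]
  | succ k ih =>
    have hc := two_le_ratio (ρ 0)
    rw [cellWidth_succ, cellLeft]
    split_ifs with h
    · obtain ⟨h₀, h₁⟩ := ih (shift ρ) h
      exact ⟨div_nonneg h₀ (ratio_pos _).le, by rw [← add_div, div_le_one (ratio_pos _)]; linarith⟩
    · obtain ⟨h₀, h₁⟩ := ih (shift ρ) (i := i - 2 ^ k) (by rw [pow_succ] at hi; omega)
      exact ⟨div_nonneg (by linarith) (ratio_pos _).le,
        by rw [← add_div, div_le_one (ratio_pos _)]; linarith⟩

lemma cellLeft_add_cellWidth_le (ρ : ℕ → Prop) {k i : ℕ} (hi : i + 1 < 2 ^ k) :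
    cellLeft k ρ i + cellWidth ρ k ≤ cellLeft k ρ (i + 1) := by
  induction k generalizing ρ i with
  | zero => simp at hi
  | succ k ih =>
    have hc := two_le_ratio (ρ 0)
    have hc₀ := ratio_pos (ρ 0)
    rw [cellWidth_succ, cellLeft, cellLeft]
    rw [pow_succ] at hi
    rcases lt_trichotomy (i + 1) (2 ^ k) with h | h | h
    · rw [if_pos (by omega), if_pos h, ← add_div]
      exact div_le_div_of_nonneg_right (ih (shift ρ) h) hc₀.le
    · -- the last interval of the left copy ends before the first one of the right copy
      rw [if_pos (by omega), if_neg (by omega), ← add_div, show i + 1 - 2 ^ k = 0 by omega]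
      have h₁ := (cellLeft_mem (shift ρ) (show i < 2 ^ k by omega)).2
      have h₀ := (cellLeft_mem (shift ρ) (show 0 < 2 ^ k by positivity)).1
      exact div_le_div_of_nonneg_right (by linarith) hc₀.le
    · rw [if_neg (by omega), if_neg (by omega), show i + 1 - 2 ^ k = i - 2 ^ k + 1 by omega]
      have := ih (shift ρ) (i := i - 2 ^ k) (by omega)
      rw [← add_div]
      exact div_le_div_of_nonneg_right (by linarith) hc₀.le

lemma staircase_cell_sub (ρ : ℕ → Prop) {k i : ℕ} (hi : i < 2 ^ k) :
    staircase ρ (cellLeft k ρ i + cellWidth ρ k) - staircase ρ (cellLeft k ρ i) = (1 / 2) ^ k := by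
  induction k generalizing ρ i with
  | zero =>
    simp [cellLeft, cellWidth, (isUnitStep_staircase ρ).eq_zero, (isUnitStep_staircase ρ).eq_one]
  | succ k ih =>
    have hc := two_le_ratio (ρ 0)
    have hc₀ := ratio_pos (ρ 0)
    have hP := isUnitStep_staircase (shift ρ)
    have hw := cellWidth_pos (shift ρ) k
    rw [cellWidth_succ, staircase_eq_glue, cellLeft]
    split_ifs with h
    · obtain ⟨h₀, h₁⟩ := cellLeft_mem (shift ρ) h
      rw [← add_div, glue_left hP hc₀ (by linarith), glue_left hP hc₀ (by linarith), pow_succ,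
        ← ih (shift ρ) h]
      ring
    · have h' : i - 2 ^ k < 2 ^ k := by rw [pow_succ] at hi; omega
      obtain ⟨h₀, h₁⟩ := cellLeft_mem (shift ρ) h'
      set L := cellLeft k (shift ρ) (i - 2 ^ k)
      set c := ratio (ρ 0)
      rw [show (L + c - 1) / c + cellWidth (shift ρ) k / c
          = (L + cellWidth (shift ρ) k + c - 1) / c by ring,
        glue_right hP hc₀ (by linarith), glue_right hP hc₀ (by linarith), pow_succ,
        ← ih (shift ρ) h']
      ring

lemma exists_seqIcc_staircase {ρ : ℕ → Prop} (h : ∃ᶠ k in atTop, ρ k) {δ : ℝ} (hδ : 0 < δ) :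
    ∃ k a b, SeqIcc k a b ∧ ∑ i ∈ Finset.range (k + 1), (b i - a i) < δ ∧
      ∑ i ∈ Finset.range (k + 1), (staircase ρ (b i) - staircase ρ (a i)) = 1 := by
  obtain ⟨k, hk⟩ := exists_two_pow_mul_cellWidth_lt h hδ
  have hcard : 2 ^ k - 1 + 1 = 2 ^ k := Nat.sub_add_cancel Nat.one_le_two_pow
  refine ⟨2 ^ k - 1, cellLeft k ρ, fun i => cellLeft k ρ i + cellWidth ρ k, ⟨fun i hi => ?_,
    fun i hi => cellLeft_add_cellWidth_le ρ (by omega)⟩, ?_, ?_⟩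
  · obtain ⟨h₀, h₁⟩ := cellLeft_mem ρ (show i < 2 ^ k by omega)
    exact ⟨h₀, le_add_of_nonneg_right (cellWidth_pos ρ k).le, h₁⟩
  · simpa [hcard] using hk
  · rw [hcard, Finset.sum_congr rfl fun i hi => staircase_cell_sub ρ (Finset.mem_range.1 hi)]
    simp

def rowStart (n : ℕ) : ℝ := 1 - (1 / 2) ^ n

/-- `row n f` places `f` on `[rowStart n, rowStart (n + 1)]`, scaled by `4⁻ⁿ`. -/
def row (n : ℕ) (f : ℝ → ℝ) (t : ℝ) : ℝ := (1 / 4) ^ n * f ((t - rowStart n) * 2 ^ (n + 1))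

def rowPoint (n : ℕ) (u : ℝ) : ℝ := rowStart n + u / 2 ^ (n + 1)

lemma row_rowPoint (n : ℕ) (f : ℝ → ℝ) (u : ℝ) : row n f (rowPoint n u) = (1 / 4) ^ n * f u := by
  rw [row, rowPoint, add_sub_cancel_left, div_mul_cancel₀ _ (by positivity)]

lemma rowPoint_sub_rowPoint (n : ℕ) (u v : ℝ) :
    rowPoint n u - rowPoint n v = (u - v) / 2 ^ (n + 1) := by
  simp only [rowPoint]; ring

lemma rowPoint_one (n : ℕ) : rowPoint n 1 = rowStart (n + 1) := by
  simp only [rowPoint, rowStart, one_div, inv_pow, pow_succ, mul_inv]; ring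

lemma monotone_rowPoint (n : ℕ) : Monotone (rowPoint n) := fun u v huv => by
  simp only [rowPoint]; gcongr

lemma SeqIcc.map_rowPoint {k : ℕ} {a b : ℕ → ℝ} (h : SeqIcc k a b) (n : ℕ) :
    SeqIcc k (rowPoint n ∘ a) (rowPoint n ∘ b) := by
  have h₀ : (0 : ℝ) ≤ rowStart n := by
    rw [rowStart, sub_nonneg]; exact pow_le_one₀ (by norm_num) (by norm_num)
  have h₁ : rowPoint n 1 ≤ 1 := by
    rw [rowPoint_one, rowStart, sub_le_self_iff]; positivity
  refine ⟨fun i hi => ?_, fun i hi => monotone_rowPoint n (h.2 i hi)⟩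
  obtain ⟨ha, hab, hb⟩ := h.1 i hi
  exact ⟨by simp only [Function.comp_apply, ACReduction.rowPoint]; positivity,
    monotone_rowPoint n hab, (monotone_rowPoint n hb).trans h₁⟩

lemma monotone_row {f : ℝ → ℝ} (hf : Monotone f) (n : ℕ) : Monotone (row n f) :=
  fun s t hst => mul_le_mul_of_nonneg_left (hf (by gcongr)) (by positivity)

lemma IsUnitStep.row_mem_Icc {f : ℝ → ℝ} (hf : IsUnitStep f) (n : ℕ) (t : ℝ) :
    row n f t ∈ Icc 0 ((1 / 4) ^ n) := by
  obtain ⟨h₀, h₁⟩ := hf.mem_Icc ((t - rowStart n) * 2 ^ (n + 1))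
  exact ⟨by unfold row; positivity, mul_le_of_le_one_right (by positivity) h₁⟩

lemma lipschitzWith_row {f : ℝ → ℝ} {K : NNReal} (hf : LipschitzWith K f) (n : ℕ) :
    LipschitzWith ((1 / 4) ^ n * K * 2 ^ (n + 1)) (row n f) := by
  refine LipschitzWith.of_dist_le_mul fun s t => ?_
  have := hf.dist_le_mul ((s - rowStart n) * 2 ^ (n + 1)) ((t - rowStart n) * 2 ^ (n + 1))
  rw [Real.dist_eq, Real.dist_eq, ← sub_mul, sub_sub_sub_cancel_right, abs_mul,
    abs_of_pos (by positivity : (0 : ℝ) < 2 ^ (n + 1))] at this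
  rw [Real.dist_eq, Real.dist_eq, row, row, ← mul_sub, abs_mul, abs_of_pos (by positivity)]
  push_cast
  calc (1 / 4) ^ n * |f ((s - rowStart n) * 2 ^ (n + 1)) - f ((t - rowStart n) * 2 ^ (n + 1))|
      ≤ (1 / 4) ^ n * (K * (|s - t| * 2 ^ (n + 1))) := by gcongr
    _ = (1 / 4) ^ n * K * 2 ^ (n + 1) * |s - t| := by ring

def rowSum (σ : ℕ → ℕ → Prop) (t : ℝ) : ℝ := ∑' n, row n (staircase (σ n)) t

lemma summable_row_staircase (σ : ℕ → ℕ → Prop) (t : ℝ) :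
    Summable fun n => row n (staircase (σ n)) t :=
  (summable_geometric_of_lt_one (by norm_num) (by norm_num)).of_nonneg_of_le
    (fun n => ((isUnitStep_staircase _).row_mem_Icc n t).1)
    (fun n => ((isUnitStep_staircase _).row_mem_Icc n t).2)

lemma continuous_rowSum (σ : ℕ → ℕ → Prop) : Continuous (rowSum σ) := by
  refine continuous_tsum (fun n => ?_) (summable_geometric_of_lt_one (r := 1 / 4)
    (by norm_num) (by norm_num)) fun n t => ?_
  · have := continuous_staircase (σ n)
    unfold row
    fun_prop
  · obtain ⟨h₀, h₁⟩ := (isUnitStep_staircase (σ n)).row_mem_Icc n t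
    rwa [Real.norm_eq_abs, abs_of_nonneg h₀]

def rowSumCI (σ : ℕ → ℕ → Prop) : CI :=
  ContinuousMap.restrict unitInterval ⟨rowSum σ, continuous_rowSum σ⟩

lemma isACOn_rowSumCI {σ : ℕ → ℕ → Prop} (h : ∀ n, ∀ᶠ k in atTop, ¬ σ n k) :
    IsACOn (rowSumCI σ) univ := by
  refine isACOn_univ_of_tsum (summable_geometric_of_lt_one (r := 1 / 4) (by norm_num)
    (by norm_num)) (fun n => monotone_row (isUnitStep_staircase _).mono n)
    (fun n => (isUnitStep_staircase _).row_mem_Icc n) (fun n => ?_) fun _ => rfl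
  obtain ⟨K, hK⟩ := exists_lipschitzWith_staircase (h n)
  exact ⟨_, lipschitzWith_row hK n⟩

lemma row_sub_le_rowSum_sub (σ : ℕ → ℕ → Prop) (n : ℕ) {s t : ℝ} (hst : s ≤ t) :
    row n (staircase (σ n)) t - row n (staircase (σ n)) s ≤ rowSum σ t - rowSum σ s := by
  rw [rowSum, rowSum, ← (summable_row_staircase σ t).tsum_sub (summable_row_staircase σ s)]
  exact ((summable_row_staircase σ t).sub (summable_row_staircase σ s)).le_tsum n
    fun m _ => sub_nonneg.2 (monotone_row (isUnitStep_staircase _).mono m hst)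

lemma not_isACOn_rowSumCI {σ : ℕ → ℕ → Prop} {n : ℕ} (h : ∃ᶠ k in atTop, σ n k) :
    ¬ IsACOn (rowSumCI σ) univ := by
  refine not_isACOn_of_seqIcc (f := rowSum σ) (fun _ => rfl) (η := (1 / 4) ^ n) (by positivity)
    fun δ hδ => ?_
  obtain ⟨k, a, b, hs, hW, hP⟩ := exists_seqIcc_staircase h (δ := δ * 2 ^ (n + 1)) (by positivity)
  refine ⟨k, rowPoint n ∘ a, rowPoint n ∘ b, SeqIcc.map_rowPoint hs n, ?_, ?_⟩
  · simp only [Function.comp_apply, rowPoint_sub_rowPoint, ← Finset.sum_div]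
    rwa [div_lt_iff₀ (by positivity)]
  · calc (1 / 4) ^ n = ∑ i ∈ Finset.range (k + 1), (row n (staircase (σ n)) (rowPoint n (b i))
          - row n (staircase (σ n)) (rowPoint n (a i))) := by
          simp only [row_rowPoint, ← mul_sub, ← Finset.mul_sum, hP, mul_one]
      _ ≤ _ := Finset.sum_le_sum fun i hi => row_sub_le_rowSum_sub σ n
          (monotone_rowPoint n (hs.1 i (Nat.lt_succ_iff.1 (Finset.mem_range.1 hi))).2.1)

lemma abs_row_staircase_sub_le {ρ ρ' : ℕ → Prop} {n K : ℕ} (h : n < K → ∀ j < K, ρ j ↔ ρ' j)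
    (t : ℝ) : |row n (staircase ρ) t - row n (staircase ρ') t| ≤ 4 * (1 / 2) ^ K * (1 / 2) ^ n := by
  rw [row, row, ← mul_sub, abs_mul, abs_of_pos (by positivity)]
  set u := (t - rowStart n) * 2 ^ (n + 1)
  rcases lt_or_ge n K with hn | hn
  · calc (1 / 4) ^ n * |staircase ρ u - staircase ρ' u| ≤ (1 / 2) ^ n * (4 * (1 / 2) ^ K) := by
          gcongr
          · norm_num
          · exact abs_staircase_sub_le (h hn) u
      _ = _ := by ring
  · obtain ⟨h₀, h₁⟩ := (isUnitStep_staircase ρ).mem_Icc u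
    obtain ⟨h₀', h₁'⟩ := (isUnitStep_staircase ρ').mem_Icc u
    have hd : |staircase ρ u - staircase ρ' u| ≤ 1 := abs_le.2 ⟨by linarith, by linarith⟩
    calc (1 / 4) ^ n * |staircase ρ u - staircase ρ' u| ≤ (1 / 2) ^ n * (1 / 2) ^ n := by
          rw [← mul_pow]; norm_num; exact hd
      _ ≤ (1 / 2) ^ K * (1 / 2) ^ n :=
          mul_le_mul_of_nonneg_right (pow_le_pow_of_le_one (by norm_num) (by norm_num) hn)
            (by positivity)
      _ ≤ _ := by
          rw [mul_assoc]; exact le_mul_of_one_le_left (by positivity) (by norm_num)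

lemma dist_rowSumCI_le {σ σ' : ℕ → ℕ → Prop} {K : ℕ} (h : ∀ n < K, ∀ j < K, σ n j ↔ σ' n j) :
    dist (rowSumCI σ) (rowSumCI σ') ≤ 8 * (1 / 2) ^ K := by
  refine (ContinuousMap.dist_le (by positivity)).2 fun t => ?_
  change |rowSum σ t - rowSum σ' t| ≤ _
  rw [rowSum, rowSum, ← (summable_row_staircase σ t).tsum_sub (summable_row_staircase σ' t)]
  rw [show (8 : ℝ) * (1 / 2) ^ K = 4 * (1 / 2) ^ K * 2 by ring]
  exact tsum_of_norm_bounded (hasSum_geometric_two.mul_left _) fun n =>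
    (Real.norm_eq_abs _).trans_le (abs_row_staircase_sub_le (h n) t)

lemma continuous_rowSumCI_comp {σ : (ℕ → ℕ) → ℕ → ℕ → Prop}
    (hσ : ∀ x y n k, y ∈ PiNat.cylinder x (k + 1) → (σ y n k ↔ σ x n k)) :
    Continuous fun x => rowSumCI (σ x) :=
  continuous_of_dist_le_of_mem_cylinder (by simpa using (tendsto_pow_atTop_nhds_zero_of_lt_one
      (by norm_num : (0 : ℝ) ≤ 1 / 2) (by norm_num)).const_mul 8)
    fun K x y hy => dist_rowSumCI_le fun n _ j hj => hσ x y n j (PiNat.cylinder_anti x hj hy)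

section Levels

variable {D : ℕ → Set (ℕ → ℕ)} {x : ℕ → ℕ}

def levels (D : ℕ → Set (ℕ → ℕ)) (x : ℕ → ℕ) (k : ℕ) : Set ℕ :=
  {m | (D m ∩ PiNat.cylinder x k).Nonempty}

def levelChange (D : ℕ → Set (ℕ → ℕ)) (x : ℕ → ℕ) (k : ℕ) : Prop :=
  levels D x k = ∅ ∨ levels D x (k + 1) ≠ levels D x k

lemma levels_antitone : Antitone (levels D x) :=
  fun _ _ hk _ hm => hm.mono (inter_subset_inter_right _ (PiNat.cylinder_anti x hk))

lemma levels_congr {y : ℕ → ℕ} {k : ℕ} (h : y ∈ PiNat.cylinder x k) :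
    levels D y k = levels D x k := by
  simp only [levels, PiNat.mem_cylinder_iff_eq.1 h]

lemma levelChange_congr {y : ℕ → ℕ} {k : ℕ} (h : y ∈ PiNat.cylinder x (k + 1)) :
    levelChange D y k ↔ levelChange D x k := by
  rw [levelChange, levelChange, levels_congr h,
    levels_congr (PiNat.cylinder_anti x k.le_succ h)]

lemma eventually_not_levelChange (hD : Monotone D) {m₀ : ℕ} (hx : x ∈ D m₀) :
    ∀ᶠ k in atTop, ¬ levelChange D x k := by
  have hup : ∀ {k m m'}, m ≤ m' → m ∈ levels D x k → m' ∈ levels D x k :=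
    fun hm ⟨z, hz, hzx⟩ => ⟨z, hD hm hz, hzx⟩
  have hm₀ : ∀ k, m₀ ∈ levels D x k := fun k => ⟨x, hx, PiNat.self_mem_cylinder x k⟩
  -- membership of a fixed level is antitone in `k`, hence eventually constant
  have hstable : ∀ m, ∀ᶠ k in atTop, (m ∈ levels D x (k + 1) ↔ m ∈ levels D x k) := by
    intro m
    by_cases h : ∀ k, m ∈ levels D x k
    · exact .of_forall fun k => iff_of_true (h _) (h _)
    · obtain ⟨k₀, hk₀⟩ := not_forall.1 h
      filter_upwards [eventually_ge_atTop k₀] with k hk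
      exact iff_of_false (fun hm => hk₀ (levels_antitone (hk.trans k.le_succ) hm))
        fun hm => hk₀ (levels_antitone hk hm)
  filter_upwards [(Finset.range m₀).eventually_all.2 fun m _ => hstable m] with k hk
  simp only [levelChange, not_or, ne_eq, not_not]
  refine ⟨(nonempty_of_mem (hm₀ k)).ne_empty, Set.ext fun m => ?_⟩
  rcases lt_or_ge m m₀ with hm | hm
  · exact hk m (Finset.mem_range.2 hm)
  · exact iff_of_true (hup hm (hm₀ _)) (hup hm (hm₀ _))

lemma frequently_levelChange (hD : ∀ m, IsClosed (D m)) (hx : ∀ m, x ∉ D m) :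
    ∃ᶠ k in atTop, levelChange D x k := by
  intro h
  obtain ⟨K, hK⟩ := eventually_atTop.1 h
  simp only [levelChange, not_or, ne_eq, not_not] at hK
  have hconst : ∀ k ≥ K, levels D x k = levels D x K :=
    Nat.le_induction rfl fun k hk ih => (hK k hk).2.trans ih
  obtain ⟨m, hm⟩ := nonempty_iff_ne_empty.2 (hK K le_rfl).1
  obtain ⟨k, hk⟩ := PiNat.exists_disjoint_cylinder (hD m) (hx m)
  have hmk : m ∈ levels D x k := (le_total k K).elim
    (fun hk => levels_antitone hk hm) fun hk => (hconst k hk).symm ▸ hm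
  exact hmk.not_disjoint hk

end Levels

end ACReduction

open ACReduction in
/-- The set of absolutely continuous functions is `Π⁰₃`-complete: it is a countable
intersection of Fσ subsets of `C(I)`, and every countable intersection of Fσ subsets of Baire
space continuously reduces to it. -/
theorem absolutelyContinuous_pi03_complete :
    IsPi03 {F : CI | IsACOn F Set.univ} ∧
    ∀ B : Set (ℕ → ℕ), IsPi03 B →
      ∃ g : (ℕ → ℕ) → CI, Continuous g ∧ g ⁻¹' {F : CI | IsACOn F Set.univ} = B := by
  refine ⟨isPi03_setOf_isACOn, fun B ⟨C, hC, hB⟩ => ?_⟩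
  choose D hDc hDm hCD using fun n => (hC n).exists_monotone
  refine ⟨fun x => rowSumCI fun n => levelChange (D n) x,
    continuous_rowSumCI_comp fun x y n k hy => levelChange_congr hy, ?_⟩
  ext x
  simp only [hB, hCD, mem_preimage, mem_ofPred_eq, mem_iInter, mem_iUnion]
  constructor
  · intro hAC n
    by_contra! hx
    exact not_isACOn_rowSumCI (frequently_levelChange (hDc n) hx) hAC
  · intro hx
    exact isACOn_rowSumCI fun n => eventually_not_levelChange (hDm n) (hx n).choose_spec
end
end

section
/- A continuous function F : [0,1] → ℝ satisfies condition (S) if and only if it satisfies interval-(S). -/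
open Set MeasureTheory Topology

noncomputable section

/-- Condition (S): for every `ε > 0` there is `δ > 0` such that every `A ⊆ [0,1]` of outer
measure less than `δ` has image of outer measure less than `ε`. -/
def CondS (F : CI) : Prop :=
  ∀ ε : ℝ, 0 < ε → ∃ δ : ℝ, 0 < δ ∧ ∀ A : Set unitInterval,
    volume (Subtype.val '' A) < ENNReal.ofReal δ → volume (F '' A) < ENNReal.ofReal ε

/-- Interval-(S): for every `ε > 0` there is `δ > 0` such that for every finite non-decreasing
sequence `a₀ ≤ b₀ ≤ … ≤ a_k ≤ b_k` in `[0,1]` with `Σ (b_i - a_i) < δ` whose value intervals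
`[F a_i, F b_i]` are pairwise disjoint, `Σ |F b_i - F a_i| ≤ ε`. -/
def IntervalS (F : CI) : Prop :=
  ∀ ε : ℝ, 0 < ε → ∃ δ : ℝ, 0 < δ ∧ ∀ (k : ℕ) (a b : ℕ → unitInterval),
    SeqOn Set.univ k a b →
    (∑ i ∈ Finset.range (k + 1), ((b i : ℝ) - (a i : ℝ))) < δ →
    (∀ i ≤ k, ∀ j ≤ k, i ≠ j →
      Disjoint (Set.uIcc (F (a i)) (F (b i))) (Set.uIcc (F (a j)) (F (b j)))) →
    ∑ i ∈ Finset.range (k + 1), |F (b i) - F (a i)| ≤ ε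

/-!
(S) ⇒ interval-(S): the union `A` of the intervals `[aᵢ, bᵢ]` has measure `< δ`, and by the
intermediate value theorem `F '' A` contains the pairwise disjoint value intervals, so their total
length is `< ε`.

Interval-(S) ⇒ (S): cover `A` by an open set of measure `< δ`. Its components meeting `A` are
countably many disjoint intervals `J`, and `F '' A` is covered by the value intervals
`F '' closure J = uIcc (F a_J) (F b_J)`. The Vitali covering lemma selects a disjoint subfamily
whose fourfold enlargements still cover; any finite part of it, ordered from left to right, is an
admissible sequence for interval-(S), so the selected value intervals have total length `≤ ε / 5`
and `F '' A` has measure `≤ 4 ε / 5`.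
-/

open scoped ENNReal

namespace Set.OrdConnected

variable {α : Type*} [CompleteLinearOrder α] {C D : Set α}

theorem Ioo_sInf_sSup_subset (hC : C.OrdConnected) : Ioo (sInf C) (sSup C) ⊆ C :=
  fun t ⟨hlo, hhi⟩ => by
    obtain ⟨c, hc, hct⟩ := sInf_lt_iff.1 hlo
    obtain ⟨c', hc', htc'⟩ := lt_sSup_iff.1 hhi
    exact hC.out hc hc' ⟨hct.le, htc'.le⟩

theorem sSup_le_sInf_or_sSup_le_sInf (hC : C.OrdConnected) (hD : D.OrdConnected)
    (hCD : Disjoint C D) : sSup C ≤ sInf D ∨ sSup D ≤ sInf C := by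
  by_contra! h
  obtain ⟨c, hc, hDc⟩ := lt_sSup_iff.1 h.1
  obtain ⟨d, hd, hdc⟩ := sInf_lt_iff.1 hDc
  obtain ⟨d', hd', hCd'⟩ := lt_sSup_iff.1 h.2
  obtain ⟨c', hc', hc'd'⟩ := sInf_lt_iff.1 hCd'
  rcases le_or_gt c d' with hcd' | hd'c
  · exact hCD.ne_of_mem hc (hD.out hd hd' ⟨hdc.le, hcd'⟩) rfl
  · exact hCD.ne_of_mem (hC.out hc' hc ⟨hc'd'.le, hd'c.le⟩) hd' rfl

end Set.OrdConnected

theorem exists_countable_ordConnected_cover {α : Type*} [LinearOrder α] [TopologicalSpace α]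
    [OrderClosedTopology α] [LocallyConnectedSpace α] [TopologicalSpace.SeparableSpace α]
    {W A : Set α} (hW : IsOpen W) (hAW : A ⊆ W) :
    ∃ 𝒞 : Set (Set α), 𝒞.Countable ∧ 𝒞.PairwiseDisjoint id ∧
      (∀ C ∈ 𝒞, C.Nonempty ∧ C.OrdConnected ∧ C ⊆ W) ∧ A ⊆ ⋃₀ 𝒞 := by
  have hdisj : (connectedComponentIn W '' A).PairwiseDisjoint id := by
    rintro _ ⟨x, -, rfl⟩ _ ⟨y, -, rfl⟩ hxy
    exact disjoint_left.2 fun z hzx hzy =>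
      hxy ((connectedComponentIn_eq hzx).trans (connectedComponentIn_eq hzy).symm)
  have hne : ∀ C ∈ connectedComponentIn W '' A, C.Nonempty := by
    rintro _ ⟨x, hx, rfl⟩
    exact ⟨x, mem_connectedComponentIn (hAW hx)⟩
  refine ⟨_, hdisj.countable_of_isOpen ?_ hne, hdisj, ?_, ?_⟩
  · rintro _ ⟨x, -, rfl⟩
    exact hW.connectedComponentIn
  · rintro _ ⟨x, hx, rfl⟩
    exact ⟨hne _ ⟨x, hx, rfl⟩, isPreconnected_connectedComponentIn.ordConnected,
      connectedComponentIn_subset _ _⟩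
  · exact fun x hx => ⟨_, ⟨x, hx, rfl⟩, mem_connectedComponentIn (hAW hx)⟩

instance : LocallyConnectedSpace unitInterval :=
  locallyConnectedSpace_of_connected_bases Metric.ball (fun _ r => 0 < r)
    (fun _ => Metric.nhds_basis_ball) fun x r _ => by
      have : (Metric.ball (x : ℝ) r).OrdConnected := by
        rw [Real.ball_eq_Ioo]; exact ordConnected_Ioo
      exact (this.preimage_mono (Subtype.mono_coe _)).isPreconnected

theorem Set.OrdConnected.Ioo_sInf_sSup_subset_image_val {C : Set unitInterval}
    (hC : C.OrdConnected) :
    Ioo ((sInf C : unitInterval) : ℝ) (sSup C : unitInterval) ⊆ Subtype.val '' C := fun t ht =>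
  ⟨⟨t, (sInf C).2.1.trans ht.1.le, ht.2.le.trans (sSup C).2.2⟩, hC.Ioo_sInf_sSup_subset ht, rfl⟩

theorem sum_sSup_sub_sInf_le_volume {s : Finset (Set unitInterval)}
    (hord : ∀ C ∈ s, C.OrdConnected) (hdisj : (s : Set (Set unitInterval)).PairwiseDisjoint id) :
    ∑ C ∈ s, ENNReal.ofReal (((sSup C : unitInterval) : ℝ) - (sInf C : unitInterval)) ≤
      volume (Subtype.val '' ⋃ C ∈ s, C) := by
  calc ∑ C ∈ s, ENNReal.ofReal (((sSup C : unitInterval) : ℝ) - (sInf C : unitInterval))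
      = volume (⋃ C ∈ s, Ioo ((sInf C : unitInterval) : ℝ) (sSup C : unitInterval)) := by
        rw [measure_biUnion_finset _ fun _ _ => measurableSet_Ioo]
        · simp only [Real.volume_Ioo]
        · intro C hC D hD hCD
          exact ((disjoint_image_iff Subtype.val_injective).2 (hdisj hC hD hCD)).mono
            (hord C hC).Ioo_sInf_sSup_subset_image_val (hord D hD).Ioo_sInf_sSup_subset_image_val
    _ ≤ volume (Subtype.val '' ⋃ C ∈ s, C) := by
        rw [image_iUnion₂]
        exact measure_mono (iUnion₂_mono fun C hC => (hord C hC).Ioo_sInf_sSup_subset_image_val)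

theorem exists_le_le_image_Icc_subset_uIcc {α : Type*} [ConditionallyCompleteLinearOrder α]
    [TopologicalSpace α] [OrderTopology α] {f : α → ℝ} {p q : α} (hf : ContinuousOn f (Icc p q))
    (hpq : p ≤ q) : ∃ a b, p ≤ a ∧ a ≤ b ∧ b ≤ q ∧ f '' Icc p q ⊆ uIcc (f a) (f b) := by
  obtain ⟨u, hu, hmin⟩ := isCompact_Icc.exists_isMinOn (nonempty_Icc.2 hpq) hf
  obtain ⟨v, hv, hmax⟩ := isCompact_Icc.exists_isMaxOn (nonempty_Icc.2 hpq) hf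
  have hrange : f '' Icc p q ⊆ Icc (f u) (f v) := by
    rintro _ ⟨x, hx, rfl⟩
    exact ⟨hmin hx, hmax hx⟩
  rcases le_total u v with huv | hvu
  · exact ⟨u, v, hu.1, huv, hv.2, hrange.trans Icc_subset_uIcc⟩
  · exact ⟨v, u, hv.1, hvu, hu.2, hrange.trans Icc_subset_uIcc'⟩

theorem volume_biUnion_uIcc_le {ι : Type*} {t : Set ι} (ht : t.Countable) (p q : ι → ℝ) {R : ℝ}
    (hR : ∀ i ∈ t, |q i - p i| ≤ R) {M : ℝ≥0∞}
    (hM : ∀ s : Finset ι, ↑s ⊆ t → (s : Set ι).PairwiseDisjoint (fun i => uIcc (p i) (q i)) →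
      ∑ i ∈ s, ENNReal.ofReal |q i - p i| ≤ M) :
    volume (⋃ i ∈ t, uIcc (p i) (q i)) ≤ 4 * M := by
  set c : ι → ℝ := fun i => (p i ⊓ q i + p i ⊔ q i) / 2
  set r : ι → ℝ := fun i => |q i - p i| / 2
  have hball : ∀ i, uIcc (p i) (q i) = Metric.closedBall (c i) (r i) := fun i => by
    rw [uIcc, Real.Icc_eq_closedBall, max_sub_min_eq_abs]
  obtain ⟨u, hut, hu, hcover⟩ := Vitali.exists_disjoint_subfamily_covering_enlargement_closedBall
    t c r (R / 2) (fun i hi => by dsimp only [r]; linarith [hR i hi]) 4 (by norm_num)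
  have hsum : ∑' i : u, ENNReal.ofReal |q i - p i| ≤ M := by
    rw [ENNReal.tsum_eq_iSup_sum]
    refine iSup_le fun s => ?_
    refine (Finset.sum_map s (Function.Embedding.subtype (· ∈ u))
      fun i => ENNReal.ofReal |q i - p i|).symm.trans_le (hM _ ?_ ?_)
    · rw [Finset.coe_map]
      rintro _ ⟨i, -, rfl⟩
      exact hut i.2
    · simp_rw [hball]
      exact hu.subset (by simp)
  calc volume (⋃ i ∈ t, uIcc (p i) (q i))
      ≤ volume (⋃ i ∈ u, Metric.closedBall (c i) (4 * r i)) := by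
        refine measure_mono (iUnion₂_subset fun i hi => ?_)
        obtain ⟨j, hj, hij⟩ := hcover i hi
        rw [hball]
        exact hij.trans
          (subset_biUnion_of_mem (u := fun i => Metric.closedBall (c i) (4 * r i)) hj)
    _ ≤ ∑' i : u, volume (Metric.closedBall (c i) (4 * r i)) :=
        measure_biUnion_le _ (ht.mono hut) _
    _ = ∑' i : u, 4 * ENNReal.ofReal |q i - p i| := by
        refine tsum_congr fun i => ?_
        rw [Real.volume_closedBall, ← ENNReal.ofReal_ofNat, ← ENNReal.ofReal_mul (by norm_num)]
        congr 1
        ring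
    _ = 4 * ∑' i : u, ENNReal.ofReal |q i - p i| := ENNReal.tsum_mul_left
    _ ≤ 4 * M := by gcongr

/-- `δ` works for `ε` in interval-(S): `IntervalS F` unfolds to
`∀ ε > 0, ∃ δ > 0, IntervalSModulus F ε δ`. -/
def IntervalSModulus (F : CI) (ε δ : ℝ) : Prop :=
  ∀ (k : ℕ) (a b : ℕ → unitInterval), SeqOn Set.univ k a b →
    (∑ i ∈ Finset.range (k + 1), ((b i : ℝ) - (a i : ℝ))) < δ →
    (∀ i ≤ k, ∀ j ≤ k, i ≠ j →
      Disjoint (Set.uIcc (F (a i)) (F (b i))) (Set.uIcc (F (a j)) (F (b j)))) →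
    ∑ i ∈ Finset.range (k + 1), |F (b i) - F (a i)| ≤ ε

namespace IntervalSModulus

variable {F : CI} {ε δ : ℝ}

theorem sum_le_of_sorted (hP : IntervalSModulus F ε δ) (hε : 0 ≤ ε) (s : Finset unitInterval)
    (b : unitInterval → unitInterval) (hb : ∀ x ∈ s, x ≤ b x)
    (hsep : ∀ x ∈ s, ∀ y ∈ s, x < y → b x ≤ y) (hsum : ∑ x ∈ s, ((b x : ℝ) - x) < δ)
    (hdisj : (s : Set unitInterval).PairwiseDisjoint fun x => uIcc (F x) (F (b x))) :
    ∑ x ∈ s, |F (b x) - F x| ≤ ε := by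
  rcases s.eq_empty_or_nonempty with rfl | hs
  · simpa using hε
  obtain ⟨k, hk⟩ : ∃ k, s.card = k + 1 := Nat.exists_eq_succ_of_ne_zero hs.card_pos.ne'
  set e := s.orderEmbOfFin hk
  set p : ℕ → unitInterval := fun n => e ⟨min n k, by omega⟩
  have hpe : ∀ i : Fin (k + 1), p i = e i := fun i => congrArg e (Fin.ext (min_eq_left i.is_le))
  have hsum_eq : ∀ g : unitInterval → ℝ, ∑ n ∈ Finset.range (k + 1), g (p n) = ∑ x ∈ s, g x :=
    fun g => by
      rw [← Fin.sum_univ_eq_sum_range (fun n => g (p n)), ← s.map_orderEmbOfFin_univ hk,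
        Finset.sum_map]
      simp only [hpe]
      rfl
  have hp : ∀ n, p n ∈ s := fun n => s.orderEmbOfFin_mem hk _
  have hp_lt : ∀ n < k, p n < p (n + 1) := fun n hn => e.strictMono <| by
    rw [Fin.lt_def]; simp only; omega
  have hp_ne : ∀ m ≤ k, ∀ n ≤ k, m ≠ n → p m ≠ p n := fun m hm n hn hmn h => hmn <| by
    simpa [hm, hn] using congrArg Fin.val (e.injective h)
  have := hP k p (fun n => b (p n))
    ⟨fun _ _ => trivial, fun _ _ => trivial, fun n _ => hb _ (hp n),
      fun n hn => hsep _ (hp n) _ (hp (n + 1)) (hp_lt n hn)⟩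
    (by rwa [hsum_eq fun x => (b x : ℝ) - x])
    (fun m hm n hn hmn => hdisj (hp m) (hp n) (hp_ne m hm n hn hmn))
  rwa [hsum_eq fun x => |F (b x) - F x|] at this

theorem sum_le (hP : IntervalSModulus F ε δ) (hε : 0 ≤ ε) {ι : Type*} (s : Finset ι)
    (a b : ι → unitInterval) (hab : ∀ i ∈ s, a i ≤ b i)
    (hsep : ∀ i ∈ s, ∀ j ∈ s, i ≠ j → b i ≤ a j ∨ b j ≤ a i)
    (hsum : ∑ i ∈ s, ((b i : ℝ) - a i) < δ)
    (hdisj : (s : Set ι).PairwiseDisjoint fun i => uIcc (F (a i)) (F (b i))) :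
    ∑ i ∈ s, |F (b i) - F (a i)| ≤ ε := by
  classical
  rcases s.eq_empty_or_nonempty with rfl | ⟨i₀, -⟩
  · simpa using hε
  have : Nonempty ι := ⟨i₀⟩
  -- `a` is injective on `s` because `F (a i)` lies in the `i`-th value interval.
  have hinj : InjOn a s := fun i hi j hj hij => by
    by_contra hne
    exact (hdisj hi hj hne).ne_of_mem left_mem_uIcc left_mem_uIcc (congrArg F hij)
  obtain ⟨g, hg⟩ : ∃ g : unitInterval → ι, ∀ i ∈ s, g (a i) = i :=
    ⟨Function.invFunOn a s, fun i hi => hinj.leftInvOn_invFunOn hi⟩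
  have hsum_eq : ∀ h : unitInterval → unitInterval → ℝ,
      ∑ x ∈ s.image a, h x (b (g x)) = ∑ i ∈ s, h (a i) (b i) := fun h => by
    rw [Finset.sum_image hinj]
    exact Finset.sum_congr rfl fun i hi => by rw [hg i hi]
  have := hP.sum_le_of_sorted hε (s.image a) (fun x => b (g x)) ?_ ?_ ?_ ?_
  · rwa [hsum_eq fun x y => |F y - F x|] at this
  · simp only [Finset.forall_mem_image]
    intro i hi
    rw [hg i hi]
    exact hab i hi
  · simp only [Finset.forall_mem_image]
    intro i hi j hj hij
    rw [hg i hi]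
    refine (hsep i hi j hj (by rintro rfl; exact hij.ne rfl)).resolve_right fun h => ?_
    exact (hij.trans_le ((hab j hj).trans h)).false
  · rwa [hsum_eq fun x y => (y : ℝ) - x]
  · rw [Finset.coe_image, hinj.pairwiseDisjoint_image]
    intro i hi j hj hij
    simpa [Function.onFun, hg i hi, hg j hj] using hdisj hi hj hij

theorem sum_ofReal_le_of_ordConnected (hP : IntervalSModulus F ε δ) (hε : 0 ≤ ε)
    {𝒞 : Set (Set unitInterval)} (hdisj : 𝒞.PairwiseDisjoint id)
    (hord : ∀ C ∈ 𝒞, C.OrdConnected) (hvol : volume (Subtype.val '' ⋃₀ 𝒞) < ENNReal.ofReal δ)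
    (a b : Set unitInterval → unitInterval) (hla : ∀ C ∈ 𝒞, sInf C ≤ a C)
    (hab : ∀ C ∈ 𝒞, a C ≤ b C) (hbu : ∀ C ∈ 𝒞, b C ≤ sSup C) (s : Finset (Set unitInterval))
    (hs : ↑s ⊆ 𝒞) (hsdisj : (s : Set (Set unitInterval)).PairwiseDisjoint
      fun C => uIcc (F (a C)) (F (b C))) :
    ∑ C ∈ s, ENNReal.ofReal |F (b C) - F (a C)| ≤ ENNReal.ofReal ε := by
  rw [← ENNReal.ofReal_sum_of_nonneg fun _ _ => abs_nonneg _]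
  refine ENNReal.ofReal_le_ofReal (hP.sum_le hε s a b (fun C hC => hab C (hs hC))
    (fun C hC D hD hCD => ?_) ?_ hsdisj)
  · rcases (hord C (hs hC)).sSup_le_sInf_or_sSup_le_sInf (hord D (hs hD))
      (hdisj (hs hC) (hs hD) hCD) with h | h
    · exact Or.inl ((hbu C (hs hC)).trans (h.trans (hla D (hs hD))))
    · exact Or.inr ((hbu D (hs hD)).trans (h.trans (hla C (hs hC))))
  · have hnonneg : ∀ C ∈ s, 0 ≤ ((sSup C : unitInterval) : ℝ) - (sInf C : unitInterval) :=
      fun C hC => sub_nonneg.2 ((hla C (hs hC)).trans ((hab C (hs hC)).trans (hbu C (hs hC))))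
    have hlen : ∑ C ∈ s, (((sSup C : unitInterval) : ℝ) - (sInf C : unitInterval)) < δ := by
      rw [← ENNReal.ofReal_lt_ofReal_iff_of_nonneg (Finset.sum_nonneg hnonneg),
        ENNReal.ofReal_sum_of_nonneg hnonneg]
      refine (sum_sSup_sub_sInf_le_volume (fun C hC => hord C (hs hC))
        (hdisj.subset hs)).trans_lt ((measure_mono (image_mono ?_)).trans_lt hvol)
      exact iUnion₂_subset fun C hC => subset_sUnion_of_mem (hs hC)
    refine (Finset.sum_le_sum fun C hC => ?_).trans_lt hlen
    exact sub_le_sub (hbu C (hs hC)) (hla C (hs hC))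

end IntervalSModulus

theorem CondS.intervalS {F : CI} (hF : CondS F) : IntervalS F := by
  intro ε hε
  obtain ⟨δ, hδ, hS⟩ := hF ε hε
  refine ⟨δ, hδ, fun k a b hseq hsum hdisj => ?_⟩
  obtain ⟨-, -, hab, -⟩ := hseq
  have hab' : ∀ i ∈ Finset.range (k + 1), a i ≤ b i :=
    fun i hi => hab i (Nat.lt_succ_iff.1 (Finset.mem_range.1 hi))
  set A := ⋃ i ∈ Finset.range (k + 1), Icc (a i) (b i)
  have hA : volume (Subtype.val '' A) < ENNReal.ofReal δ := by
    calc volume (Subtype.val '' A)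
        ≤ ∑ i ∈ Finset.range (k + 1), volume (Icc (a i : ℝ) (b i)) := by
          rw [image_iUnion₂]
          refine (measure_biUnion_finset_le _ _).trans (Finset.sum_le_sum fun i _ => ?_)
          exact measure_mono (image_subset_iff.2 fun x hx => hx)
      _ = ENNReal.ofReal (∑ i ∈ Finset.range (k + 1), ((b i : ℝ) - a i)) := by
          rw [ENNReal.ofReal_sum_of_nonneg fun i hi => sub_nonneg.2 (hab' i hi)]
          simp only [Real.volume_Icc]
      _ < ENNReal.ofReal δ := (ENNReal.ofReal_lt_ofReal_iff hδ).2 hsum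
  have hFA : ENNReal.ofReal (∑ i ∈ Finset.range (k + 1), |F (b i) - F (a i)|) ≤
      volume (F '' A) := by
    rw [ENNReal.ofReal_sum_of_nonneg fun _ _ => abs_nonneg _]
    simp only [← Real.volume_interval]
    rw [← measure_biUnion_finset (fun i hi j hj hij =>
      hdisj i (Nat.lt_succ_iff.1 (Finset.mem_range.1 hi)) j
        (Nat.lt_succ_iff.1 (Finset.mem_range.1 hj)) hij) fun _ _ => measurableSet_uIcc,
      image_iUnion₂]
    refine measure_mono (iUnion₂_mono fun i hi => ?_)
    rw [← uIcc_of_le (hab' i hi)]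
    exact intermediate_value_uIcc F.continuous.continuousOn
  exact ((ENNReal.ofReal_lt_ofReal_iff hε).1 (hFA.trans_lt (hS A hA))).le

theorem IntervalS.condS {F : CI} (hF : IntervalS F) : CondS F := by
  intro ε hε
  obtain ⟨δ, hδ, hP⟩ : ∃ δ, 0 < δ ∧ IntervalSModulus F (ε / 5) δ := hF (ε / 5) (by positivity)
  refine ⟨δ, hδ, fun A hA => ?_⟩
  obtain ⟨U, hAU, hU, hUδ⟩ := exists_isOpen_lt_of_lt _ _ hA
  obtain ⟨𝒞, hcount, hdisj, h𝒞, hA𝒞⟩ := exists_countable_ordConnected_cover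
    (hU.preimage continuous_subtype_val) fun x hx => hAU ⟨x, hx, rfl⟩
  have hle : ∀ C ∈ 𝒞, sInf C ≤ sSup C := fun C hC => sInf_le_sSup (h𝒞 C hC).1
  choose! a b hla hab hbu himg using fun C : Set unitInterval =>
    exists_le_le_image_Icc_subset_uIcc (f := F) F.continuous.continuousOn (p := sInf C)
      (q := sSup C)
  have hcover : F '' A ⊆ ⋃ C ∈ 𝒞, uIcc (F (a C)) (F (b C)) := by
    rintro _ ⟨x, hx, rfl⟩
    obtain ⟨C, hC, hxC⟩ := hA𝒞 hx
    exact mem_biUnion hC (himg C (hle C hC) ⟨x, ⟨sInf_le hxC, le_sSup hxC⟩, rfl⟩)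
  have hvol : volume (Subtype.val '' ⋃₀ 𝒞) < ENNReal.ofReal δ :=
    (measure_mono (image_subset_iff.2 (sUnion_subset fun C hC => (h𝒞 C hC).2.2))).trans_lt hUδ
  calc volume (F '' A) ≤ volume (⋃ C ∈ 𝒞, uIcc (F (a C)) (F (b C))) := measure_mono hcover
    _ ≤ 4 * ENNReal.ofReal (ε / 5) := volume_biUnion_uIcc_le hcount _ _
        (fun C _ => (abs_sub _ _).trans (add_le_add (F.norm_coe_le_norm _) (F.norm_coe_le_norm _)))
        (hP.sum_ofReal_le_of_ordConnected (by positivity) hdisj (fun C hC => (h𝒞 C hC).2.1) hvol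
          a b (fun C hC => hla C (hle C hC)) (fun C hC => hab C (hle C hC))
          (fun C hC => hbu C (hle C hC)))
    _ < ENNReal.ofReal ε := by
        rw [← ENNReal.ofReal_ofNat, ← ENNReal.ofReal_mul (by norm_num)]
        exact (ENNReal.ofReal_lt_ofReal_iff hε).2 (by linarith)

/-- A continuous function on `[0,1]` satisfies condition (S) iff it satisfies interval-(S). -/
theorem condS_iff_intervalS (F : CI) : CondS F ↔ IntervalS F :=
  ⟨CondS.intervalS, IntervalS.condS⟩
end
end
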